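/- arXiv:2602.20894 — 5 statements merged into one kernel-verified Lean document; each statement's English description precedes it below -/
import Mathlib

section
/- Assume {ξ_k}_{k=1}^m strictly interlaces {ζ_j}_{j=1}^n on 𝕊¹, and let J ∈ 𝔍₊, written J = {j_1,…,j_m} with j_r ∈ I_r for each r. Then for every r = 1,…,m one has sign( ∏_{k=1}^m sin((θ_{j_r} − φ_k)/2) ) = (−1)^{m−r} and sign( ∏_{s ≠ r} sin((θ_{j_r} − θ_{j_s})/2) ) = (−1)^{m−r}; consequently ω^{(J)}_{j_r} > 0 for every r, so the circuit vector ω^{(J)} has all entries ≥ 0 and is strictly positive on J. -/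
/-!
Every band point lies in the window `[φ₁, φ₁ + 2π)`, so any difference `b - a` of two such
points has `sin ((b - a) / 2)` of the sign of `b - a`. For `θ_{j_r}`, the factors with `φ_k`,
`k > r`, and with `θ_{j_s}`, `s > r`, are exactly the negative ones, `m - r` of each; hence both
products have sign `(-1)^(m-r)`, and their product, the denominator of `ω^{(J)}_{j_r}`, is
positive.
-/

/-- The real circuit vector `ω^{(J)} ∈ ℝⁿ` on the circle. -/
noncomputable def circuitC (n m : ℕ) (θ φ : ℕ → ℝ) (J : Finset (Fin n)) : Fin n → ℝ :=
  fun j => if j ∈ J then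
    1 / ((∏ k ∈ Finset.Icc 1 m, Real.sin ((θ ((j : ℕ) + 1) - φ k) / 2)) *
      ∏ j' ∈ J.erase j, Real.sin ((θ ((j : ℕ) + 1) - θ ((j' : ℕ) + 1)) / 2))
  else 0

/-- The band `I_r = {j : φ_r < θ_j < φ_{r+1}}`, realised inside `Fin n`
(coordinate `j : Fin n` is the 1-based index `j+1`). -/
noncomputable def bandC (n : ℕ) (θ φ : ℕ → ℝ) (r : ℕ) : Finset (Fin n) :=
  Finset.univ.filter (fun j => φ r < θ ((j : ℕ) + 1) ∧ θ ((j : ℕ) + 1) < φ (r + 1))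

open Finset Real

lemma Finset.image_erase_of_injOn {α β : Type*} [DecidableEq α] [DecidableEq β] {f : α → β}
    {s : Finset α} (hf : Set.InjOn f s) {a : α} (ha : a ∈ s) :
    (s.erase a).image f = (s.image f).erase (f a) := by
  ext b
  simp only [mem_image, mem_erase]
  constructor
  · rintro ⟨x, ⟨hxa, hx⟩, rfl⟩
    exact ⟨fun h => hxa (hf hx ha h), x, hx, rfl⟩
  · rintro ⟨hb, x, hx, rfl⟩
    exact ⟨x, ⟨fun h => hb (h ▸ rfl), hx⟩, rfl⟩

lemma neg_one_pow_card_filter_not_mul_prod_pos {R α : Type*} [CommRing R] [PartialOrder R]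
    [IsStrictOrderedRing R] {s : Finset α} {f : α → R} (p : α → Prop) [DecidablePred p]
    (hpos : ∀ a ∈ s, p a → 0 < f a) (hneg : ∀ a ∈ s, ¬ p a → f a < 0) :
    0 < (-1) ^ #{a ∈ s | ¬ p a} * ∏ a ∈ s, f a := by
  rw [← prod_filter_mul_prod_filter_not s p, mul_left_comm, ← prod_neg]
  refine mul_pos (prod_pos fun a ha => ?_) (prod_pos fun a ha => ?_)
  · rw [mem_filter] at ha
    exact hpos a ha.1 ha.2
  · rw [mem_filter] at ha
    exact neg_pos.2 (hneg a ha.1 ha.2)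

lemma mul_pos_of_neg_one_pow_mul_pos {R : Type*} [CommRing R] [PartialOrder R]
    [IsStrictOrderedRing R] {a b : R} {k : ℕ} (ha : 0 < (-1) ^ k * a)
    (hb : 0 < (-1) ^ k * b) : 0 < a * b := by
  have := mul_pos ha hb
  rwa [mul_mul_mul_comm, ← mul_pow, neg_one_mul, neg_neg, one_pow, one_mul] at this

lemma Real.sign_eq_neg_one_pow_of_pos_mul {x : ℝ} {k : ℕ} (h : 0 < (-1) ^ k * x) :
    sign x = (-1) ^ k := by
  rcases neg_one_pow_eq_or ℝ k with hk | hk <;> rw [hk] at h ⊢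
  · exact sign_of_pos (by simpa using h)
  · exact sign_of_neg (by simpa using h)

lemma sin_half_sub_pos_of_mem_Ico {c a b : ℝ} (ha : a ∈ Set.Ico c (c + 2 * π))
    (hb : b ∈ Set.Ico c (c + 2 * π)) (hab : a < b) : 0 < sin ((b - a) / 2) :=
  sin_pos_of_pos_of_lt_pi (by linarith) (by linarith [ha.1, hb.2])

lemma sin_half_sub_neg_of_mem_Ico {c a b : ℝ} (ha : a ∈ Set.Ico c (c + 2 * π))
    (hb : b ∈ Set.Ico c (c + 2 * π)) (hab : a < b) : sin ((a - b) / 2) < 0 := by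
  rw [← neg_sub, neg_div, sin_neg]
  exact neg_neg_of_pos (sin_half_sub_pos_of_mem_Ico ha hb hab)

section Bands

variable {m r : ℕ} {φ : ℕ → ℝ}

lemma mem_Ico_of_mem_band (hφ : MonotoneOn φ (Set.Icc 1 (m + 1)))
    (hφp : φ (m + 1) = φ 1 + 2 * π) (hr : r ∈ Icc 1 m) {x : ℝ} (hx₁ : φ r ≤ x)
    (hx₂ : x < φ (r + 1)) : x ∈ Set.Ico (φ 1) (φ 1 + 2 * π) := by
  rw [mem_Icc] at hr
  have h₁ : φ 1 ≤ φ r := hφ ⟨le_rfl, by omega⟩ ⟨hr.1, by omega⟩ hr.1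
  have h₂ : φ (r + 1) ≤ φ (m + 1) :=
    hφ ⟨by omega, by omega⟩ ⟨by omega, le_rfl⟩ (by omega)
  exact ⟨by linarith, by linarith⟩

lemma neg_one_pow_mul_prod_sin_half_sub_pos (hφ : StrictMonoOn φ (Set.Icc 1 (m + 1)))
    (hφp : φ (m + 1) = φ 1 + 2 * π) (hr : r ∈ Icc 1 m) {x : ℝ} (hx₁ : φ r < x)
    (hx₂ : x < φ (r + 1)) :
    0 < (-1) ^ (m - r) * ∏ k ∈ Icc 1 m, sin ((x - φ k) / 2) := by
  have hcard : #{k ∈ Icc 1 m | ¬ k ≤ r} = m - r := by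
    rw [show {k ∈ Icc 1 m | ¬ k ≤ r} = Ioc r m by
      ext; simp only [mem_filter, mem_Icc, mem_Ioc]; omega, Nat.card_Ioc]
  have hx := mem_Ico_of_mem_band hφ.monotoneOn hφp hr hx₁.le hx₂
  have hr' := mem_Icc.1 hr
  have hφk : ∀ k ∈ Icc 1 m, φ k ∈ Set.Ico (φ 1) (φ 1 + 2 * π) := fun k hk =>
    have hk' := mem_Icc.1 hk
    mem_Ico_of_mem_band hφ.monotoneOn hφp hk le_rfl
      (hφ ⟨hk'.1, by omega⟩ ⟨by omega, by omega⟩ (lt_add_one k))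
  rw [← hcard]
  refine neg_one_pow_card_filter_not_mul_prod_pos (· ≤ r) (fun k hk hkr => ?_)
    fun k hk hkr => ?_
  all_goals have hk' := mem_Icc.1 hk
  · have : φ k ≤ φ r := hφ.monotoneOn ⟨hk'.1, by omega⟩ ⟨hr'.1, by omega⟩ hkr
    exact sin_half_sub_pos_of_mem_Ico (hφk k hk) hx (by linarith)
  · have : φ (r + 1) ≤ φ k :=
      hφ.monotoneOn ⟨by omega, by omega⟩ ⟨by omega, by omega⟩ (by omega)
    exact sin_half_sub_neg_of_mem_Ico hx (hφk k hk) (by linarith)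

variable {t : ℕ → ℝ}

lemma strictMonoOn_of_mem_bands (hφ : MonotoneOn φ (Set.Icc 1 (m + 1)))
    (ht : ∀ s ∈ Icc 1 m, φ s < t s ∧ t s < φ (s + 1)) : StrictMonoOn t (Set.Icc 1 m) := by
  rintro a ⟨ha₁, ha₂⟩ b ⟨hb₁, hb₂⟩ hab
  have : φ (a + 1) ≤ φ b := hφ ⟨by omega, by omega⟩ ⟨hb₁, by omega⟩ hab
  linarith [(ht a (mem_Icc.2 ⟨ha₁, ha₂⟩)).2, (ht b (mem_Icc.2 ⟨hb₁, hb₂⟩)).1]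

lemma neg_one_pow_mul_prod_sin_half_sub_bands_pos (hφ : MonotoneOn φ (Set.Icc 1 (m + 1)))
    (hφp : φ (m + 1) = φ 1 + 2 * π) (ht : ∀ s ∈ Icc 1 m, φ s < t s ∧ t s < φ (s + 1))
    (hr : r ∈ Icc 1 m) :
    0 < (-1) ^ (m - r) * ∏ s ∈ (Icc 1 m).erase r, sin ((t r - t s) / 2) := by
  have hcard : #{s ∈ (Icc 1 m).erase r | ¬ s < r} = m - r := by
    rw [show {s ∈ (Icc 1 m).erase r | ¬ s < r} = Ioc r m by
      ext; simp only [mem_filter, mem_erase, mem_Icc, mem_Ioc]; omega, Nat.card_Ioc]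
  have htI : ∀ s ∈ Icc 1 m, t s ∈ Set.Ico (φ 1) (φ 1 + 2 * π) := fun s hs =>
    mem_Ico_of_mem_band hφ hφp hs (ht s hs).1.le (ht s hs).2
  have hmono := strictMonoOn_of_mem_bands hφ ht
  rw [← hcard]
  refine neg_one_pow_card_filter_not_mul_prod_pos (· < r) (fun s hs hsr => ?_)
    fun s hs hsr => ?_
  all_goals
    have hs' := mem_of_mem_erase hs
    have hsr' := ne_of_mem_erase hs
    rw [mem_Icc] at hs' hr
  · exact sin_half_sub_pos_of_mem_Ico (htI s (mem_Icc.2 hs')) (htI r (mem_Icc.2 hr))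
      (hmono hs' hr hsr)
  · exact sin_half_sub_neg_of_mem_Ico (htI r (mem_Icc.2 hr)) (htI s (mem_Icc.2 hs'))
      (hmono hr hs' (by omega))

end Bands

lemma circuitC_image_apply {n m r : ℕ} {θ φ : ℕ → ℝ} {e : ℕ → Fin n}
    (he : Set.InjOn e (Icc 1 m)) (hr : r ∈ Icc 1 m) :
    circuitC n m θ φ ((Icc 1 m).image e) (e r) =
      1 / ((∏ k ∈ Icc 1 m, sin ((θ ((e r : ℕ) + 1) - φ k) / 2)) *
        ∏ s ∈ (Icc 1 m).erase r, sin ((θ ((e r : ℕ) + 1) - θ ((e s : ℕ) + 1)) / 2)) := by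
  rw [circuitC, if_pos (mem_image_of_mem e hr), ← image_erase_of_injOn he hr,
    prod_image fun a ha b hb => he (mem_of_mem_erase ha) (mem_of_mem_erase hb)]

theorem stmt_15_general (m n : ℕ)
    (θ φ : ℕ → ℝ)
    (hφ : ∀ k, 1 ≤ k → k ≤ m → φ k < φ (k + 1))
    (hφp : φ (m + 1) = φ 1 + 2 * Real.pi)
    (J : Finset (Fin n))
    (e : ℕ → Fin n)
    (he : ∀ r, 1 ≤ r → r ≤ m → e r ∈ bandC n θ φ r)
    (hJe : J = Finset.image e (Finset.Icc 1 m)) :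
    (∀ r, 1 ≤ r → r ≤ m →
      Real.sign (∏ k ∈ Finset.Icc 1 m,
          Real.sin ((θ ((e r : ℕ) + 1) - φ k) / 2)) = (-1 : ℝ) ^ (m - r) ∧
      Real.sign (∏ s ∈ (Finset.Icc 1 m).erase r,
          Real.sin ((θ ((e r : ℕ) + 1) - θ ((e s : ℕ) + 1)) / 2)) = (-1 : ℝ) ^ (m - r) ∧
      0 < circuitC n m θ φ J (e r)) ∧
    (∀ j : Fin n, 0 ≤ circuitC n m θ φ J j) ∧
    (∀ j ∈ J, 0 < circuitC n m θ φ J j) := by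
  have hφmono : StrictMonoOn φ (Set.Icc 1 (m + 1)) :=
    strictMonoOn_of_lt_add_one Set.ordConnected_Icc fun k _ hk hk' =>
      hφ k hk.1 (by linarith [hk'.2])
  have ht : ∀ r ∈ Icc 1 m, φ r < θ ((e r : ℕ) + 1) ∧ θ ((e r : ℕ) + 1) < φ (r + 1) :=
    fun r hr => by simpa [bandC] using he r (mem_Icc.1 hr).1 (mem_Icc.1 hr).2
  have hinj : Set.InjOn e (Icc 1 m) := by
    refine Set.InjOn.of_comp (g := fun j : Fin n => θ ((j : ℕ) + 1)) ?_
    rw [coe_Icc]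
    exact (strictMonoOn_of_mem_bands hφmono.monotoneOn ht).injOn
  have hsign₁ r (hr : r ∈ Icc 1 m) :=
    neg_one_pow_mul_prod_sin_half_sub_pos hφmono hφp hr (ht r hr).1 (ht r hr).2
  have hsign₂ r (hr : r ∈ Icc 1 m) :=
    neg_one_pow_mul_prod_sin_half_sub_bands_pos hφmono.monotoneOn hφp ht hr
  have hpos : ∀ r ∈ Icc 1 m, 0 < circuitC n m θ φ J (e r) := fun r hr => by
    rw [hJe, circuitC_image_apply hinj hr]
    exact one_div_pos.2 (mul_pos_of_neg_one_pow_mul_pos (hsign₁ r hr) (hsign₂ r hr))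
  have hposJ : ∀ j ∈ J, 0 < circuitC n m θ φ J j := fun j hj => by
    obtain ⟨r, hr, rfl⟩ := mem_image.1 (hJe ▸ hj)
    exact hpos r hr
  refine ⟨fun r h₁ h₂ => ?_, fun j => ?_, hposJ⟩
  · have hr := mem_Icc.2 ⟨h₁, h₂⟩
    exact ⟨sign_eq_neg_one_pow_of_pos_mul (hsign₁ r hr),
      sign_eq_neg_one_pow_of_pos_mul (hsign₂ r hr), hpos r hr⟩
  · by_cases hj : j ∈ J
    · exact (hposJ j hj).le
    · simp [circuitC, hj]

/-- under strict interlacing on `𝕊¹` (all bands nonempty), if `J ∈ 𝔍₊` is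
written `J = {j_1,…,j_m}` with `j_r ∈ I_r`, then for every `r = 1,…,m` the two sine products
at `j_r` both have sign `(-1)^{m-r}`; consequently `ω^{(J)}_{j_r} > 0` for every `r`, so
`ω^{(J)}` is entrywise `≥ 0` and strictly positive on `J`. -/
theorem stmt_15 (m n : ℕ) (hm : 1 ≤ m) (hmn : m < n)
    (θ φ : ℕ → ℝ)
    (hφ : ∀ k, 1 ≤ k → k ≤ m → φ k < φ (k + 1))
    (hφp : φ (m + 1) = φ 1 + 2 * Real.pi)
    (hθ1 : φ 1 < θ 1)
    (hθ : ∀ j, 1 ≤ j → j < n → θ j < θ (j + 1))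
    (hθn : θ n < φ 1 + 2 * Real.pi)
    (hθφ : ∀ j k, 1 ≤ j → j ≤ n → 1 ≤ k → k ≤ m → θ j ≠ φ k)
    (hbands : ∀ r, 1 ≤ r → r ≤ m → (bandC n θ φ r).Nonempty)
    (J : Finset (Fin n)) (hJcard : J.card = m)
    (hJplus : ∀ r, 1 ≤ r → r ≤ m → (J ∩ bandC n θ φ r).card = 1)
    (e : ℕ → Fin n)
    (he : ∀ r, 1 ≤ r → r ≤ m → e r ∈ bandC n θ φ r)
    (hJe : J = Finset.image e (Finset.Icc 1 m)) :
    (∀ r, 1 ≤ r → r ≤ m →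
      Real.sign (∏ k ∈ Finset.Icc 1 m,
          Real.sin ((θ ((e r : ℕ) + 1) - φ k) / 2)) = (-1 : ℝ) ^ (m - r) ∧
      Real.sign (∏ s ∈ (Finset.Icc 1 m).erase r,
          Real.sin ((θ ((e r : ℕ) + 1) - θ ((e s : ℕ) + 1)) / 2)) = (-1 : ℝ) ^ (m - r) ∧
      0 < circuitC n m θ φ J (e r)) ∧
    (∀ j : Fin n, 0 ≤ circuitC n m θ φ J j) ∧
    (∀ j ∈ J, 0 < circuitC n m θ φ J j) :=
  stmt_15_general m n θ φ hφ hφp J e he hJe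
end

section
/- Assume {ξ_k}_{k=1}^m strictly interlaces {ζ_j}_{j=1}^n on 𝕊¹. Then there exist real numbers ω_1,…,ω_n with ω_j > 0 for every j such that ∑_{j=1}^n ω_j Ψ_m(ζ_j) ζ_j^{−k} = 0 for every k = 1,…,m−1. -/
open Finset Polynomial

lemma my_mono {f : ℕ → ℝ} {a b : ℕ} (h : ∀ k, a ≤ k → k < b → f k < f (k+1)) :
    ∀ i j, a ≤ i → i < j → j ≤ b → f i < f j := by
  intro i j hai hij hjb
  induction j with
  | zero => omega
  | succ j ih =>
    rcases Nat.lt_or_ge i j with hlt | hge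
    · exact lt_trans (ih hlt (by omega)) (h j (by omega) (by omega))
    · have : i = j := by omega
      subst this; exact h i hai (by omega)

lemma my_exp_sub_exp (a b : ℝ) :
    Complex.exp (Complex.I * a) - Complex.exp (Complex.I * b)
      = 2 * Complex.I * Complex.exp (Complex.I * (((a + b) / 2 : ℝ) : ℂ))
        * ((Real.sin ((a - b) / 2) : ℝ) : ℂ) := by
  have h2 : ∀ x : ℂ, Complex.exp (x * Complex.I) - Complex.exp (-x * Complex.I)
      = 2 * Complex.I * Complex.sin x := by
    intro x
    rw [Complex.exp_mul_I, Complex.exp_mul_I, Complex.sin_neg, Complex.cos_neg]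
    ring
  have e1 : Complex.I * (a : ℂ)
      = Complex.I * (((a + b) / 2 : ℝ) : ℂ) + (((a - b) / 2 : ℝ) : ℂ) * Complex.I := by
    push_cast; ring
  have e2 : Complex.I * (b : ℂ)
      = Complex.I * (((a + b) / 2 : ℝ) : ℂ) + (-(((a - b) / 2 : ℝ) : ℂ)) * Complex.I := by
    push_cast; ring
  rw [e1, e2, Complex.exp_add, Complex.exp_add, ← mul_sub, h2, Complex.ofReal_sin]
  ring

lemma my_prod_exp_sub {ι : Type*} (s : Finset ι) (g : ι → ℝ) (β : ℝ) :
    ∏ i ∈ s, (Complex.exp (Complex.I * β) - Complex.exp (Complex.I * (g i : ℂ)))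
      = (2 * Complex.I) ^ s.card
        * Complex.exp (Complex.I * (((s.card * β + ∑ i ∈ s, g i) / 2 : ℝ) : ℂ))
        * ∏ i ∈ s, ((Real.sin ((β - g i) / 2) : ℝ) : ℂ) := by
  rw [Finset.prod_congr rfl (fun i _ => my_exp_sub_exp β (g i))]
  rw [Finset.prod_mul_distrib, Finset.prod_mul_distrib, Finset.prod_const,
    ← Complex.exp_sum]
  congr 2
  rw [← Finset.mul_sum]
  congr 1
  have hsum : ∑ i ∈ s, (β + g i) / 2 = (s.card * β + ∑ i ∈ s, g i) / 2 := by
    rw [← Finset.sum_div, Finset.sum_add_distrib, Finset.sum_const, nsmul_eq_mul]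
  rw [show ∑ i ∈ s, ((((β + g i) / 2 : ℝ)) : ℂ) = ((∑ i ∈ s, (β + g i) / 2 : ℝ) : ℂ) by
    push_cast; ring, hsum]

lemma my_lagrange_sum {ι : Type*} [DecidableEq ι] {s : Finset ι} {z : ι → ℂ}
    (hinj : Set.InjOn z s) {t : ℕ} (ht : t + 1 < s.card) :
    ∑ r ∈ s, z r ^ t * (∏ i ∈ s.erase r, (z r - z i))⁻¹ = 0 := by
  have hX : (Polynomial.X ^ t : ℂ[X]) = Lagrange.interpolate s z (fun i => z i ^ t) := by
    apply Lagrange.eq_interpolate_of_eval_eq _ hinj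
    · rw [Polynomial.degree_X_pow]
      exact_mod_cast (by omega : t < s.card)
    · intro i _; simp
  have hcoeff := congrArg (fun p : ℂ[X] => p.coeff (s.card - 1)) hX
  simp only [Lagrange.interpolate_apply, Polynomial.finset_sum_coeff,
    Polynomial.coeff_X_pow, if_neg (by omega : ¬ s.card - 1 = t)] at hcoeff
  have hbc : ∀ i ∈ s, (Polynomial.C (z i ^ t) * Lagrange.basis s z i).coeff (s.card - 1)
      = z i ^ t * (∏ j ∈ s.erase i, (z i - z j))⁻¹ := by
    intro i hi
    have hb : Lagrange.basis s z i
        = Polynomial.C (Lagrange.nodalWeight s z i) * Lagrange.nodal (s.erase i) z := by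
      unfold Lagrange.basis Lagrange.nodalWeight Lagrange.basisDivisor
      rw [Lagrange.nodal_eq, Finset.prod_mul_distrib, map_prod]
    have hdeg : (Lagrange.nodal (s.erase i) z).natDegree = s.card - 1 := by
      rw [Lagrange.natDegree_nodal, Finset.card_erase_of_mem hi]
    have hcn : (Lagrange.nodal (s.erase i) z).coeff (s.card - 1) = 1 := by
      rw [← hdeg]
      exact (Lagrange.nodal_monic (s := s.erase i) (v := z)).coeff_natDegree
    rw [hb]
    rw [Polynomial.coeff_C_mul]
    rw [Polynomial.coeff_C_mul]
    rw [hcn, mul_one, Lagrange.nodalWeight, Finset.prod_inv_distrib]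
  rw [Finset.sum_congr rfl hbc] at hcoeff
  exact hcoeff.symm

lemma my_exp_inj {a b : ℝ} (h : |a - b| < 2 * Real.pi)
    (he : Complex.exp (Complex.I * a) = Complex.exp (Complex.I * b)) : a = b := by
  rw [Complex.exp_eq_exp_iff_exists_int] at he
  obtain ⟨k, hk⟩ := he
  have hab : (a : ℂ) = (b : ℂ) + k * (2 * Real.pi) := by
    exact mul_left_cancel₀ Complex.I_ne_zero
      (hk.trans (by ring : (Complex.I * b + k * (2 * Real.pi * Complex.I) : ℂ)
        = Complex.I * ((b : ℂ) + k * (2 * Real.pi))))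
  have hab' : a = b + k * (2 * Real.pi) := by exact_mod_cast hab
  have hk0 : k = 0 := by
    by_contra h0
    have h1 : (1 : ℝ) ≤ |(k : ℝ)| := by
      have : (1 : ℤ) ≤ |k| := Int.one_le_abs h0
      calc (1:ℝ) = ((1:ℤ):ℝ) := by norm_num
        _ ≤ ((|k|:ℤ):ℝ) := by exact_mod_cast this
        _ = |(k:ℝ)| := by push_cast; ring
    have : |a - b| = |(k : ℝ)| * (2 * Real.pi) := by
      rw [hab', show b + k * (2*Real.pi) - b = k * (2*Real.pi) by ring,
        abs_mul, abs_of_pos (by positivity : (0:ℝ) < 2 * Real.pi)]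
    nlinarith [Real.pi_pos]
  simp [hk0] at hab'
  exact hab'

lemma my_sin_half_pos {x : ℝ} (h1 : 0 < x) (h2 : x < 2 * Real.pi) : 0 < Real.sin (x / 2) :=
  Real.sin_pos_of_pos_of_lt_pi (by linarith) (by linarith)


/-- The node `ζ_j = e^{iθ_j}` on the unit circle. -/
noncomputable def zetaC (θ : ℕ → ℝ) (j : ℕ) : ℂ := Complex.exp (Complex.I * (θ j : ℂ))

/-- `Ψ_m(z) = ∏_{k=1}^m (z - ξ_k)` with `ξ_k = e^{iφ_k}` (1-based indexing). -/
noncomputable def PsiC (m : ℕ) (φ : ℕ → ℝ) (z : ℂ) : ℂ :=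
  ∏ k ∈ Finset.Icc 1 m, (z - Complex.exp (Complex.I * (φ k : ℂ)))

lemma my_core (m n : ℕ) (hm : 1 ≤ m)
    (θ φ : ℕ → ℝ)
    (hφm : ∀ i j, 1 ≤ i → i < j → j ≤ m + 1 → φ i < φ j)
    (hφp : φ (m + 1) = φ 1 + 2 * Real.pi)
    (q : ℕ → Fin n)
    (hq : ∀ r, 1 ≤ r → r ≤ m → φ r < θ ((q r : ℕ)+1) ∧ θ ((q r : ℕ)+1) < φ (r+1)) :
    ∃ w : Fin n → ℝ, (∀ j, 0 ≤ w j) ∧ (∀ r, 1 ≤ r → r ≤ m → 0 < w (q r)) ∧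
      (∀ k : ℕ, 1 ≤ k → k < m →
        ∑ j : Fin n, (w j : ℂ) * PsiC m φ (zetaC θ ((j:ℕ)+1)) * zetaC θ ((j:ℕ)+1) ^ (-(k:ℤ)) = 0) := by
  have hpi := Real.pi_pos
  have hφle : ∀ i j, 1 ≤ i → i ≤ j → j ≤ m + 1 → φ i ≤ φ j := by
    intro i j h1 h2 h3
    rcases eq_or_lt_of_le h2 with rfl | h
    · exact le_refl _
    · exact (hφm i j h1 h h3).le
  set β : ℕ → ℝ := fun r => θ ((q r : ℕ)+1) with hβdef
  have hβl : ∀ r, 1 ≤ r → r ≤ m → φ r < β r := fun r h1 h2 => (hq r h1 h2).1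
  have hβh : ∀ r, 1 ≤ r → r ≤ m → β r < φ (r+1) := fun r h1 h2 => (hq r h1 h2).2
  have hβlow : ∀ r, 1 ≤ r → r ≤ m → φ 1 < β r :=
    fun r h1 h2 => lt_of_le_of_lt (hφle 1 r le_rfl h1 (by omega)) (hβl r h1 h2)
  have hβhigh : ∀ r, 1 ≤ r → r ≤ m → β r < φ 1 + 2 * Real.pi := by
    intro r h1 h2
    calc β r < φ (r+1) := hβh r h1 h2
      _ ≤ φ (m+1) := hφle (r+1) (m+1) (by omega) (by omega) le_rfl
      _ = φ 1 + 2 * Real.pi := hφp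
  have hβmono : ∀ r s, 1 ≤ r → r < s → s ≤ m → β r < β s := by
    intro r s h1 h2 h3
    calc β r < φ (r+1) := hβh r h1 (by omega)
      _ ≤ φ s := hφle (r+1) s (by omega) (by omega) (by omega)
      _ < β s := hβl s (by omega) h3
  set z : ℕ → ℂ := fun r => Complex.exp (Complex.I * (β r : ℂ)) with hzdef
  have hz : ∀ r, zetaC θ ((q r : ℕ)+1) = z r := fun r => rfl
  have hzne : ∀ r, z r ≠ 0 := fun r => Complex.exp_ne_zero _
  have hβinj : ∀ r ∈ Finset.Icc 1 m, ∀ s ∈ Finset.Icc 1 m, r ≠ s → β r ≠ β s := by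
    intro r hr s hs hne
    rw [Finset.mem_Icc] at hr hs
    rcases Nat.lt_or_ge r s with h | h
    · exact (hβmono r s hr.1 h hs.2).ne
    · exact (hβmono s r hs.1 (by omega) hr.2).ne'
  have hzinj : Set.InjOn z (Finset.Icc 1 m) := by
    intro r hr s hs he
    by_contra hne
    apply hβinj r hr s hs hne
    apply my_exp_inj _ he
    simp only [Finset.coe_Icc, Set.mem_Icc] at hr hs
    rw [abs_sub_lt_iff]
    constructor
    · linarith [hβhigh r hr.1 hr.2, hβlow s hs.1 hs.2]
    · linarith [hβhigh s hs.1 hs.2, hβlow r hr.1 hr.2]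
  set T : ℕ → ℝ := fun r => ∏ s ∈ (Finset.Icc 1 m).erase r, Real.sin ((β r - β s)/2) with hT
  set S : ℕ → ℝ := fun r => ∏ k ∈ Finset.Icc 1 m, Real.sin ((β r - φ k)/2) with hS
  set u : ℕ → ℝ := fun r => T r * S r with hu
  have hupos : ∀ r ∈ Finset.Icc 1 m, 0 < u r := by
    intro r hrr
    have hr := Finset.mem_Icc.mp hrr
    have hsplit : S r = Real.sin ((β r - φ r)/2)
        * ∏ k ∈ (Finset.Icc 1 m).erase r, Real.sin ((β r - φ k)/2) :=
      (Finset.mul_prod_erase _ _ hrr).symm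
    have hrw : u r = Real.sin ((β r - φ r)/2)
        * ∏ s ∈ (Finset.Icc 1 m).erase r,
            (Real.sin ((β r - β s)/2) * Real.sin ((β r - φ s)/2)) := by
      rw [hu]; simp only []
      rw [hsplit, Finset.prod_mul_distrib]; ring
    rw [hrw]
    apply mul_pos
    · apply my_sin_half_pos
      · linarith [hβl r hr.1 hr.2]
      · have h1 := hβhigh r hr.1 hr.2
        have h2 : φ 1 ≤ φ r := hφle 1 r le_rfl hr.1 (by omega)
        linarith
    · apply Finset.prod_pos
      intro s hs
      rw [Finset.mem_erase, Finset.mem_Icc] at hs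
      obtain ⟨hsr, hs1, hsm⟩ := hs
      rcases Nat.lt_or_ge s r with hlt | hge
      · apply mul_pos
        · apply my_sin_half_pos
          · linarith [hβmono s r hs1 hlt hr.2]
          · linarith [hβhigh r hr.1 hr.2, hβlow s hs1 hsm]
        · apply my_sin_half_pos
          · have : φ s ≤ φ r := hφle s r hs1 (by omega) (by omega)
            linarith [hβl r hr.1 hr.2]
          · have : φ 1 ≤ φ s := hφle 1 s le_rfl hs1 (by omega)
            linarith [hβhigh r hr.1 hr.2]
      · have hgt : r < s := by omega
        have e1 : (β r - β s)/2 = -((β s - β r)/2) := by ring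
        have e2 : (β r - φ s)/2 = -((φ s - β r)/2) := by ring
        rw [e1, e2, Real.sin_neg, Real.sin_neg, neg_mul_neg]
        apply mul_pos
        · apply my_sin_half_pos
          · linarith [hβmono r s hr.1 hgt hsm]
          · linarith [hβhigh s hs1 hsm, hβlow r hr.1 hr.2]
        · apply my_sin_half_pos
          · have : φ (r+1) ≤ φ s := hφle (r+1) s (by omega) (by omega) (by omega)
            linarith [hβh r hr.1 hr.2]
          · have : φ s < φ (m+1) := hφm s (m+1) hs1 (by omega) le_rfl
            linarith [hβlow r hr.1 hr.2, hφp]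
  have hcard : (Finset.Icc 1 m).card = m := by rw [Nat.card_Icc]; omega
  have hcarde : ∀ r ∈ Finset.Icc 1 m, ((Finset.Icc 1 m).erase r).card = m - 1 := by
    intro r hr; rw [Finset.card_erase_of_mem hr, hcard]
  set Φ : ℝ := ∑ k ∈ Finset.Icc 1 m, φ k with hΦ
  set A : ℝ := ∑ s ∈ Finset.Icc 1 m, β s with hA
  set κ : ℂ := (2 * Complex.I) ^ (2*m-1)
    * Complex.exp (Complex.I * (((A + Φ)/2 : ℝ) : ℂ)) with hκ
  set SC : ℕ → ℂ := fun r => ∏ k ∈ Finset.Icc 1 m, ((Real.sin ((β r - φ k)/2) : ℝ) : ℂ) with hSC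
  set TC : ℕ → ℂ := fun r => ∏ s ∈ (Finset.Icc 1 m).erase r,
      ((Real.sin ((β r - β s)/2) : ℝ) : ℂ) with hTC
  have hPsi : ∀ r, PsiC m φ (z r)
      = (2 * Complex.I) ^ m
        * Complex.exp (Complex.I * ((((m:ℝ) * β r + Φ)/2 : ℝ) : ℂ)) * SC r := by
    intro r
    have h := my_prod_exp_sub (Finset.Icc 1 m) φ (β r)
    rw [hcard] at h
    exact h
  have hNode : ∀ r ∈ Finset.Icc 1 m, ∏ s ∈ (Finset.Icc 1 m).erase r, (z r - z s)
      = (2 * Complex.I) ^ (m-1)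
        * Complex.exp (Complex.I * (((((m-1:ℕ):ℝ) * β r + (A - β r))/2 : ℝ) : ℂ)) * TC r := by
    intro r hr
    have h := my_prod_exp_sub ((Finset.Icc 1 m).erase r) β (β r)
    rw [hcarde r hr] at h
    have hAe : ∑ s ∈ (Finset.Icc 1 m).erase r, β s = A - β r := by
      rw [hA, ← Finset.add_sum_erase _ β hr]; ring
    rw [hAe] at h
    exact h
  have hID : ∀ r ∈ Finset.Icc 1 m,
      PsiC m φ (z r) * ∏ s ∈ (Finset.Icc 1 m).erase r, (z r - z s)
        = κ * ((u r : ℝ) : ℂ) * z r ^ (m-1) := by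
    intro r hr
    rw [hPsi r, hNode r hr]
    have hpow : (2*Complex.I)^m * (2*Complex.I)^(m-1) = (2*Complex.I)^(2*m-1) := by
      rw [← pow_add]; congr 1; omega
    have hexp : Complex.exp (Complex.I * ((((m:ℝ) * β r + Φ)/2 : ℝ) : ℂ))
        * Complex.exp (Complex.I * (((((m-1:ℕ):ℝ) * β r + (A - β r))/2 : ℝ) : ℂ))
        = Complex.exp (Complex.I * (((A + Φ)/2 : ℝ) : ℂ)) * z r ^ (m-1) := by
      rw [hzdef]
      simp only []
      rw [← Complex.exp_nat_mul, ← Complex.exp_add, ← Complex.exp_add]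
      congr 1
      have hm1 : ((m-1 : ℕ) : ℂ) = (m:ℂ) - 1 := by
        rw [Nat.cast_sub hm]; norm_num
      push_cast
      rw [hm1]
      ring
    have hP : SC r * TC r = ((u r : ℝ) : ℂ) := by
      rw [hu]; simp only []
      rw [Complex.ofReal_mul, hT, hS]; simp only []
      rw [Complex.ofReal_prod, Complex.ofReal_prod, hSC, hTC]
      simp only []
      ring
    calc (2 * Complex.I) ^ m
          * Complex.exp (Complex.I * ((((m:ℝ) * β r + Φ)/2 : ℝ) : ℂ)) * SC r
        * ((2 * Complex.I) ^ (m-1)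
          * Complex.exp (Complex.I * (((((m-1:ℕ):ℝ) * β r + (A - β r))/2 : ℝ) : ℂ)) * TC r)
        = ((2*Complex.I)^m * (2*Complex.I)^(m-1))
          * (Complex.exp (Complex.I * ((((m:ℝ) * β r + Φ)/2 : ℝ) : ℂ))
            * Complex.exp (Complex.I * (((((m-1:ℕ):ℝ) * β r + (A - β r))/2 : ℝ) : ℂ)))
          * (SC r * TC r) := by ring
      _ = (2*Complex.I)^(2*m-1)
          * (Complex.exp (Complex.I * (((A + Φ)/2 : ℝ) : ℂ)) * z r ^ (m-1))
          * ((u r : ℝ) : ℂ) := by rw [hpow, hexp, hP]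
      _ = κ * ((u r : ℝ) : ℂ) * z r ^ (m-1) := by rw [hκ]; ring
  refine ⟨fun j => ∑ r ∈ Finset.Icc 1 m, if q r = j then (u r)⁻¹ else 0, ?_, ?_, ?_⟩
  · intro j
    apply Finset.sum_nonneg
    intro r hr
    split
    · exact (inv_pos.mpr (hupos r hr)).le
    · exact le_refl 0
  · intro r h1 h2
    apply Finset.sum_pos'
    · intro s hs
      split
      · exact (inv_pos.mpr (hupos s hs)).le
      · exact le_refl 0
    · refine ⟨r, Finset.mem_Icc.mpr ⟨h1, h2⟩, ?_⟩
      rw [if_pos rfl]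
      exact inv_pos.mpr (hupos r (Finset.mem_Icc.mpr ⟨h1, h2⟩))
  · intro k hk1 hk2
    have hsw : ∀ j : Fin n,
        ((∑ r ∈ Finset.Icc 1 m, if q r = j then (u r)⁻¹ else 0 : ℝ) : ℂ)
          * PsiC m φ (zetaC θ ((j:ℕ)+1)) * zetaC θ ((j:ℕ)+1) ^ (-(k:ℤ))
        = ∑ r ∈ Finset.Icc 1 m, (if q r = j then
            (((u r)⁻¹ : ℝ) : ℂ) * PsiC m φ (zetaC θ ((j:ℕ)+1))
              * zetaC θ ((j:ℕ)+1) ^ (-(k:ℤ)) else 0) := by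
      intro j
      rw [Complex.ofReal_sum, Finset.sum_mul, Finset.sum_mul]
      apply Finset.sum_congr rfl
      intro r _
      split
      · rfl
      · simp
    rw [Finset.sum_congr rfl (fun j _ => hsw j), Finset.sum_comm]
    have hinner : ∀ r ∈ Finset.Icc 1 m,
        (∑ j : Fin n, if q r = j then
            (((u r)⁻¹ : ℝ) : ℂ) * PsiC m φ (zetaC θ ((j:ℕ)+1))
              * zetaC θ ((j:ℕ)+1) ^ (-(k:ℤ)) else 0)
        = (((u r)⁻¹ : ℝ) : ℂ) * PsiC m φ (z r) * z r ^ (-(k:ℤ)) := by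
      intro r _
      rw [Finset.sum_ite_eq]
      simp [hz]
    rw [Finset.sum_congr rfl hinner]
    have hterm : ∀ r ∈ Finset.Icc 1 m,
        (((u r)⁻¹ : ℝ) : ℂ) * PsiC m φ (z r) * z r ^ (-(k:ℤ))
          = κ * (z r ^ (m-1-k) * (∏ s ∈ (Finset.Icc 1 m).erase r, (z r - z s))⁻¹) := by
      intro r hr
      have hprod_ne : (∏ s ∈ (Finset.Icc 1 m).erase r, (z r - z s)) ≠ 0 := by
        apply Finset.prod_ne_zero_iff.mpr
        intro s hs
        rw [Finset.mem_erase] at hs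
        exact sub_ne_zero_of_ne (fun he => hs.1 (hzinj hr hs.2 he).symm)
      have hu_ne : ((u r : ℝ) : ℂ) ≠ 0 := by
        exact_mod_cast (hupos r hr).ne'
      have hid := hID r hr
      have hzk : z r ^ (-(k:ℤ)) = (z r ^ k)⁻¹ := by
        rw [zpow_neg, zpow_natCast]
      have hpowsplit : z r ^ (m-1) = z r ^ (m-1-k) * z r ^ k := by
        rw [← pow_add]; congr 1; omega
      have hPsiEq : PsiC m φ (z r)
          = κ * ((u r : ℝ) : ℂ) * z r ^ (m-1)
            * (∏ s ∈ (Finset.Icc 1 m).erase r, (z r - z s))⁻¹ := by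
        field_simp
        exact hid
      rw [hPsiEq, hzk, hpowsplit]
      have hzkne : z r ^ k ≠ 0 := pow_ne_zero _ (hzne r)
      field_simp
      rw [one_div, Complex.ofReal_inv]; linear_combination (κ * z r ^ (m-1-k)) * inv_mul_cancel₀ hu_ne
    rw [Finset.sum_congr rfl hterm, ← Finset.mul_sum]
    rw [my_lagrange_sum hzinj (t := m-1-k) (by rw [hcard]; omega), mul_zero]
/-- if `{ξ_k}_{k=1}^m` strictly interlaces `{ζ_j}_{j=1}^n` on `𝕊¹`
(with the chosen normalization of arguments, this means every band `I_r` is nonempty),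
then there exist strictly positive weights `ω_1,…,ω_n` with
`∑_j ω_j Ψ_m(ζ_j) ζ_j^{-k} = 0` for every `k = 1,…,m-1`. -/
theorem stmt_16 (m n : ℕ) (hm : 1 ≤ m) (hmn : m < n)
    (θ φ : ℕ → ℝ)
    (hφ : ∀ k, 1 ≤ k → k ≤ m → φ k < φ (k + 1))
    (hφp : φ (m + 1) = φ 1 + 2 * Real.pi)
    (hθ1 : φ 1 < θ 1)
    (hθ : ∀ j, 1 ≤ j → j < n → θ j < θ (j + 1))
    (hθn : θ n < φ 1 + 2 * Real.pi)
    (hθφ : ∀ j k, 1 ≤ j → j ≤ n → 1 ≤ k → k ≤ m → θ j ≠ φ k)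
    (hbands : ∀ r, 1 ≤ r → r ≤ m → (bandC n θ φ r).Nonempty) :
    ∃ ω : Fin n → ℝ, (∀ j, 0 < ω j) ∧
      ∀ k : ℕ, 1 ≤ k → k < m →
        ∑ j : Fin n, (ω j : ℂ) *
          PsiC m φ (zetaC θ ((j : ℕ) + 1)) * zetaC θ ((j : ℕ) + 1) ^ (-(k : ℤ)) = 0 := by
  have hθm : ∀ i j, 1 ≤ i → i < j → j ≤ n → θ i < θ j :=
    my_mono (fun k hk1 hk2 => hθ k hk1 hk2)
  have hφm : ∀ i j, 1 ≤ i → i < j → j ≤ m + 1 → φ i < φ j :=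
    my_mono (fun k hk1 hk2 => hφ k hk1 (by omega))
  have hθlow : ∀ j : ℕ, 1 ≤ j → j ≤ n → φ 1 < θ j := by
    intro j h1 h2
    rcases Nat.lt_or_ge 1 j with h | h
    · exact lt_trans hθ1 (hθm 1 j le_rfl h h2)
    · have : j = 1 := by omega
      rw [this]; exact hθ1
  have hθhigh : ∀ j : ℕ, 1 ≤ j → j ≤ n → θ j < φ 1 + 2 * Real.pi := by
    intro j h1 h2
    rcases Nat.lt_or_ge j n with h | h
    · exact lt_trans (hθm j n h1 h le_rfl) hθn
    · have : j = n := by omega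
      rw [this]; exact hθn
  have hbandof : ∀ j : Fin n, ∃ r : ℕ, 1 ≤ r ∧ r ≤ m ∧
      φ r < θ ((j:ℕ)+1) ∧ θ ((j:ℕ)+1) < φ (r+1) := by
    intro j
    have hj1 : 1 ≤ (j:ℕ)+1 := by omega
    have hjn : (j:ℕ)+1 ≤ n := j.isLt
    have hne : ((Finset.Icc 1 m).filter (fun r => φ r < θ ((j:ℕ)+1))).Nonempty := by
      refine ⟨1, Finset.mem_filter.mpr ⟨Finset.mem_Icc.mpr ⟨le_rfl, hm⟩, hθlow _ hj1 hjn⟩⟩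
    set r := ((Finset.Icc 1 m).filter (fun r => φ r < θ ((j:ℕ)+1))).max' hne with hrdef
    have hrmem := Finset.max'_mem _ hne
    rw [← hrdef] at hrmem
    rw [Finset.mem_filter, Finset.mem_Icc] at hrmem
    obtain ⟨⟨hr1, hrm⟩, hrx⟩ := hrmem
    refine ⟨r, hr1, hrm, hrx, ?_⟩
    by_contra hcon
    push_neg at hcon
    rcases Nat.lt_or_ge r m with hrm' | hrm'
    · have hlt : φ (r+1) < θ ((j:ℕ)+1) :=
        lt_of_le_of_ne hcon (fun h => hθφ ((j:ℕ)+1) (r+1) hj1 hjn (by omega) (by omega) h.symm)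
      have hmem : r+1 ∈ (Finset.Icc 1 m).filter (fun r => φ r < θ ((j:ℕ)+1)) :=
        Finset.mem_filter.mpr ⟨Finset.mem_Icc.mpr ⟨by omega, by omega⟩, hlt⟩
      have := Finset.le_max' _ _ hmem
      rw [← hrdef] at this
      omega
    · have hrem : r = m := by omega
      have : θ ((j:ℕ)+1) < φ (r+1) := by
        rw [hrem, hφp]; exact hθhigh _ hj1 hjn
      linarith
  choose rof hrof1 hrofm hrofl hrofh using hbandof
  have hrep : ∀ r : ℕ, ∃ j : Fin n, 1 ≤ r → r ≤ m →
      φ r < θ ((j:ℕ)+1) ∧ θ ((j:ℕ)+1) < φ (r+1) := by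
    intro r
    by_cases h : 1 ≤ r ∧ r ≤ m
    · obtain ⟨j, hj⟩ := hbands r h.1 h.2
      rw [bandC, Finset.mem_filter] at hj
      exact ⟨j, fun _ _ => hj.2⟩
    · exact ⟨⟨0, by omega⟩, fun h1 h2 => absurd ⟨h1, h2⟩ h⟩
  choose rep hrep using hrep
  have hsys := fun j0 : Fin n => my_core m n hm θ φ hφm hφp
    (fun r => if r = rof j0 then j0 else rep r)
    (by
      intro r h1 h2
      by_cases h : r = rof j0
      · subst h
        simpa using ⟨hrofl j0, hrofh j0⟩
      · simpa [h] using hrep r h1 h2)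
  choose W hW0 hWpos hWsum using hsys
  refine ⟨fun j => ∑ j0 : Fin n, W j0 j, ?_, ?_⟩
  · intro j
    apply Finset.sum_pos' (fun j0 _ => hW0 j0 j)
    refine ⟨j, Finset.mem_univ j, ?_⟩
    have h := hWpos j (rof j) (hrof1 j) (hrofm j)
    rw [if_pos rfl] at h
    exact h
  · intro k hk1 hk2
    have hsplit : ∀ j : Fin n,
        ((∑ j0 : Fin n, W j0 j : ℝ) : ℂ) * PsiC m φ (zetaC θ ((j:ℕ)+1))
          * zetaC θ ((j:ℕ)+1) ^ (-(k:ℤ))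
        = ∑ j0 : Fin n, (W j0 j : ℂ) * PsiC m φ (zetaC θ ((j:ℕ)+1))
            * zetaC θ ((j:ℕ)+1) ^ (-(k:ℤ)) := by
      intro j
      rw [Complex.ofReal_sum, Finset.sum_mul, Finset.sum_mul]
    rw [Finset.sum_congr rfl (fun j _ => hsplit j), Finset.sum_comm]
    exact Finset.sum_eq_zero (fun j0 _ => hWsum j0 k hk1 hk2)
end

section
/- There exist real numbers ω_1,…,ω_n with ω_j > 0 for every j such that ∑_{j=1}^n ω_j Ψ_m(ζ_j) ζ_j^{−k} = 0 for every k = 1,…,m−1, if and only if {ξ_k}_{k=1}^m strictly interlaces {ζ_j}_{j=1}^n on 𝕊¹. -/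
open Complex Finset Polynomial

lemma exp_I_mul_sub_exp_I_mul (a b : ℝ) :
    exp (I * a) - exp (I * b) = 2 * I * exp (I * ((a + b) / 2 : ℝ)) * Real.sin ((a - b) / 2) := by
  have ha : I * a = I * ((a + b) / 2 : ℝ) + ((a - b) / 2 : ℝ) * I := by push_cast; ring
  have hb : I * b = I * ((a + b) / 2 : ℝ) + (-((a - b) / 2 : ℝ)) * I := by push_cast; ring
  rw [ofReal_sin, sin, ha, hb, exp_add, exp_add]
  ring_nf
  rw [I_sq]
  ring

lemma prod_exp_I_mul_sub {ι : Type*} (F : Finset ι) (α : ℝ) (β : ι → ℝ) :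
    ∏ k ∈ F, (exp (I * α) - exp (I * β k)) =
      (2 * I) ^ #F * exp (I * ((#F * α + ∑ k ∈ F, β k) / 2 : ℝ)) *
        (∏ k ∈ F, Real.sin ((α - β k) / 2) : ℝ) := by
  simp_rw [exp_I_mul_sub_exp_I_mul, prod_mul_distrib, prod_const, ← exp_sum]
  push_cast
  rw [← mul_sum, ← sum_div, sum_add_distrib, sum_const, nsmul_eq_mul, mul_pow]

lemma exp_I_mul_zpow (t : ℝ) (n : ℤ) : exp (I * t) ^ n = exp (I * (n * t : ℝ)) := by
  rw [← exp_int_mul]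
  push_cast
  ring_nf

lemma sin_half_sub_pos {x y : ℝ} (h : y < x) (h' : x < y + 2 * Real.pi) :
    0 < Real.sin ((x - y) / 2) :=
  Real.sin_pos_of_pos_of_lt_pi (by linarith) (by linarith)

lemma sin_half_sub_neg {x y : ℝ} (h : x < y) (h' : y < x + 2 * Real.pi) :
    Real.sin ((x - y) / 2) < 0 :=
  Real.sin_neg_of_neg_of_neg_pi_lt (by linarith) (by linarith)

lemma sin_half_sub_ne_zero {x y : ℝ} (hxy : x ≠ y) (h : y < x + 2 * Real.pi)
    (h' : x < y + 2 * Real.pi) : Real.sin ((x - y) / 2) ≠ 0 := by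
  rcases hxy.lt_or_gt with hlt | hgt
  · exact (sin_half_sub_neg hlt h).ne
  · exact (sin_half_sub_pos hgt h').ne'

lemma Finset.zero_lt_neg_one_pow_card_filter_mul_prod {ι : Type*} (F : Finset ι) (p : ι → Prop)
    [DecidablePred p] {f : ι → ℝ} (hneg : ∀ i ∈ F, p i → f i < 0)
    (hpos : ∀ i ∈ F, ¬ p i → 0 < f i) :
    0 < (-1) ^ #{i ∈ F | p i} * ∏ i ∈ F, f i := by
  rw [← prod_filter_mul_prod_filter_not F p, ← mul_assoc, ← prod_neg]
  refine mul_pos (prod_pos fun i hi => ?_) (prod_pos fun i hi => ?_) <;>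
    rw [mem_filter] at hi
  · exact neg_pos.mpr (hneg i hi.1 hi.2)
  · exact hpos i hi.1 hi.2

lemma Lagrange.sum_pow_div_prod_sub_eq_zero {K ι : Type*} [Field K] [DecidableEq ι]
    {s : Finset ι} {v : ι → K} (hvs : Set.InjOn v s) {t : ℕ} (ht : t + 2 ≤ #s) :
    ∑ i ∈ s, v i ^ t / ∏ j ∈ s.erase i, (v i - v j) = 0 := by
  have hdeg : (X ^ t : K[X]).degree < #s := by
    rw [degree_X_pow]; exact_mod_cast (by omega : t < #s)
  simpa [coeff_X_pow, show #s - 1 ≠ t by omega] using (coeff_eq_sum hvs hdeg).symm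

lemma sum_mul_eval_mul_zpow_eq_zero {K ι : Type*} [Field K] (s : Finset ι) (c z : ι → K)
    (hz : ∀ j ∈ s, z j ≠ 0) {N : ℕ}
    (h : ∀ k : ℕ, 1 ≤ k → k ≤ N → ∑ j ∈ s, c j * z j ^ (-(k : ℤ)) = 0)
    {Q : K[X]} (hQ : Q.natDegree < N) :
    ∑ j ∈ s, c j * Q.eval (z j) * z j ^ (-(N : ℤ)) = 0 := by
  have hterm : ∀ j ∈ s, c j * Q.eval (z j) * z j ^ (-(N : ℤ)) =
      ∑ t ∈ range N, Q.coeff t * (c j * z j ^ (-((N - t : ℕ) : ℤ))) := by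
    intro j hj
    rw [eval_eq_sum_range' hQ, mul_sum, sum_mul]
    refine sum_congr rfl fun t ht => ?_
    have ht : t ≤ N := (mem_range.mp ht).le
    rw [show -((N - t : ℕ) : ℤ) = t + -(N : ℤ) by push_cast [ht]; ring, zpow_add₀ (hz j hj),
      zpow_natCast]
    ring
  rw [sum_congr rfl hterm, sum_comm]
  refine sum_eq_zero fun t ht => ?_
  have ht : t < N := mem_range.mp ht
  rw [← mul_sum, h (N - t) (by omega) (by omega), mul_zero]

lemma Nat.exists_le_and_lt_succ {α : Type*} [LinearOrder α] (f : ℕ → α) {a b : ℕ} {y : α}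
    (hab : a ≤ b) (ha : f a ≤ y) (hb : y < f b) : ∃ r, a ≤ r ∧ r < b ∧ f r ≤ y ∧ y < f (r + 1) := by
  induction b, hab using Nat.le_induction with
  | base => exact absurd hb (not_lt.mpr ha)
  | succ b hab ih =>
    by_cases h : y < f b
    · obtain ⟨r, h1, h2, h3⟩ := ih h
      exact ⟨r, h1, by omega, h3⟩
    · exact ⟨b, hab, by omega, not_lt.mp h, hb⟩

lemma AddSubmonoid.exists_forall_pos_mem {ι M : Type*} [Fintype ι] [AddCommMonoid M]
    [PartialOrder M] [IsOrderedCancelAddMonoid M] (S : AddSubmonoid (ι → M))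
    (h : ∀ i, ∃ w ∈ S, 0 ≤ w ∧ 0 < w i) : ∃ ω ∈ S, ∀ j, 0 < ω j := by
  choose w hwS hw0 hwi using h
  refine ⟨∑ i, w i, _root_.sum_mem fun i _ => hwS i, fun j => ?_⟩
  rw [Finset.sum_apply]
  exact Finset.sum_pos' (fun i _ => hw0 i j) ⟨j, Finset.mem_univ _, hwi j⟩

lemma PsiC_exp_I_mul (m : ℕ) (φ : ℕ → ℝ) (t : ℝ) :
    PsiC m φ (exp (I * t)) = (2 * I) ^ m * exp (I * ((m * t + ∑ k ∈ Icc 1 m, φ k) / 2 : ℝ)) *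
      (∏ k ∈ Icc 1 m, Real.sin ((t - φ k) / 2) : ℝ) := by
  rw [PsiC, prod_exp_I_mul_sub, Nat.card_Icc, Nat.add_sub_cancel]

lemma PsiC_mul_prod_sub_exp_I_mul (m : ℕ) (φ ϑ : ℕ → ℝ) {c : ℕ} (hc : c ∈ Icc 1 m) :
    PsiC m φ (exp (I * ϑ c)) * ∏ d ∈ (Icc 1 m).erase c, (exp (I * ϑ c) - exp (I * ϑ d)) =
      (2 * I) ^ (2 * m - 1) * exp (I * ((∑ k ∈ Icc 1 m, φ k + ∑ d ∈ Icc 1 m, ϑ d) / 2 : ℝ)) *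
        ((∏ k ∈ Icc 1 m, Real.sin ((ϑ c - φ k) / 2)) *
          ∏ d ∈ (Icc 1 m).erase c, Real.sin ((ϑ c - ϑ d) / 2) : ℝ) * exp (I * ϑ c) ^ (m - 1) := by
  have hm : 1 ≤ m := (mem_Icc.mp hc).1.trans (mem_Icc.mp hc).2
  rw [PsiC_exp_I_mul, prod_exp_I_mul_sub, card_erase_of_mem hc, Nat.card_Icc, Nat.add_sub_cancel,
    sum_erase_eq_sub hc, ← exp_nat_mul, show 2 * m - 1 = m + (m - 1) by omega, pow_add]
  have hexp : exp (I * ((m * ϑ c + ∑ k ∈ Icc 1 m, φ k) / 2 : ℝ)) *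
      exp (I * (((m - 1 : ℕ) * ϑ c + (∑ d ∈ Icc 1 m, ϑ d - ϑ c)) / 2 : ℝ)) =
      exp (I * ((∑ k ∈ Icc 1 m, φ k + ∑ d ∈ Icc 1 m, ϑ d) / 2 : ℝ)) *
        exp ((m - 1 : ℕ) * (I * ϑ c)) := by
    rw [← exp_add, ← exp_add]
    push_cast [hm]
    ring_nf
  rw [ofReal_mul]
  linear_combination (2 * I) ^ m * (2 * I) ^ (m - 1) *
    ((∏ k ∈ Icc 1 m, Real.sin ((ϑ c - φ k) / 2) : ℝ) : ℂ) *
      ((∏ d ∈ (Icc 1 m).erase c, Real.sin ((ϑ c - ϑ d) / 2) : ℝ) : ℂ) * hexp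

lemma prod_mul_prod_exp_I_mul_sub_mul_zpow {ι : Type*} (F E : Finset ι) (hFE : #F = #E + 2)
    (φ : ι → ℝ) (t : ℝ) :
    (∏ k ∈ F, (exp (I * t) - exp (I * φ k))) * (∏ k ∈ E, (exp (I * t) - exp (I * φ k))) *
        exp (I * t) ^ (-((#E + 1 : ℕ) : ℤ)) =
      (2 * I) ^ (#F + #E) * exp (I * ((∑ k ∈ F, φ k + ∑ k ∈ E, φ k) / 2 : ℝ)) *
        ((∏ k ∈ F, Real.sin ((t - φ k) / 2)) * ∏ k ∈ E, Real.sin ((t - φ k) / 2) : ℝ) := by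
  have hexp : exp (I * ((#F * t + ∑ k ∈ F, φ k) / 2 : ℝ)) *
      exp (I * ((#E * t + ∑ k ∈ E, φ k) / 2 : ℝ)) * exp (I * t) ^ (-((#E + 1 : ℕ) : ℤ)) =
      exp (I * ((∑ k ∈ F, φ k + ∑ k ∈ E, φ k) / 2 : ℝ)) := by
    rw [exp_I_mul_zpow, ← exp_add, ← exp_add, hFE]
    push_cast
    ring_nf
  rw [prod_exp_I_mul_sub, prod_exp_I_mul_sub, ofReal_mul]
  linear_combination (2 * I) ^ #F * (2 * I) ^ #E *
    ((∏ k ∈ F, Real.sin ((t - φ k) / 2) : ℝ) : ℂ) *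
      ((∏ k ∈ E, Real.sin ((t - φ k) / 2) : ℝ) : ℂ) * hexp

section Bands

variable {m : ℕ} {φ : ℕ → ℝ}

lemma StrictMonoOn.apply_le_apply (hφ : StrictMonoOn φ (Set.Icc 1 (m + 1))) {i j : ℕ} (hi : 1 ≤ i)
    (hij : i ≤ j) (hj : j ≤ m + 1) : φ i ≤ φ j :=
  hφ.monotoneOn ⟨hi, by omega⟩ ⟨by omega, hj⟩ hij

lemma mem_Ico_of_strictMonoOn (hφ : StrictMonoOn φ (Set.Icc 1 (m + 1)))
    (hφp : φ (m + 1) = φ 1 + 2 * Real.pi) {k : ℕ} (hk : k ∈ Icc 1 m) :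
    φ k ∈ Set.Ico (φ 1) (φ 1 + 2 * Real.pi) := by
  rw [mem_Icc] at hk
  exact ⟨hφ.apply_le_apply le_rfl hk.1 (by omega),
    hφp ▸ hφ ⟨hk.1, by omega⟩ ⟨by omega, le_rfl⟩ (by omega)⟩

variable {ϑ : ℕ → ℝ}

lemma mem_Ioo_of_mem_bands (hφ : StrictMonoOn φ (Set.Icc 1 (m + 1)))
    (hφp : φ (m + 1) = φ 1 + 2 * Real.pi) (hϑ : ∀ c ∈ Icc 1 m, ϑ c ∈ Set.Ioo (φ c) (φ (c + 1)))
    {c : ℕ} (hc : c ∈ Icc 1 m) : ϑ c ∈ Set.Ioo (φ 1) (φ 1 + 2 * Real.pi) := by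
  have hc' := mem_Icc.mp hc
  exact ⟨(hφ.apply_le_apply le_rfl hc'.1 (by omega)).trans_lt (hϑ c hc).1,
    hφp ▸ (hϑ c hc).2.trans_le (hφ.apply_le_apply (by omega) (by omega) le_rfl)⟩

lemma strictMonoOn_of_mem_bands_s17 (hφ : StrictMonoOn φ (Set.Icc 1 (m + 1)))
    (hϑ : ∀ c ∈ Icc 1 m, ϑ c ∈ Set.Ioo (φ c) (φ (c + 1))) : StrictMonoOn ϑ (Icc 1 m) := by
  intro c hc d hd hcd
  have hd' := mem_Icc.mp hd
  calc ϑ c < φ (c + 1) := (hϑ c hc).2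
    _ ≤ φ d := hφ.apply_le_apply (by omega) hcd (by omega)
    _ < ϑ d := (hϑ d hd).1

lemma prod_sin_mul_prod_sin_pos (hφ : StrictMonoOn φ (Set.Icc 1 (m + 1)))
    (hφp : φ (m + 1) = φ 1 + 2 * Real.pi) (hϑ : ∀ c ∈ Icc 1 m, ϑ c ∈ Set.Ioo (φ c) (φ (c + 1)))
    {c : ℕ} (hc : c ∈ Icc 1 m) :
    0 < (∏ k ∈ Icc 1 m, Real.sin ((ϑ c - φ k) / 2)) *
      ∏ d ∈ (Icc 1 m).erase c, Real.sin ((ϑ c - ϑ d) / 2) := by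
  have hc' := mem_Icc.mp hc
  have hwin {d} (hd : d ∈ Icc 1 m) := mem_Ioo_of_mem_bands hφ hφp hϑ hd
  have hϑmono := strictMonoOn_of_mem_bands_s17 hφ hϑ
  have hsp := zero_lt_neg_one_pow_card_filter_mul_prod (Icc 1 m) (c < ·)
    (f := fun k => Real.sin ((ϑ c - φ k) / 2))
    (fun k hk hck => sin_half_sub_neg
      ((hϑ c hc).2.trans_le (hφ.apply_le_apply (by omega) hck (by have := mem_Icc.mp hk; omega)))
      (by linarith [(mem_Ico_of_strictMonoOn hφ hφp hk).2, (hwin hc).1]))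
    (fun k hk hck => sin_half_sub_pos
      ((hφ.apply_le_apply (mem_Icc.mp hk).1 (not_lt.mp hck) (by omega)).trans_lt (hϑ c hc).1)
      (by linarith [(mem_Ico_of_strictMonoOn hφ hφp hk).1, (hwin hc).2]))
  have hup := zero_lt_neg_one_pow_card_filter_mul_prod ((Icc 1 m).erase c) (c < ·)
    (f := fun d => Real.sin ((ϑ c - ϑ d) / 2))
    (fun d hd hcd => sin_half_sub_neg (hϑmono hc (mem_of_mem_erase hd) hcd)
      (by linarith [(hwin hc).1, (hwin hc).2, (hwin (mem_of_mem_erase hd)).1,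
        (hwin (mem_of_mem_erase hd)).2]))
    (fun d hd hcd => sin_half_sub_pos
      (hϑmono (mem_of_mem_erase hd) hc (lt_of_le_of_ne (not_lt.mp hcd) (ne_of_mem_erase hd)))
      (by linarith [(hwin hc).1, (hwin hc).2, (hwin (mem_of_mem_erase hd)).1,
        (hwin (mem_of_mem_erase hd)).2]))
  rw [filter_erase, erase_eq_of_notMem (by simp)] at hup
  have hsq : ((-1 : ℝ) ^ #{k ∈ Icc 1 m | c < k}) ^ 2 = 1 := by
    rw [← pow_mul, mul_comm, pow_mul, neg_one_sq, one_pow]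
  nlinarith [mul_pos hsp hup]

theorem exists_pos_weights_of_mem_bands (hφ : StrictMonoOn φ (Set.Icc 1 (m + 1)))
    (hφp : φ (m + 1) = φ 1 + 2 * Real.pi) (hϑ : ∀ c ∈ Icc 1 m, ϑ c ∈ Set.Ioo (φ c) (φ (c + 1))) :
    ∃ w : ℕ → ℝ, (∀ c ∈ Icc 1 m, 0 < w c) ∧ ∀ k : ℕ, 1 ≤ k → k < m →
      ∑ c ∈ Icc 1 m, (w c : ℂ) * PsiC m φ (exp (I * ϑ c)) * exp (I * ϑ c) ^ (-(k : ℤ)) = 0 := by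
  set v : ℕ → ℂ := fun c => exp (I * ϑ c)
  set s : ℕ → ℝ := fun c => (∏ k ∈ Icc 1 m, Real.sin ((ϑ c - φ k) / 2)) *
    ∏ d ∈ (Icc 1 m).erase c, Real.sin ((ϑ c - ϑ d) / 2)
  have hs : ∀ c ∈ Icc 1 m, 0 < s c := fun c hc => prod_sin_mul_prod_sin_pos hφ hφp hϑ hc
  refine ⟨fun c => (s c)⁻¹, fun c hc => inv_pos.mpr (hs c hc), fun k hk hkm => ?_⟩
  have hinj : Set.InjOn v (Icc 1 m) := by
    intro c hc d hd hcd
    by_contra hne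
    have hsin : Real.sin ((ϑ c - ϑ d) / 2) ≠ 0 :=
      prod_ne_zero_iff.mp (right_ne_zero_of_mul (hs c hc).ne') d (mem_erase.mpr ⟨Ne.symm hne, hd⟩)
    have h := sub_eq_zero.mpr hcd
    rw [exp_I_mul_sub_exp_I_mul, mul_eq_zero, ofReal_eq_zero] at h
    exact hsin (h.resolve_left (by simp [exp_ne_zero]))
  set C : ℂ := (2 * I) ^ (2 * m - 1) *
    exp (I * ((∑ k ∈ Icc 1 m, φ k + ∑ d ∈ Icc 1 m, ϑ d) / 2 : ℝ))
  have hterm : ∀ c ∈ Icc 1 m, ((s c)⁻¹ : ℝ) * PsiC m φ (v c) * v c ^ (-(k : ℤ)) =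
      C * (v c ^ (m - 1 - k) / ∏ d ∈ (Icc 1 m).erase c, (v c - v d)) := by
    intro c hc
    have hprod : ∏ d ∈ (Icc 1 m).erase c, (v c - v d) ≠ 0 :=
      prod_ne_zero_iff.mpr fun d hd => sub_ne_zero.mpr fun h =>
        ne_of_mem_erase hd (hinj (mem_of_mem_erase hd) hc h.symm)
    have hw : ((s c)⁻¹ : ℝ) * (s c : ℂ) = 1 := by
      rw [← ofReal_mul, inv_mul_cancel₀ (hs c hc).ne', ofReal_one]
    have hpow : v c ^ (m - 1) * v c ^ (-(k : ℤ)) = v c ^ (m - 1 - k) := by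
      rw [← zpow_natCast, ← zpow_natCast, ← zpow_add₀ (exp_ne_zero _)]
      congr 1
      push_cast [show k ≤ m - 1 by omega, show 1 ≤ m by omega]
      ring
    rw [mul_div_assoc', eq_div_iff hprod]
    linear_combination ((s c)⁻¹ * v c ^ (-(k : ℤ)) : ℂ) * PsiC_mul_prod_sub_exp_I_mul m φ ϑ hc +
      C * v c ^ (m - 1) * v c ^ (-(k : ℤ)) * hw + C * hpow
  rw [sum_congr rfl hterm, ← mul_sum,
    Lagrange.sum_pow_div_prod_sub_eq_zero hinj (by rw [Nat.card_Icc]; omega), mul_zero]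

end Bands

def momentWeights {ι : Type*} [Fintype ι] (m : ℕ) (φ : ℕ → ℝ) (x : ι → ℝ) :
    AddSubmonoid (ι → ℝ) where
  carrier := {ω | ∀ k : ℕ, 1 ≤ k → k < m →
    ∑ j, (ω j : ℂ) * PsiC m φ (exp (I * x j)) * exp (I * x j) ^ (-(k : ℤ)) = 0}
  add_mem' {ω ω'} hω hω' k hk hkm := by
    simp only [Set.mem_ofPred_eq, Pi.add_apply, ofReal_add, add_mul, sum_add_distrib] at *
    rw [hω k hk hkm, hω' k hk hkm, add_zero]
  zero_mem' := by simp

section Nodes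

variable {ι : Type*} {m : ℕ} {φ : ℕ → ℝ} {x : ι → ℝ}

lemma exists_sign_sin_mul_sin_of_band_empty (hφ : StrictMonoOn φ (Set.Icc 1 (m + 1)))
    (hφp : φ (m + 1) = φ 1 + 2 * Real.pi) (hx : ∀ j, x j ∈ Set.Ioo (φ 1) (φ 1 + 2 * Real.pi))
    (hxφ : ∀ j, ∀ k ∈ Icc 1 m, x j ≠ φ k) (hm : 2 ≤ m) {r : ℕ} (hr : r ∈ Icc 1 m)
    (hempty : ∀ j, x j ∉ Set.Ioo (φ r) (φ (r + 1))) :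
    ∃ a ∈ Icc 1 m, ∃ b ∈ (Icc 1 m).erase a, ∃ σ : ℝ,
      ∀ j, 0 < σ * (Real.sin ((x j - φ a) / 2) * Real.sin ((x j - φ b) / 2)) := by
  have hr' := mem_Icc.mp hr
  have hwin {k} (hk : k ∈ Icc 1 m) := mem_Ico_of_strictMonoOn hφ hφp hk
  rcases hr'.2.lt_or_eq with hrm | rfl
  · have hr1 : r + 1 ∈ Icc 1 m := mem_Icc.mpr ⟨by omega, hrm⟩
    refine ⟨r, hr, r + 1, mem_erase.mpr ⟨by omega, hr1⟩, 1, fun j => ?_⟩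
    rw [one_mul]
    rcases (hxφ j r hr).lt_or_gt with hlt | hgt
    · have hlt' : x j < φ (r + 1) :=
        hlt.trans (hφ ⟨hr'.1, by omega⟩ ⟨by omega, by omega⟩ (by omega))
      exact mul_pos_of_neg_of_neg
        (sin_half_sub_neg hlt (by linarith [(hwin hr).2, (hx j).1]))
        (sin_half_sub_neg hlt' (by linarith [(hwin hr1).2, (hx j).1]))
    · have hgt' : φ (r + 1) < x j :=
        (not_lt.mp fun h => hempty j ⟨hgt, h⟩).lt_of_ne (hxφ j (r + 1) hr1).symm
      exact mul_pos
        (sin_half_sub_pos hgt (by linarith [(hwin hr).1, (hx j).2]))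
        (sin_half_sub_pos hgt' (by linarith [(hwin hr1).1, (hx j).2]))
  · have h1 : 1 ∈ Icc 1 r := mem_Icc.mpr ⟨le_rfl, by omega⟩
    refine ⟨1, h1, r, mem_erase.mpr ⟨by omega, hr⟩, -1, fun j => ?_⟩
    have hlt : x j < φ r :=
      (not_lt.mp fun h => hempty j ⟨h, hφp ▸ (hx j).2⟩).lt_of_ne (hxφ j r hr)
    rw [neg_one_mul, neg_pos]
    exact mul_neg_of_pos_of_neg
      (sin_half_sub_pos (hx j).1 (hx j).2)
      (sin_half_sub_neg hlt (by linarith [(hwin hr).2, (hx j).1]))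

lemma sum_mul_prod_sin_mul_prod_sin_eq_zero [Fintype ι] {ω : ι → ℝ}
    (hω : ω ∈ momentWeights m φ x) {E : Finset ℕ} (hE : #E + 2 = m) :
    ∑ j, ω j * ((∏ k ∈ Icc 1 m, Real.sin ((x j - φ k) / 2)) *
      ∏ k ∈ E, Real.sin ((x j - φ k) / 2)) = 0 := by
  have hmoment := sum_mul_eval_mul_zpow_eq_zero univ (fun j => (ω j : ℂ) * PsiC m φ (exp (I * x j)))
    (fun j => exp (I * x j)) (fun j _ => exp_ne_zero _) (N := #E + 1)
    (fun k hk hkN => hω k hk (by omega)) (Q := Lagrange.nodal E fun k => exp (I * φ k))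
    (by rw [Lagrange.natDegree_nodal]; omega)
  set μ : ℂ := (2 * I) ^ (#(Icc 1 m) + #E) *
    exp (I * ((∑ k ∈ Icc 1 m, φ k + ∑ k ∈ E, φ k) / 2 : ℝ))
  have hterm : ∀ j ∈ univ, (ω j : ℂ) * PsiC m φ (exp (I * x j)) *
      (Lagrange.nodal E fun k => exp (I * φ k)).eval (exp (I * x j)) *
        exp (I * x j) ^ (-((#E + 1 : ℕ) : ℤ)) =
      μ * ((ω j * ((∏ k ∈ Icc 1 m, Real.sin ((x j - φ k) / 2)) *
        ∏ k ∈ E, Real.sin ((x j - φ k) / 2)) : ℝ) : ℂ) := by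
    intro j _
    rw [Lagrange.eval_nodal, PsiC, mul_assoc, mul_assoc, ← mul_assoc (∏ k ∈ Icc 1 m, _),
      prod_mul_prod_exp_I_mul_sub_mul_zpow _ _ (by rw [Nat.card_Icc]; omega)]
    simp only [μ, ofReal_mul]
    ring
  have hμ : μ ≠ 0 := mul_ne_zero (pow_ne_zero _ (by simp)) (exp_ne_zero _)
  rw [sum_congr rfl hterm, ← mul_sum, ← ofReal_sum, mul_eq_zero, ofReal_eq_zero] at hmoment
  exact hmoment.resolve_left hμ

theorem exists_mem_band_of_mem_momentWeights [Fintype ι] [Nonempty ι]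
    (hφ : StrictMonoOn φ (Set.Icc 1 (m + 1))) (hφp : φ (m + 1) = φ 1 + 2 * Real.pi)
    (hx : ∀ j, x j ∈ Set.Ioo (φ 1) (φ 1 + 2 * Real.pi)) (hxφ : ∀ j, ∀ k ∈ Icc 1 m, x j ≠ φ k)
    {ω : ι → ℝ} (hω : ω ∈ momentWeights m φ x) (hpos : ∀ j, 0 < ω j) {r : ℕ}
    (hr : r ∈ Icc 1 m) : ∃ j, x j ∈ Set.Ioo (φ r) (φ (r + 1)) := by
  by_contra! hempty
  obtain hm | hm := Nat.lt_or_ge m 2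
  · obtain ⟨j⟩ := ‹Nonempty ι›
    obtain ⟨rfl, rfl⟩ : m = 1 ∧ r = 1 := by have := mem_Icc.mp hr; omega
    exact hempty j (hφp ▸ hx j)
  obtain ⟨a, ha, b, hb, σ, hσ⟩ :=
    exists_sign_sin_mul_sin_of_band_empty hφ hφp hx hxφ hm hr hempty
  set E := ((Icc 1 m).erase a).erase b
  have hE : #E + 2 = m := by
    rw [card_erase_of_mem hb, card_erase_of_mem ha, Nat.card_Icc]; omega
  set S : ι → ℝ := fun j => ∏ k ∈ E, Real.sin ((x j - φ k) / 2)
  have hS : ∀ j, S j ≠ 0 := fun j => prod_ne_zero_iff.mpr fun k hk => by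
    have hk' : k ∈ Icc 1 m := mem_of_mem_erase (mem_of_mem_erase hk)
    have hwin := mem_Ico_of_strictMonoOn hφ hφp hk'
    exact sin_half_sub_ne_zero (hxφ j k hk') (by linarith [(hx j).1, hwin.2])
      (by linarith [(hx j).2, hwin.1])
  have hsplit : ∀ j, (∏ k ∈ Icc 1 m, Real.sin ((x j - φ k) / 2)) * S j =
      Real.sin ((x j - φ a) / 2) * Real.sin ((x j - φ b) / 2) * S j ^ 2 := by
    intro j
    rw [← mul_prod_erase _ _ ha, ← mul_prod_erase _ _ hb]
    ring
  have hsum : 0 < σ * ∑ j, ω j * ((∏ k ∈ Icc 1 m, Real.sin ((x j - φ k) / 2)) * S j) := by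
    rw [mul_sum]
    refine sum_pos (fun j _ => ?_) univ_nonempty
    rw [hsplit]
    nlinarith [mul_pos (mul_pos (hpos j) (sq_pos_of_ne_zero (hS j))) (hσ j)]
  rw [sum_mul_prod_sin_mul_prod_sin_eq_zero hω hE, mul_zero] at hsum
  exact hsum.false

lemma exists_mem_band (hφp : φ (m + 1) = φ 1 + 2 * Real.pi) {y : ℝ}
    (hy : y ∈ Set.Ioo (φ 1) (φ 1 + 2 * Real.pi)) (hyφ : ∀ k ∈ Icc 1 m, y ≠ φ k) :
    ∃ r ∈ Icc 1 m, y ∈ Set.Ioo (φ r) (φ (r + 1)) := by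
  obtain ⟨r, hr1, hrm, hle, hlt⟩ :=
    Nat.exists_le_and_lt_succ φ (by omega : 1 ≤ m + 1) hy.1.le (hφp ▸ hy.2)
  have hr : r ∈ Icc 1 m := mem_Icc.mpr ⟨hr1, by omega⟩
  exact ⟨r, hr, hle.lt_of_ne (hyφ r hr).symm, hlt⟩

theorem exists_mem_momentWeights_of_mem_bands [Fintype ι] [DecidableEq ι]
    (hφ : StrictMonoOn φ (Set.Icc 1 (m + 1))) (hφp : φ (m + 1) = φ 1 + 2 * Real.pi) {g : ℕ → ι}
    (hg : ∀ c ∈ Icc 1 m, x (g c) ∈ Set.Ioo (φ c) (φ (c + 1))) :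
    ∃ w ∈ momentWeights m φ x, 0 ≤ w ∧ ∀ c ∈ Icc 1 m, 0 < w (g c) := by
  obtain ⟨w, hw, hmom⟩ := exists_pos_weights_of_mem_bands (ϑ := x ∘ g) hφ hφp hg
  refine ⟨fun i => ∑ c ∈ Icc 1 m with g c = i, w c, fun k hk hkm => ?_,
    fun i => sum_nonneg fun c hc => (hw c (mem_filter.mp hc).1).le,
    fun c hc => sum_pos' (fun d hd => (hw d (mem_filter.mp hd).1).le)
      ⟨c, mem_filter.mpr ⟨hc, rfl⟩, hw c hc⟩⟩
  rw [← hmom k hk hkm, ← sum_fiberwise (Icc 1 m) g]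
  refine sum_congr rfl fun i _ => ?_
  push_cast
  rw [sum_mul, sum_mul]
  refine sum_congr rfl fun c hc => ?_
  rw [Function.comp_apply, (mem_filter.mp hc).2]

theorem exists_pos_mem_momentWeights [Fintype ι] (hφ : StrictMonoOn φ (Set.Icc 1 (m + 1)))
    (hφp : φ (m + 1) = φ 1 + 2 * Real.pi) (hx : ∀ j, x j ∈ Set.Ioo (φ 1) (φ 1 + 2 * Real.pi))
    (hxφ : ∀ j, ∀ k ∈ Icc 1 m, x j ≠ φ k)
    (hband : ∀ r ∈ Icc 1 m, ∃ j, x j ∈ Set.Ioo (φ r) (φ (r + 1))) :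
    ∃ ω ∈ momentWeights m φ x, ∀ j, 0 < ω j := by
  classical
  refine AddSubmonoid.exists_forall_pos_mem _ fun j => ?_
  have : Nonempty ι := ⟨j⟩
  choose! ρ hρ using hband
  obtain ⟨r, hr, hjr⟩ := exists_mem_band hφp (hx j) (hxφ j)
  obtain ⟨w, hw, hw0, hwpos⟩ := exists_mem_momentWeights_of_mem_bands hφ hφp
    (g := Function.update ρ r j) fun c hc => by
      rcases eq_or_ne c r with rfl | hcr
      · simpa using hjr
      · simpa [hcr] using hρ c hc
  exact ⟨w, hw, hw0, by simpa using hwpos r hr⟩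

theorem exists_pos_mem_momentWeights_iff [Fintype ι] [Nonempty ι]
    (hφ : StrictMonoOn φ (Set.Icc 1 (m + 1))) (hφp : φ (m + 1) = φ 1 + 2 * Real.pi)
    (hx : ∀ j, x j ∈ Set.Ioo (φ 1) (φ 1 + 2 * Real.pi)) (hxφ : ∀ j, ∀ k ∈ Icc 1 m, x j ≠ φ k) :
    (∃ ω ∈ momentWeights m φ x, ∀ j, 0 < ω j) ↔
      ∀ r ∈ Icc 1 m, ∃ j, x j ∈ Set.Ioo (φ r) (φ (r + 1)) :=
  ⟨fun ⟨_, hω, hpos⟩ _ hr => exists_mem_band_of_mem_momentWeights hφ hφp hx hxφ hω hpos hr,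
    exists_pos_mem_momentWeights hφ hφp hx hxφ⟩

end Nodes

theorem stmt_17_general (m n : ℕ) (hmn : m < n)
    (θ φ : ℕ → ℝ)
    (hφ : ∀ k, 1 ≤ k → k ≤ m → φ k < φ (k + 1))
    (hφp : φ (m + 1) = φ 1 + 2 * Real.pi)
    (hθ1 : φ 1 < θ 1)
    (hθ : ∀ j, 1 ≤ j → j < n → θ j < θ (j + 1))
    (hθn : θ n < φ 1 + 2 * Real.pi)
    (hθφ : ∀ j k, 1 ≤ j → j ≤ n → 1 ≤ k → k ≤ m → θ j ≠ φ k) :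
    (∃ ω : Fin n → ℝ, (∀ j, 0 < ω j) ∧
      ∀ k : ℕ, 1 ≤ k → k < m →
        ∑ j : Fin n, (ω j : ℂ) *
          PsiC m φ (zetaC θ ((j : ℕ) + 1)) * zetaC θ ((j : ℕ) + 1) ^ (-(k : ℤ)) = 0)
    ↔ (∀ r, 1 ≤ r → r ≤ m → (bandC n θ φ r).Nonempty) := by
  have hφmono : StrictMonoOn φ (Set.Icc 1 (m + 1)) :=
    strictMonoOn_of_lt_succ Set.ordConnected_Icc fun k _ hk hk' => by
      simp only [Order.succ_eq_add_one, Set.mem_Icc] at hk hk' ⊢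
      exact hφ k hk.1 (by omega)
  have hθmono : MonotoneOn θ (Set.Icc 1 n) :=
    monotoneOn_of_le_succ Set.ordConnected_Icc fun j _ hj hj' => by
      simp only [Order.succ_eq_add_one, Set.mem_Icc] at hj hj' ⊢
      exact (hθ j hj.1 (by omega)).le
  have hx (j : Fin n) : θ (j + 1) ∈ Set.Ioo (φ 1) (φ 1 + 2 * Real.pi) :=
    ⟨hθ1.trans_le (hθmono ⟨le_rfl, by omega⟩ ⟨by omega, j.2⟩ (by omega)),
      (hθmono ⟨by omega, j.2⟩ ⟨by omega, le_rfl⟩ (by omega)).trans_lt hθn⟩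
  have hxφ (j : Fin n) (k : ℕ) (hk : k ∈ Icc 1 m) : θ (j + 1) ≠ φ k :=
    hθφ _ _ (by omega) j.2 (mem_Icc.mp hk).1 (mem_Icc.mp hk).2
  have : Nonempty (Fin n) := ⟨⟨0, by omega⟩⟩
  convert exists_pos_mem_momentWeights_iff hφmono hφp hx hxφ using 1
  · exact exists_congr fun ω => and_comm
  · simp [bandC, Finset.Nonempty]

/-- there exist strictly positive weights `ω_1,…,ω_n` with
`∑_j ω_j Ψ_m(ζ_j) ζ_j^{-k} = 0` for every `k = 1,…,m-1`, if and only if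
`{ξ_k}_{k=1}^m` strictly interlaces `{ζ_j}_{j=1}^n` on `𝕊¹` (with the chosen normalization
of arguments, the latter means every band `I_r`, `r = 1,…,m`, is nonempty). -/
theorem stmt_17 (m n : ℕ) (hm : 1 ≤ m) (hmn : m < n)
    (θ φ : ℕ → ℝ)
    (hφ : ∀ k, 1 ≤ k → k ≤ m → φ k < φ (k + 1))
    (hφp : φ (m + 1) = φ 1 + 2 * Real.pi)
    (hθ1 : φ 1 < θ 1)
    (hθ : ∀ j, 1 ≤ j → j < n → θ j < θ (j + 1))
    (hθn : θ n < φ 1 + 2 * Real.pi)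
    (hθφ : ∀ j k, 1 ≤ j → j ≤ n → 1 ≤ k → k ≤ m → θ j ≠ φ k) :
    (∃ ω : Fin n → ℝ, (∀ j, 0 < ω j) ∧
      ∀ k : ℕ, 1 ≤ k → k < m →
        ∑ j : Fin n, (ω j : ℂ) *
          PsiC m φ (zetaC θ ((j : ℕ) + 1)) * zetaC θ ((j : ℕ) + 1) ^ (-(k : ℤ)) = 0)
    ↔ (∀ r, 1 ≤ r → r ≤ m → (bandC n θ φ r).Nonempty) :=
  stmt_17_general m n hmn θ φ hφ hφp hθ1 hθ hθn hθφ
end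

section
/- Assume {ξ_k}_{k=1}^m strictly interlaces {ζ_j}_{j=1}^n on 𝕊¹. Then the set W_{≥0} = { ω ∈ ℝ^n : ∑_{j=1}^n ω_j Ψ_m(ζ_j) ζ_j^{−k} = 0 for k = 1,…,m−1, and ω_j ≥ 0 for all j } coincides with the set of all finite nonnegative linear combinations of the circuit vectors ω^{(J)} with J ∈ 𝔍₊, i.e. W_{≥0} = cone{ ω^{(J)} : J ∈ 𝔍₊ }. -/
open Complex Finset Polynomial

namespace Stmt18Aux

/-- Context bundling all standing hypotheses. -/
structure Ctx (m n : ℕ) (θ φ : ℕ → ℝ) : Prop where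
  hm : 1 ≤ m
  hmn : m < n
  hφ : ∀ k, 1 ≤ k → k ≤ m → φ k < φ (k + 1)
  hφp : φ (m + 1) = φ 1 + 2 * Real.pi
  hθ1 : φ 1 < θ 1
  hθ : ∀ j, 1 ≤ j → j < n → θ j < θ (j + 1)
  hθn : θ n < φ 1 + 2 * Real.pi
  hθφ : ∀ j k, 1 ≤ j → j ≤ n → 1 ≤ k → k ≤ m → θ j ≠ φ k

variable {m n : ℕ} {θ φ : ℕ → ℝ}

lemma Ctx.phi_mono (h : Ctx m n θ φ) : ∀ k l, 1 ≤ k → k ≤ l → l ≤ m + 1 → φ k ≤ φ l := by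
  intro k l hk hkl hl
  induction l with
  | zero => omega
  | succ l ih =>
    rcases Nat.eq_or_lt_of_le hkl with rfl | hlt
    · exact le_rfl
    · have h1 : k ≤ l := by omega
      have h2 : l ≤ m + 1 := by omega
      have h3 : 1 ≤ l := by omega
      have h4 : l ≤ m := by omega
      exact (ih h1 h2).trans (h.hφ l h3 h4).le

lemma Ctx.phi_lt (h : Ctx m n θ φ) : ∀ k l, 1 ≤ k → k < l → l ≤ m + 1 → φ k < φ l := by
  intro k l hk hkl hl
  have h1 : φ k ≤ φ (l - 1) := h.phi_mono k (l-1) hk (by omega) (by omega)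
  have h2 : φ (l-1) < φ (l-1+1) := h.hφ (l-1) (by omega) (by omega)
  have : l - 1 + 1 = l := by omega
  rw [this] at h2
  exact lt_of_le_of_lt h1 h2

lemma Ctx.theta_mono (h : Ctx m n θ φ) : ∀ k l, 1 ≤ k → k ≤ l → l ≤ n → θ k ≤ θ l := by
  intro k l hk hkl hl
  induction l with
  | zero => omega
  | succ l ih =>
    rcases Nat.eq_or_lt_of_le hkl with rfl | hlt
    · exact le_rfl
    · have h1 : k ≤ l := by omega
      exact (ih h1 (by omega)).trans (h.hθ l (by omega) (by omega)).le

lemma Ctx.theta_lt (h : Ctx m n θ φ) : ∀ k l, 1 ≤ k → k < l → l ≤ n → θ k < θ l := by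
  intro k l hk hkl hl
  have h1 : θ k ≤ θ (l - 1) := h.theta_mono k (l-1) hk (by omega) (by omega)
  have h2 : θ (l-1) < θ (l-1+1) := h.hθ (l-1) (by omega) (by omega)
  have : l - 1 + 1 = l := by omega
  rw [this] at h2
  exact lt_of_le_of_lt h1 h2

/-- bounds on θ for `Fin n` indices -/
lemma Ctx.theta_gt_phi1 (h : Ctx m n θ φ) (j : Fin n) : φ 1 < θ ((j:ℕ)+1) :=
  lt_of_lt_of_le h.hθ1 (h.theta_mono 1 ((j:ℕ)+1) le_rfl (by omega) (by omega))

lemma Ctx.theta_lt_wrap (h : Ctx m n θ φ) (j : Fin n) : θ ((j:ℕ)+1) < φ 1 + 2 * Real.pi :=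
  lt_of_le_of_lt (h.theta_mono ((j:ℕ)+1) n (by omega) (by omega) le_rfl) h.hθn


/-- half-angle exponential -/
noncomputable def w (θ : ℕ → ℝ) (j : ℕ) : ℂ := Complex.exp (Complex.I * ((θ j / 2 : ℝ) : ℂ))

/-- real product of sines w.r.t. the ξ's -/
noncomputable def pR (m : ℕ) (θ φ : ℕ → ℝ) (j : ℕ) : ℝ :=
  ∏ k ∈ Finset.Icc 1 m, Real.sin ((θ j - φ k) / 2)

lemma exp_sub_exp (a b : ℝ) :
    Complex.exp (Complex.I * (a:ℂ)) - Complex.exp (Complex.I * (b:ℂ)) =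
      2 * Complex.I * Complex.exp (Complex.I * (((a+b)/2 : ℝ) : ℂ)) *
        ((Real.sin ((a-b)/2) : ℝ) : ℂ) := by
  have hsin : ((Real.sin ((a-b)/2) : ℝ) : ℂ) = Complex.sin (((a-b)/2 : ℝ) : ℂ) :=
    (Complex.ofReal_sin _).symm ▸ rfl
  rw [hsin, Complex.sin]
  have e1 : Complex.I * (a:ℂ) = Complex.I * ((a/2:ℝ):ℂ) + Complex.I * ((a/2:ℝ):ℂ) := by
    push_cast; ring
  have e2 : Complex.I * (b:ℂ) = Complex.I * ((b/2:ℝ):ℂ) + Complex.I * ((b/2:ℝ):ℂ) := by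
    push_cast; ring
  have e3 : Complex.I * (((a+b)/2 : ℝ):ℂ) = Complex.I * ((a/2:ℝ):ℂ) + Complex.I * ((b/2:ℝ):ℂ) := by
    push_cast; ring
  have e4 : -(((a-b)/2:ℝ):ℂ) * Complex.I = Complex.I * ((b/2:ℝ):ℂ) + -(Complex.I * ((a/2:ℝ):ℂ)) := by
    push_cast; ring
  have e5 : (((a-b)/2:ℝ):ℂ) * Complex.I = Complex.I * ((a/2:ℝ):ℂ) + -(Complex.I * ((b/2:ℝ):ℂ)) := by
    push_cast; ring
  rw [e1, e2, e3, e4, e5, Complex.exp_add, Complex.exp_add, Complex.exp_add,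
    Complex.exp_add, Complex.exp_add, Complex.exp_neg, Complex.exp_neg]
  set A := Complex.exp (Complex.I * ((a/2:ℝ):ℂ))
  set B := Complex.exp (Complex.I * ((b/2:ℝ):ℂ))
  have hA : A ≠ 0 := Complex.exp_ne_zero _
  have hB : B ≠ 0 := Complex.exp_ne_zero _
  field_simp
  ring_nf
  simp [Complex.I_sq]
  try ring

lemma zeta_eq_w_sq (θ : ℕ → ℝ) (j : ℕ) : zetaC θ j = (w θ j) ^ 2 := by
  rw [zetaC, w, sq, ← Complex.exp_add]
  congr 1
  push_cast
  ring



/-- the band index of a node with angle `x` -/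
noncomputable def bandOf (m : ℕ) (φ : ℕ → ℝ) (x : ℝ) : ℕ :=
  Nat.findGreatest (fun k => 1 ≤ k ∧ φ k < x) m

lemma Ctx.bandOf_one_le (h : Ctx m n θ φ) (j : Fin n) :
    1 ≤ bandOf m φ (θ ((j:ℕ)+1)) :=
  Nat.le_findGreatest h.hm ⟨le_rfl, h.theta_gt_phi1 j⟩

lemma bandOf_le_m (m : ℕ) (φ : ℕ → ℝ) (x : ℝ) : bandOf m φ x ≤ m :=
  Nat.findGreatest_le m

lemma Ctx.bandOf_lt (h : Ctx m n θ φ) (j : Fin n) :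
    φ (bandOf m φ (θ ((j:ℕ)+1))) < θ ((j:ℕ)+1) :=
  (Nat.findGreatest_spec (P := fun k => 1 ≤ k ∧ φ k < θ ((j:ℕ)+1)) h.hm
    ⟨le_rfl, h.theta_gt_phi1 j⟩).2

lemma Ctx.bandOf_gt (h : Ctx m n θ φ) (j : Fin n) :
    θ ((j:ℕ)+1) < φ (bandOf m φ (θ ((j:ℕ)+1)) + 1) := by
  set r := bandOf m φ (θ ((j:ℕ)+1)) with hr
  have hr1 : 1 ≤ r := h.bandOf_one_le j
  have hrm : r ≤ m := bandOf_le_m m φ _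
  rcases Nat.eq_or_lt_of_le hrm with hEq | hlt
  · rw [hEq, h.hφp]
    exact h.theta_lt_wrap j
  · have hfg : bandOf m φ (θ ((j:ℕ)+1)) < r + 1 := by omega
    have hng : ¬ (1 ≤ r + 1 ∧ φ (r+1) < θ ((j:ℕ)+1)) :=
      Nat.findGreatest_is_greatest (P := fun k => 1 ≤ k ∧ φ k < θ ((j:ℕ)+1)) (n := m)
        (k := r+1) hfg (by omega)
    have hle : θ ((j:ℕ)+1) ≤ φ (r+1) := by
      by_contra hcon
      exact hng ⟨by omega, by linarith⟩
    have hne : θ ((j:ℕ)+1) ≠ φ (r+1) :=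
      h.hθφ ((j:ℕ)+1) (r+1) (by omega) (by omega) (by omega) (by omega)
    exact lt_of_le_of_ne hle hne

lemma Ctx.mem_band_bandOf (h : Ctx m n θ φ) (j : Fin n) :
    j ∈ bandC n θ φ (bandOf m φ (θ ((j:ℕ)+1))) := by
  simp only [bandC, Finset.mem_filter, Finset.mem_univ, true_and]
  exact ⟨h.bandOf_lt j, h.bandOf_gt j⟩

lemma Ctx.bandOf_eq_of_mem (h : Ctx m n θ φ) (j : Fin n) {s : ℕ} (hs1 : 1 ≤ s) (hsm : s ≤ m)
    (hmem : j ∈ bandC n θ φ s) : bandOf m φ (θ ((j:ℕ)+1)) = s := by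
  simp only [bandC, Finset.mem_filter, Finset.mem_univ, true_and] at hmem
  set r := bandOf m φ (θ ((j:ℕ)+1)) with hr
  have hr1 : 1 ≤ r := h.bandOf_one_le j
  have hrm : r ≤ m := bandOf_le_m m φ _
  have hsr : s ≤ r := Nat.le_findGreatest hsm ⟨hs1, hmem.1⟩
  rcases Nat.eq_or_lt_of_le hsr with hEq | hlt
  · omega
  · exfalso
    have h1 : φ (s+1) ≤ φ r := h.phi_mono (s+1) r (by omega) (by omega) (by omega)
    have := h.bandOf_lt j
    rw [← hr] at this
    linarith [hmem.2]


lemma Ctx.sin_phi_pos (h : Ctx m n θ φ) (j : Fin n) {k : ℕ} (hk1 : 1 ≤ k)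
    (hk : k ≤ bandOf m φ (θ ((j:ℕ)+1))) : 0 < Real.sin ((θ ((j:ℕ)+1) - φ k) / 2) := by
  have hrm : bandOf m φ (θ ((j:ℕ)+1)) ≤ m := bandOf_le_m m φ _
  have h1 : φ k ≤ φ (bandOf m φ (θ ((j:ℕ)+1))) := h.phi_mono k _ hk1 hk (by omega)
  have h2 : φ (bandOf m φ (θ ((j:ℕ)+1))) < θ ((j:ℕ)+1) := h.bandOf_lt j
  have h3 : φ 1 ≤ φ k := h.phi_mono 1 k le_rfl hk1 (by omega)
  have h4 := h.theta_lt_wrap j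
  apply Real.sin_pos_of_pos_of_lt_pi
  · linarith
  · have hpi := Real.pi_pos
    linarith

lemma Ctx.sin_phi_neg (h : Ctx m n θ φ) (j : Fin n) {k : ℕ}
    (hk : bandOf m φ (θ ((j:ℕ)+1)) < k) (hkm : k ≤ m) :
    Real.sin ((θ ((j:ℕ)+1) - φ k) / 2) < 0 := by
  have h1 : φ (bandOf m φ (θ ((j:ℕ)+1)) + 1) ≤ φ k :=
    h.phi_mono _ k (by omega) (by omega) (by omega)
  have h2 : θ ((j:ℕ)+1) < φ (bandOf m φ (θ ((j:ℕ)+1)) + 1) := h.bandOf_gt j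
  have h3 : φ k < φ (m+1) := h.phi_lt k (m+1) (by omega) (by omega) le_rfl
  have h4 := h.theta_gt_phi1 j
  have h5 : φ (m+1) = φ 1 + 2 * Real.pi := h.hφp
  have hpos : 0 < Real.sin (-((θ ((j:ℕ)+1) - φ k) / 2)) := by
    apply Real.sin_pos_of_pos_of_lt_pi
    · linarith
    · have hpi := Real.pi_pos
      linarith
  rw [Real.sin_neg] at hpos
  linarith

lemma Ctx.sin_theta_pos (h : Ctx m n θ φ) {j j' : Fin n}
    (hlt : θ ((j':ℕ)+1) < θ ((j:ℕ)+1)) :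
    0 < Real.sin ((θ ((j:ℕ)+1) - θ ((j':ℕ)+1)) / 2) := by
  have h1 := h.theta_gt_phi1 j'
  have h2 := h.theta_lt_wrap j
  apply Real.sin_pos_of_pos_of_lt_pi
  · linarith
  · have hpi := Real.pi_pos
    linarith

lemma Ctx.sin_theta_neg (h : Ctx m n θ φ) {j j' : Fin n}
    (hlt : θ ((j:ℕ)+1) < θ ((j':ℕ)+1)) :
    Real.sin ((θ ((j:ℕ)+1) - θ ((j':ℕ)+1)) / 2) < 0 := by
  have hpos := h.sin_theta_pos (j := j') (j' := j) hlt
  have : Real.sin (-((θ ((j:ℕ)+1) - θ ((j':ℕ)+1)) / 2)) > 0 := by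
    rw [show -((θ ((j:ℕ)+1) - θ ((j':ℕ)+1)) / 2) = (θ ((j':ℕ)+1) - θ ((j:ℕ)+1)) / 2 by ring]
    exact hpos
  rw [Real.sin_neg] at this
  linarith

lemma Ctx.theta_injective (h : Ctx m n θ φ) {j j' : Fin n} (hne : j ≠ j') :
    θ ((j:ℕ)+1) ≠ θ ((j':ℕ)+1) := by
  rcases lt_or_gt_of_ne (Fin.val_ne_of_ne hne) with hlt | hlt
  · exact ne_of_lt (h.theta_lt ((j:ℕ)+1) ((j':ℕ)+1) (by omega) (by omega) (by omega))
  · exact ne_of_gt (h.theta_lt ((j':ℕ)+1) ((j:ℕ)+1) (by omega) (by omega) (by omega))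

lemma Ctx.sin_theta_ne (h : Ctx m n θ φ) {j j' : Fin n} (hne : j ≠ j') :
    Real.sin ((θ ((j:ℕ)+1) - θ ((j':ℕ)+1)) / 2) ≠ 0 := by
  rcases lt_or_gt_of_ne (h.theta_injective hne) with hlt | hlt
  · exact ne_of_lt (h.sin_theta_neg hlt)
  · exact ne_of_gt (h.sin_theta_pos hlt)

lemma Ctx.pR_ne_zero (h : Ctx m n θ φ) (j : Fin n) : pR m θ φ ((j:ℕ)+1) ≠ 0 := by
  rw [pR]
  apply Finset.prod_ne_zero_iff.mpr
  intro k hk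
  simp only [Finset.mem_Icc] at hk
  rcases le_or_gt k (bandOf m φ (θ ((j:ℕ)+1))) with hle | hgt
  · exact ne_of_gt (h.sin_phi_pos j hk.1 hle)
  · exact ne_of_lt (h.sin_phi_neg j hgt hk.2)

lemma Ctx.z_injOn (h : Ctx m n θ φ) :
    Set.InjOn (fun j : Fin n => (w θ ((j:ℕ)+1))^2) Set.univ := by
  intro j _ j' _ hEq
  by_contra hne
  have hz : zetaC θ ((j:ℕ)+1) = zetaC θ ((j':ℕ)+1) := by
    rw [zeta_eq_w_sq, zeta_eq_w_sq]; exact hEq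
  have hfac := exp_sub_exp (θ ((j:ℕ)+1)) (θ ((j':ℕ)+1))
  rw [show Complex.exp (Complex.I * ((θ ((j:ℕ)+1)):ℂ)) = zetaC θ ((j:ℕ)+1) from rfl,
    show Complex.exp (Complex.I * ((θ ((j':ℕ)+1)):ℂ)) = zetaC θ ((j':ℕ)+1) from rfl,
    hz, sub_self] at hfac
  have hsin := h.sin_theta_ne hne
  have h2 : (2 : ℂ) * Complex.I ≠ 0 := by simp [Complex.I_ne_zero]
  have h3 : Complex.exp (Complex.I * (((θ ((j:ℕ)+1) + θ ((j':ℕ)+1))/2 : ℝ) : ℂ)) ≠ 0 :=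
    Complex.exp_ne_zero _
  have h4 : ((Real.sin ((θ ((j:ℕ)+1) - θ ((j':ℕ)+1))/2) : ℝ) : ℂ) ≠ 0 := by
    exact_mod_cast hsin
  exact (mul_ne_zero (mul_ne_zero h2 h3) h4) hfac.symm


open Lagrange in
lemma lagrange_power_sum {F : Type*} [Field F] {ι : Type*} [DecidableEq ι]
    (s : Finset ι) (v : ι → F) (hv : Set.InjOn v s) {l : ℕ} (hl : l + 2 ≤ s.card) :
    ∑ i ∈ s, (v i)^l * nodalWeight s v i = 0 := by
  have hcard : 2 ≤ s.card := by omega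
  have hXl : (X ^ l : F[X]) = interpolate s v (fun i => (v i)^l) := by
    have hdeg : (X ^ l : F[X]).degree < s.card := by
      rw [Polynomial.degree_X_pow]
      exact_mod_cast (by omega : l < s.card)
    have := eq_interpolate (f := (X ^ l : F[X])) hv hdeg
    simpa using this
  have hcoeff := congrArg (fun p : F[X] => p.coeff (s.card - 1)) hXl
  simp only [Polynomial.coeff_X_pow] at hcoeff
  rw [if_neg (by omega)] at hcoeff
  rw [interpolate_apply, Polynomial.finset_sum_coeff] at hcoeff
  have hbasis : ∀ i ∈ s, (Polynomial.C ((v i)^l) * Lagrange.basis s v i).coeff (s.card - 1)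
      = (v i)^l * nodalWeight s v i := by
    intro i hi
    rw [Polynomial.coeff_C_mul]
    congr 1
    have hb : Lagrange.basis s v i = Polynomial.C (nodalWeight s v i) * nodal (s.erase i) v := by
      rw [basis_eq_prod_sub_inv_mul_nodal_div hi, nodal_erase_eq_nodal_div hi]
    rw [hb, Polynomial.coeff_C_mul]
    have hmonic : (nodal (s.erase i) v).Monic := nodal_monic
    have hdeg : (nodal (s.erase i) v).natDegree = s.card - 1 := by
      rw [natDegree_nodal, Finset.card_erase_of_mem hi]
    rw [← hdeg, hmonic.coeff_natDegree, mul_one]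
  rw [Finset.sum_congr rfl hbasis] at hcoeff
  exact hcoeff.symm


/-- product of half-angle exponentials at the ξ's -/
noncomputable def Ehalf (m : ℕ) (φ : ℕ → ℝ) : ℂ :=
  ∏ k ∈ Finset.Icc 1 m, Complex.exp (Complex.I * ((φ k / 2 : ℝ) : ℂ))

lemma Ehalf_ne_zero (m : ℕ) (φ : ℕ → ℝ) : Ehalf m φ ≠ 0 :=
  Finset.prod_ne_zero_iff.mpr (fun _ _ => Complex.exp_ne_zero _)

lemma Psi_eval (m : ℕ) (θ φ : ℕ → ℝ) (x : ℕ) :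
    PsiC m φ (zetaC θ x) =
      (2*Complex.I)^m * (w θ x)^m * Ehalf m φ * ((pR m θ φ x : ℝ) : ℂ) := by
  rw [PsiC, pR, Complex.ofReal_prod, Ehalf]
  have hfac : ∀ k ∈ Finset.Icc 1 m,
      zetaC θ x - Complex.exp (Complex.I * ((φ k : ℝ):ℂ)) =
      (2*Complex.I) * w θ x * Complex.exp (Complex.I * ((φ k / 2 : ℝ):ℂ)) *
        ((Real.sin ((θ x - φ k)/2) : ℝ) : ℂ) := by
    intro k _
    rw [zetaC]
    rw [exp_sub_exp (θ x) (φ k)]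
    have : Complex.exp (Complex.I * (((θ x + φ k)/2 : ℝ):ℂ)) =
        w θ x * Complex.exp (Complex.I * ((φ k / 2 : ℝ):ℂ)) := by
      rw [w, ← Complex.exp_add]
      congr 1
      push_cast
      ring
    rw [this]
    ring
  rw [Finset.prod_congr rfl hfac]
  rw [show (fun k => (2*Complex.I) * w θ x * Complex.exp (Complex.I * ((φ k / 2 : ℝ):ℂ)) *
        ((Real.sin ((θ x - φ k)/2) : ℝ) : ℂ)) = (fun k => ((2*Complex.I) * w θ x) *
        (Complex.exp (Complex.I * ((φ k / 2 : ℝ):ℂ)) *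
        ((Real.sin ((θ x - φ k)/2) : ℝ) : ℂ))) from funext (fun k => by ring)]
  rw [Finset.prod_mul_distrib, Finset.prod_const, Finset.prod_mul_distrib,
    Nat.card_Icc]
  simp only [Nat.add_sub_cancel]
  ring

lemma w_ne_zero (θ : ℕ → ℝ) (x : ℕ) : w θ x ≠ 0 := Complex.exp_ne_zero _

/-- the `d`-vector of `ω` -/
noncomputable def dvec (m : ℕ) (θ φ : ℕ → ℝ) {n : ℕ} (ω : Fin n → ℝ) (j : Fin n) : ℂ :=
  ((ω j * pR m θ φ ((j:ℕ)+1) : ℝ) : ℂ) * (w θ ((j:ℕ)+1)) ^ ((2:ℤ) - m)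

lemma zpow_regroup {u : ℂ} (hu : u ≠ 0) {m k : ℕ} (hk1 : 1 ≤ k) (hk : k < m) :
    u^m * (u^2)^(-(k:ℤ)) = u^((2:ℤ)-m) * (u^2)^((m-1-k : ℕ)) := by
  rw [pow_two, mul_zpow, mul_pow,
    ← zpow_natCast u m, ← zpow_natCast u (m-1-k),
    ← zpow_add₀ hu, ← zpow_add₀ hu, ← zpow_add₀ hu, ← zpow_add₀ hu]
  congr 1
  have : ((m - 1 - k : ℕ) : ℤ) = (m : ℤ) - 1 - k := by omega
  rw [this]
  ring

lemma term_eq (m : ℕ) (θ φ : ℕ → ℝ) (x : ℕ) {k : ℕ} (hk1 : 1 ≤ k) (hk : k < m) (c : ℝ) :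
    (c:ℂ) * PsiC m φ (zetaC θ x) * zetaC θ x ^ (-(k:ℤ)) =
      ((2*Complex.I)^m * Ehalf m φ) *
        (((c * pR m θ φ x : ℝ):ℂ) * (w θ x)^((2:ℤ)-m) * ((w θ x)^2)^((m-1-k : ℕ))) := by
  rw [Psi_eval, zeta_eq_w_sq]
  have := zpow_regroup (w_ne_zero θ x) hk1 hk
  push_cast
  rw [show (c:ℂ) * ((2*Complex.I)^m * (w θ x)^m * Ehalf m φ * ((pR m θ φ x : ℝ):ℂ)) *
      ((w θ x)^2) ^ (-(k:ℤ)) = ((2*Complex.I)^m * Ehalf m φ) *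
      (((c:ℂ) * ((pR m θ φ x : ℝ):ℂ)) * ((w θ x)^m * ((w θ x)^2) ^ (-(k:ℤ)))) from by ring,
    this]
  ring

lemma Ctx.constraint_iff (h : Ctx m n θ φ) (ω : Fin n → ℝ) :
    (∀ k : ℕ, 1 ≤ k → k < m →
        ∑ j : Fin n, (ω j : ℂ) * PsiC m φ (zetaC θ ((j:ℕ)+1)) *
          zetaC θ ((j:ℕ)+1) ^ (-(k:ℤ)) = 0) ↔
    (∀ l : ℕ, l + 2 ≤ m →
        ∑ j : Fin n, dvec m θ φ ω j * ((w θ ((j:ℕ)+1))^2)^l = 0) := by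
  have hC : ((2*Complex.I)^m * Ehalf m φ) ≠ 0 := by
    apply mul_ne_zero
    · apply pow_ne_zero; simp [Complex.I_ne_zero]
    · exact Ehalf_ne_zero m φ
  constructor
  · intro hcon l hl
    have hk1 : 1 ≤ m - 1 - l := by omega
    have hk : m - 1 - l < m := by omega
    have := hcon (m - 1 - l) hk1 hk
    rw [Finset.sum_congr rfl (fun (j : Fin n) _ => term_eq m θ φ ((j:ℕ)+1) hk1 hk (ω j)),
      ← Finset.mul_sum] at this
    rcases mul_eq_zero.mp this with hbad | hgood
    · exact absurd hbad hC
    · have hl' : m - 1 - (m - 1 - l) = l := by omega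
      rw [hl'] at hgood
      simpa [dvec, mul_assoc] using hgood
  · intro hcon k hk1 hk
    have := hcon (m - 1 - k) (by omega)
    rw [Finset.sum_congr rfl (fun (j : Fin n) _ => term_eq m θ φ ((j:ℕ)+1) hk1 hk (ω j)),
      ← Finset.mul_sum]
    have hgood := hcon (m - 1 - k) (by omega)
    rw [mul_eq_zero]
    right
    simpa [dvec, mul_assoc] using hgood


lemma sum_d_poly {m n : ℕ} {θ : ℕ → ℝ} {d : Fin n → ℂ} {z : Fin n → ℂ}
    (hd : ∀ l : ℕ, l + 2 ≤ m → ∑ j : Fin n, d j * (z j)^l = 0)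
    (q : Polynomial ℂ) (hq : q.natDegree + 2 ≤ m) :
    ∑ j : Fin n, d j * q.eval (z j) = 0 := by
  have expand : ∀ j : Fin n, q.eval (z j) =
      ∑ l ∈ Finset.range (q.natDegree + 1), q.coeff l * (z j)^l := by
    intro j
    exact Polynomial.eval_eq_sum_range _
  simp_rw [expand, Finset.mul_sum]
  rw [Finset.sum_comm]
  apply Finset.sum_eq_zero
  intro l hl
  simp only [Finset.mem_range] at hl
  have hl2 : l + 2 ≤ m := by omega
  calc ∑ j : Fin n, d j * (q.coeff l * (z j)^l)
      = q.coeff l * ∑ j : Fin n, d j * (z j)^l := by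
        rw [Finset.mul_sum]; exact Finset.sum_congr rfl (fun j _ => by ring)
    _ = 0 := by rw [hd l hl2, mul_zero]

lemma Ctx.sin_factor (h : Ctx m n θ φ) (j j' : Fin n) :
    ((Real.sin ((θ ((j:ℕ)+1) - θ ((j':ℕ)+1)) / 2) : ℝ) : ℂ) =
      ((w θ ((j:ℕ)+1))^2 - (w θ ((j':ℕ)+1))^2) *
        (2 * Complex.I * w θ ((j:ℕ)+1) * w θ ((j':ℕ)+1))⁻¹ := by
  have hfac := exp_sub_exp (θ ((j:ℕ)+1)) (θ ((j':ℕ)+1))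
  have hw : Complex.exp (Complex.I * (((θ ((j:ℕ)+1) + θ ((j':ℕ)+1))/2 : ℝ) : ℂ)) =
      w θ ((j:ℕ)+1) * w θ ((j':ℕ)+1) := by
    rw [w, w, ← Complex.exp_add]
    congr 1
    push_cast
    ring
  rw [hw] at hfac
  have hz : Complex.exp (Complex.I * ((θ ((j:ℕ)+1) : ℝ):ℂ)) = (w θ ((j:ℕ)+1))^2 :=
    zeta_eq_w_sq θ _
  have hz' : Complex.exp (Complex.I * ((θ ((j':ℕ)+1) : ℝ):ℂ)) = (w θ ((j':ℕ)+1))^2 :=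
    zeta_eq_w_sq θ _
  rw [hz, hz'] at hfac
  have hne : (2 * Complex.I * w θ ((j:ℕ)+1) * w θ ((j':ℕ)+1)) ≠ 0 := by
    apply mul_ne_zero (mul_ne_zero _ (w_ne_zero θ _)) (w_ne_zero θ _)
    simp [Complex.I_ne_zero]
  rw [eq_mul_inv_iff_mul_eq₀ hne, hfac]
  ring

lemma Ctx.circuit_term (h : Ctx m n θ φ) {J : Finset (Fin n)} (hJ : J.card = m)
    {j : Fin n} (hj : j ∈ J) :
    dvec m θ φ (circuitC n m θ φ J) j =
      (2*Complex.I)^(m-1) * (∏ j' ∈ J, w θ ((j':ℕ)+1)) *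
        Lagrange.nodalWeight J (fun i : Fin n => (w θ ((i:ℕ)+1))^2) j := by
  classical
  have hp : pR m θ φ ((j:ℕ)+1) ≠ 0 := h.pR_ne_zero j
  set S : ℝ := ∏ j' ∈ J.erase j, Real.sin ((θ ((j:ℕ)+1) - θ ((j':ℕ)+1)) / 2) with hSdef
  have hcirc : circuitC n m θ φ J j = 1 / (pR m θ φ ((j:ℕ)+1) * S) := by
    rw [circuitC, if_pos hj, pR]
  have hstep : (circuitC n m θ φ J j * pR m θ φ ((j:ℕ)+1) : ℝ) = S⁻¹ := by
    rw [hcirc]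
    rw [div_mul_eq_mul_div, one_mul, ← div_div, div_self hp, one_div]
  rw [dvec, hstep]
  have hScast : ((S⁻¹ : ℝ) : ℂ) =
      ∏ j' ∈ J.erase j, (((Real.sin ((θ ((j:ℕ)+1) - θ ((j':ℕ)+1)) / 2) : ℝ) : ℂ))⁻¹ := by
    rw [hSdef]
    push_cast
    rw [← Finset.prod_inv_distrib]
  rw [hScast]
  have hfac : ∀ j' ∈ J.erase j,
      (((Real.sin ((θ ((j:ℕ)+1) - θ ((j':ℕ)+1)) / 2) : ℝ) : ℂ))⁻¹ =
      ((w θ ((j:ℕ)+1))^2 - (w θ ((j':ℕ)+1))^2)⁻¹ *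
        (2 * Complex.I * w θ ((j:ℕ)+1) * w θ ((j':ℕ)+1)) := by
    intro j' _
    rw [h.sin_factor j j', mul_inv, inv_inv]
  rw [Finset.prod_congr rfl hfac, Finset.prod_mul_distrib]
  have hconst : ∏ j' ∈ J.erase j, (2 * Complex.I * w θ ((j:ℕ)+1) * w θ ((j':ℕ)+1)) =
      (2*Complex.I)^(m-1) * (w θ ((j:ℕ)+1))^(m-1) * ∏ j' ∈ J.erase j, w θ ((j':ℕ)+1) := by
    rw [show (fun j' : Fin n => 2 * Complex.I * w θ ((j:ℕ)+1) * w θ ((j':ℕ)+1)) =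
      (fun j' : Fin n => (2 * Complex.I * w θ ((j:ℕ)+1)) * w θ ((j':ℕ)+1)) from
        funext (fun _ => by ring), Finset.prod_mul_distrib, Finset.prod_const,
      Finset.card_erase_of_mem hj, hJ, mul_pow]
  rw [hconst]
  have hw := w_ne_zero θ ((j:ℕ)+1)
  have hzpow : (w θ ((j:ℕ)+1))^(m-1) * (w θ ((j:ℕ)+1))^((2:ℤ)-m) = w θ ((j:ℕ)+1) := by
    rw [← zpow_natCast (w θ ((j:ℕ)+1)) (m-1), ← zpow_add₀ hw]
    have : ((m-1 : ℕ) : ℤ) + ((2:ℤ) - m) = 1 := by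
      have hm := h.hm
      omega
    rw [this, zpow_one]
  have hmul : w θ ((j:ℕ)+1) * ∏ j' ∈ J.erase j, w θ ((j':ℕ)+1) = ∏ j' ∈ J, w θ ((j':ℕ)+1) :=
    Finset.mul_prod_erase J (fun j' : Fin n => w θ ((j':ℕ)+1)) hj
  rw [Lagrange.nodalWeight]
  calc (∏ j' ∈ J.erase j, ((w θ ((j:ℕ)+1))^2 - (w θ ((j':ℕ)+1))^2)⁻¹) *
        ((2*Complex.I)^(m-1) * (w θ ((j:ℕ)+1))^(m-1) * ∏ j' ∈ J.erase j, w θ ((j':ℕ)+1)) *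
        (w θ ((j:ℕ)+1))^((2:ℤ)-m)
      = (2*Complex.I)^(m-1) *
          (((w θ ((j:ℕ)+1))^(m-1) * (w θ ((j:ℕ)+1))^((2:ℤ)-m)) *
            ∏ j' ∈ J.erase j, w θ ((j':ℕ)+1)) *
          ∏ j' ∈ J.erase j, ((w θ ((j:ℕ)+1))^2 - (w θ ((j':ℕ)+1))^2)⁻¹ := by ring
    _ = (2*Complex.I)^(m-1) * (∏ j' ∈ J, w θ ((j':ℕ)+1)) *
          ∏ j' ∈ J.erase j, ((w θ ((j:ℕ)+1))^2 - (w θ ((j':ℕ)+1))^2)⁻¹ := by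
        rw [hzpow, hmul]

lemma Ctx.circuit_kernel (h : Ctx m n θ φ) {J : Finset (Fin n)} (hJ : J.card = m)
    (l : ℕ) (hl : l + 2 ≤ m) :
    ∑ j : Fin n, dvec m θ φ (circuitC n m θ φ J) j * ((w θ ((j:ℕ)+1))^2)^l = 0 := by
  classical
  have hzero : ∀ j ∈ Finset.univ, j ∉ J →
      dvec m θ φ (circuitC n m θ φ J) j * ((w θ ((j:ℕ)+1))^2)^l = 0 := by
    intro j _ hj
    rw [dvec, circuitC]
    simp [hj]
  rw [← Finset.sum_subset (Finset.subset_univ J) hzero]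
  rw [Finset.sum_congr rfl (fun j hj => by rw [h.circuit_term hJ hj])]
  have hInj : Set.InjOn (fun i : Fin n => (w θ ((i:ℕ)+1))^2) J :=
    fun a _ b _ hab => h.z_injOn (Set.mem_univ a) (Set.mem_univ b) hab
  have hlag := lagrange_power_sum J (fun i : Fin n => (w θ ((i:ℕ)+1))^2) hInj
    (l := l) (by omega)
  calc ∑ j ∈ J, (2*Complex.I)^(m-1) * (∏ j' ∈ J, w θ ((j':ℕ)+1)) *
        Lagrange.nodalWeight J (fun i : Fin n => (w θ ((i:ℕ)+1))^2) j * ((w θ ((j:ℕ)+1))^2)^l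
      = (2*Complex.I)^(m-1) * (∏ j' ∈ J, w θ ((j':ℕ)+1)) *
        ∑ j ∈ J, ((fun i : Fin n => (w θ ((i:ℕ)+1))^2) j)^l *
          Lagrange.nodalWeight J (fun i : Fin n => (w θ ((i:ℕ)+1))^2) j := by
        rw [Finset.mul_sum]
        exact Finset.sum_congr rfl (fun j _ => by ring)
    _ = 0 := by rw [hlag, mul_zero]


lemma Ctx.band_singleton (h : Ctx m n θ φ) {J : Finset (Fin n)}
    (hJb : ∀ r, 1 ≤ r → r ≤ m → (J ∩ bandC n θ φ r).card = 1)
    {j : Fin n} (hj : j ∈ J) :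
    J ∩ bandC n θ φ (bandOf m φ (θ ((j:ℕ)+1))) = {j} := by
  classical
  set r := bandOf m φ (θ ((j:ℕ)+1)) with hr
  have hr1 : 1 ≤ r := h.bandOf_one_le j
  have hrm : r ≤ m := bandOf_le_m m φ _
  obtain ⟨x, hx⟩ := Finset.card_eq_one.mp (hJb r hr1 hrm)
  have hjmem : j ∈ J ∩ bandC n θ φ r := Finset.mem_inter.mpr ⟨hj, h.mem_band_bandOf j⟩
  rw [hx] at hjmem ⊢
  rw [Finset.mem_singleton] at hjmem
  rw [hjmem]

lemma Ctx.circuit_pos (h : Ctx m n θ φ) {J : Finset (Fin n)}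
    (hJb : ∀ r, 1 ≤ r → r ≤ m → (J ∩ bandC n θ φ r).card = 1)
    {j : Fin n} (hj : j ∈ J) : 0 < circuitC n m θ φ J j := by
  classical
  set r := bandOf m φ (θ ((j:ℕ)+1)) with hr
  have hr1 : 1 ≤ r := h.bandOf_one_le j
  have hrm : r ≤ m := bandOf_le_m m φ _
  have hrmem : r ∈ Finset.Icc 1 m := Finset.mem_Icc.mpr ⟨hr1, hrm⟩
  have hsing := h.band_singleton hJb hj
  -- band of any other element of J differs from r
  have hbne : ∀ j' ∈ J.erase j, bandOf m φ (θ ((j':ℕ)+1)) ≠ r := by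
    intro j' hj'
    intro hEq
    have hj'J := Finset.mem_of_mem_erase hj'
    have : j' ∈ J ∩ bandC n θ φ r := by
      rw [← hEq]
      exact Finset.mem_inter.mpr ⟨hj'J, h.mem_band_bandOf j'⟩
    rw [hsing, Finset.mem_singleton] at this
    exact (Finset.ne_of_mem_erase hj') this
  -- reindex the φ-product
  have hbij : ∏ j' ∈ J.erase j, Real.sin ((θ ((j:ℕ)+1) - φ (bandOf m φ (θ ((j':ℕ)+1)))) / 2)
      = ∏ k ∈ (Finset.Icc 1 m).erase r, Real.sin ((θ ((j:ℕ)+1) - φ k) / 2) := by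
    apply Finset.prod_bij (fun (j' : Fin n) _ => bandOf m φ (θ ((j':ℕ)+1)))
    · intro a ha
      apply Finset.mem_erase.mpr
      refine ⟨hbne a ha, Finset.mem_Icc.mpr ⟨h.bandOf_one_le a, bandOf_le_m m φ _⟩⟩
    · intro a ha b hb hEq
      have h1 := h.mem_band_bandOf a
      rw [hEq] at h1
      have h2 : a ∈ J ∩ bandC n θ φ (bandOf m φ (θ ((b:ℕ)+1))) :=
        Finset.mem_inter.mpr ⟨Finset.mem_of_mem_erase ha, h1⟩
      have h3 : b ∈ J ∩ bandC n θ φ (bandOf m φ (θ ((b:ℕ)+1))) :=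
        Finset.mem_inter.mpr ⟨Finset.mem_of_mem_erase hb, h.mem_band_bandOf b⟩
      obtain ⟨x, hx⟩ := Finset.card_eq_one.mp
        (hJb _ (h.bandOf_one_le b) (bandOf_le_m m φ _))
      rw [hx, Finset.mem_singleton] at h2 h3
      rw [h2, h3]
    · intro k hk
      obtain ⟨hkr, hkIcc⟩ := Finset.mem_erase.mp hk
      rw [Finset.mem_Icc] at hkIcc
      obtain ⟨x, hx⟩ := Finset.card_eq_one.mp (hJb k hkIcc.1 hkIcc.2)
      have hxmem : x ∈ J ∩ bandC n θ φ k := by rw [hx]; exact Finset.mem_singleton_self x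
      rw [Finset.mem_inter] at hxmem
      have hbx : bandOf m φ (θ ((x:ℕ)+1)) = k :=
        h.bandOf_eq_of_mem x hkIcc.1 hkIcc.2 hxmem.2
      have hxj : x ≠ j := by
        intro hEq
        rw [hEq] at hbx
        exact hkr hbx.symm
      refine ⟨x, Finset.mem_erase.mpr ⟨hxj, hxmem.1⟩, hbx⟩
    · intro a _
      rfl
  -- the product expression
  have hkey : pR m θ φ ((j:ℕ)+1) *
      (∏ j' ∈ J.erase j, Real.sin ((θ ((j:ℕ)+1) - θ ((j':ℕ)+1)) / 2))
      = Real.sin ((θ ((j:ℕ)+1) - φ r) / 2) *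
        ∏ j' ∈ J.erase j,
          (Real.sin ((θ ((j:ℕ)+1) - φ (bandOf m φ (θ ((j':ℕ)+1)))) / 2) *
           Real.sin ((θ ((j:ℕ)+1) - θ ((j':ℕ)+1)) / 2)) := by
    rw [Finset.prod_mul_distrib, hbij, pR,
      ← Finset.mul_prod_erase (Finset.Icc 1 m) _ hrmem]
    ring
  have hpos1 : 0 < Real.sin ((θ ((j:ℕ)+1) - φ r) / 2) := h.sin_phi_pos j hr1 le_rfl
  have hpos2 : ∀ j' ∈ J.erase j,
      0 < Real.sin ((θ ((j:ℕ)+1) - φ (bandOf m φ (θ ((j':ℕ)+1)))) / 2) *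
          Real.sin ((θ ((j:ℕ)+1) - θ ((j':ℕ)+1)) / 2) := by
    intro j' hj'
    set r' := bandOf m φ (θ ((j':ℕ)+1)) with hr'
    have hr'1 : 1 ≤ r' := h.bandOf_one_le j'
    have hr'm : r' ≤ m := bandOf_le_m m φ _
    have hner : r' ≠ r := hbne j' hj'
    rcases lt_or_gt_of_ne hner with hlt | hgt
    · -- r' < r : both positive
      have hφpos : 0 < Real.sin ((θ ((j:ℕ)+1) - φ r') / 2) :=
        h.sin_phi_pos j hr'1 (le_of_lt hlt)
      have hθj' : θ ((j':ℕ)+1) < θ ((j:ℕ)+1) := by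
        have h1 : θ ((j':ℕ)+1) < φ (r'+1) := h.bandOf_gt j'
        have h2 : φ (r'+1) ≤ φ r := h.phi_mono (r'+1) r (by omega) (by omega) (by omega)
        have h3 : φ r < θ ((j:ℕ)+1) := h.bandOf_lt j
        linarith
      exact mul_pos hφpos (h.sin_theta_pos hθj')
    · -- r < r' : both negative
      have hφneg : Real.sin ((θ ((j:ℕ)+1) - φ r') / 2) < 0 :=
        h.sin_phi_neg j hgt hr'm
      have hθj' : θ ((j:ℕ)+1) < θ ((j':ℕ)+1) := by
        have h1 : θ ((j:ℕ)+1) < φ (r+1) := h.bandOf_gt j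
        have h2 : φ (r+1) ≤ φ r' := h.phi_mono (r+1) r' (by omega) (by omega) (by omega)
        have h3 : φ r' < θ ((j':ℕ)+1) := h.bandOf_lt j'
        linarith
      exact mul_pos_of_neg_of_neg hφneg (h.sin_theta_neg hθj')
  have hprodpos : 0 < pR m θ φ ((j:ℕ)+1) *
      ∏ j' ∈ J.erase j, Real.sin ((θ ((j:ℕ)+1) - θ ((j':ℕ)+1)) / 2) := by
    rw [hkey]
    exact mul_pos hpos1 (Finset.prod_pos hpos2)
  rw [circuitC, if_pos hj]
  exact div_pos one_pos (by rw [pR] at hprodpos; exact hprodpos)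

lemma circuit_zero {J : Finset (Fin n)} {j : Fin n} (hj : j ∉ J) :
    circuitC n m θ φ J j = 0 := by
  rw [circuitC, if_neg hj]

lemma Ctx.circuit_nonneg (h : Ctx m n θ φ) {J : Finset (Fin n)}
    (hJb : ∀ r, 1 ≤ r → r ≤ m → (J ∩ bandC n θ φ r).card = 1)
    (j : Fin n) : 0 ≤ circuitC n m θ φ J j := by
  by_cases hj : j ∈ J
  · exact le_of_lt (h.circuit_pos hJb hj)
  · rw [circuit_zero hj]


/-- index set with two ξ's removed -/
noncomputable def Sset (m α β : ℕ) : Finset ℕ := ((Finset.Icc 1 m).erase α).erase β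

/-- test function: product of sines over `Sset` -/
noncomputable def uR (m α β : ℕ) (θ φ : ℕ → ℝ) (x : ℕ) : ℝ :=
  ∏ k ∈ Sset m α β, Real.sin ((θ x - φ k) / 2)

lemma Sset_card {m α β : ℕ} (hα : 1 ≤ α) (hαβ : α < β) (hβ : β ≤ m) :
    (Sset m α β).card = m - 2 := by
  rw [Sset, Finset.card_erase_of_mem, Finset.card_erase_of_mem, Nat.card_Icc]
  · omega
  · exact Finset.mem_Icc.mpr ⟨by omega, by omega⟩
  · exact Finset.mem_erase.mpr ⟨by omega, Finset.mem_Icc.mpr ⟨by omega, by omega⟩⟩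

lemma Ctx.u_sum_zero (h : Ctx m n θ φ) {ω : Fin n → ℝ}
    (hcon : ∀ l : ℕ, l + 2 ≤ m →
      ∑ j : Fin n, dvec m θ φ ω j * ((w θ ((j:ℕ)+1))^2)^l = 0)
    {α β : ℕ} (hα : 1 ≤ α) (hαβ : α < β) (hβ : β ≤ m) :
    ∑ j : Fin n, ω j * (pR m θ φ ((j:ℕ)+1) * uR m α β θ φ ((j:ℕ)+1)) = 0 := by
  classical
  have hm2 : 2 ≤ m := by omega
  set Q : Polynomial ℂ := ∏ k ∈ Sset m α β,
    ((Polynomial.X - Polynomial.C (Complex.exp (Complex.I * ((φ k : ℝ):ℂ)))) *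
      Polynomial.C (((2*Complex.I) * Complex.exp (Complex.I * ((φ k / 2 : ℝ):ℂ)))⁻¹)) with hQ
  have hdegQ : Q.natDegree + 2 ≤ m := by
    have h1 : Q.natDegree ≤ ∑ k ∈ Sset m α β, 1 := by
      rw [hQ]
      refine le_trans (Polynomial.natDegree_prod_le _ _) (Finset.sum_le_sum ?_)
      intro k _
      refine le_trans (Polynomial.natDegree_mul_le) ?_
      rw [Polynomial.natDegree_C]
      simpa using Polynomial.natDegree_X_sub_C_le _
    rw [Finset.sum_const, smul_eq_mul, mul_one, Sset_card hα hαβ hβ] at h1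
    omega
  -- key per-node identity
  have hterm : ∀ j : Fin n,
      dvec m θ φ ω j * Q.eval ((w θ ((j:ℕ)+1))^2) =
      ((ω j * (pR m θ φ ((j:ℕ)+1) * uR m α β θ φ ((j:ℕ)+1)) : ℝ) : ℂ) := by
    intro j
    have hwne := w_ne_zero θ ((j:ℕ)+1)
    have hQeval : Q.eval ((w θ ((j:ℕ)+1))^2) =
        ((uR m α β θ φ ((j:ℕ)+1) : ℝ) : ℂ) * (w θ ((j:ℕ)+1))^((m:ℕ) - 2) := by
      rw [hQ, Polynomial.eval_prod, uR, Complex.ofReal_prod]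
      have hfac : ∀ k ∈ Sset m α β,
          Polynomial.eval ((w θ ((j:ℕ)+1))^2)
            ((Polynomial.X - Polynomial.C (Complex.exp (Complex.I * ((φ k : ℝ):ℂ)))) *
              Polynomial.C (((2*Complex.I) * Complex.exp (Complex.I * ((φ k / 2 : ℝ):ℂ)))⁻¹))
          = ((Real.sin ((θ ((j:ℕ)+1) - φ k) / 2) : ℝ) : ℂ) * w θ ((j:ℕ)+1) := by
        intro k _
        simp only [Polynomial.eval_mul, Polynomial.eval_sub, Polynomial.eval_X,
          Polynomial.eval_C]
        have hfac2 := exp_sub_exp (θ ((j:ℕ)+1)) (φ k)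
        have hw2 : Complex.exp (Complex.I * (((θ ((j:ℕ)+1) + φ k)/2 : ℝ) : ℂ)) =
            w θ ((j:ℕ)+1) * Complex.exp (Complex.I * ((φ k / 2 : ℝ):ℂ)) := by
          rw [w, ← Complex.exp_add]; congr 1; push_cast; ring
        have hz : Complex.exp (Complex.I * ((θ ((j:ℕ)+1) : ℝ):ℂ)) = (w θ ((j:ℕ)+1))^2 :=
          zeta_eq_w_sq θ _
        rw [hw2, hz] at hfac2
        rw [hfac2]
        have hne : ((2:ℂ)*Complex.I * Complex.exp (Complex.I * ((φ k / 2 : ℝ):ℂ))) ≠ 0 := by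
          apply mul_ne_zero _ (Complex.exp_ne_zero _)
          simp [Complex.I_ne_zero]
        field_simp
      rw [Finset.prod_congr rfl hfac, Finset.prod_mul_distrib, Finset.prod_const,
        Sset_card hα hαβ hβ]
    rw [hQeval, dvec]
    have hzp : (w θ ((j:ℕ)+1))^((2:ℤ)-m) * (w θ ((j:ℕ)+1))^((m:ℕ)-2) = 1 := by
      rw [← zpow_natCast (w θ ((j:ℕ)+1)) (m-2), ← zpow_add₀ hwne]
      rw [show ((2:ℤ)-m) + ((m-2 : ℕ):ℤ) = 0 by omega, zpow_zero]
    push_cast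
    calc (ω j : ℂ) * ((pR m θ φ ((j:ℕ)+1) : ℝ):ℂ) * (w θ ((j:ℕ)+1))^((2:ℤ)-m) *
          (((uR m α β θ φ ((j:ℕ)+1) : ℝ):ℂ) * (w θ ((j:ℕ)+1))^((m:ℕ)-2))
        = (ω j : ℂ) * ((pR m θ φ ((j:ℕ)+1) : ℝ):ℂ) * ((uR m α β θ φ ((j:ℕ)+1) : ℝ):ℂ) *
          ((w θ ((j:ℕ)+1))^((2:ℤ)-m) * (w θ ((j:ℕ)+1))^((m:ℕ)-2)) := by ring
      _ = (ω j : ℂ) * (((pR m θ φ ((j:ℕ)+1) : ℝ):ℂ) * ((uR m α β θ φ ((j:ℕ)+1) : ℝ):ℂ)) := by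
          rw [hzp]; ring
  have hsum := sum_d_poly (m := m) (θ := θ) (d := dvec m θ φ ω)
    (z := fun j : Fin n => (w θ ((j:ℕ)+1))^2) hcon Q hdegQ
  rw [Finset.sum_congr rfl (fun j _ => hterm j)] at hsum
  have : ((∑ j : Fin n, ω j * (pR m θ φ ((j:ℕ)+1) * uR m α β θ φ ((j:ℕ)+1)) : ℝ) : ℂ) = 0 := by
    push_cast
    push_cast at hsum
    exact hsum
  exact_mod_cast this

lemma Ctx.pu_sign (h : Ctx m n θ φ) {α β : ℕ} (hα : 1 ≤ α) (hαβ : α < β) (hβ : β ≤ m)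
    (j : Fin n) :
    pR m θ φ ((j:ℕ)+1) * uR m α β θ φ ((j:ℕ)+1) =
      Real.sin ((θ ((j:ℕ)+1) - φ α) / 2) * Real.sin ((θ ((j:ℕ)+1) - φ β) / 2) *
        ∏ k ∈ Sset m α β, (Real.sin ((θ ((j:ℕ)+1) - φ k) / 2))^2 ∧
    0 < ∏ k ∈ Sset m α β, (Real.sin ((θ ((j:ℕ)+1) - φ k) / 2))^2 := by
  classical
  constructor
  · have hαmem : α ∈ Finset.Icc 1 m := Finset.mem_Icc.mpr ⟨hα, by omega⟩
    have hβmem : β ∈ (Finset.Icc 1 m).erase α :=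
      Finset.mem_erase.mpr ⟨by omega, Finset.mem_Icc.mpr ⟨by omega, hβ⟩⟩
    rw [pR, ← Finset.mul_prod_erase (Finset.Icc 1 m) _ hαmem,
      ← Finset.mul_prod_erase ((Finset.Icc 1 m).erase α) _ hβmem, uR]
    rw [show ((Finset.Icc 1 m).erase α).erase β = Sset m α β from rfl]
    have hsq : ∏ k ∈ Sset m α β, (Real.sin ((θ ((j:ℕ)+1) - φ k) / 2))^2 =
        (∏ k ∈ Sset m α β, Real.sin ((θ ((j:ℕ)+1) - φ k) / 2)) *
        (∏ k ∈ Sset m α β, Real.sin ((θ ((j:ℕ)+1) - φ k) / 2)) := by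
      rw [← Finset.prod_mul_distrib]
      exact Finset.prod_congr rfl (fun k _ => sq (Real.sin ((θ ((j:ℕ)+1) - φ k) / 2)))
    rw [hsq]
    ring
  · apply Finset.prod_pos
    intro k hk
    have hkIcc : k ∈ Finset.Icc 1 m := Finset.mem_of_mem_erase (Finset.mem_of_mem_erase hk)
    rw [Finset.mem_Icc] at hkIcc
    have hne : Real.sin ((θ ((j:ℕ)+1) - φ k) / 2) ≠ 0 := by
      rcases le_or_gt k (bandOf m φ (θ ((j:ℕ)+1))) with hle | hgt
      · exact ne_of_gt (h.sin_phi_pos j hkIcc.1 hle)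
      · exact ne_of_lt (h.sin_phi_neg j hgt hkIcc.2)
    exact pow_two_pos_of_ne_zero hne


lemma Ctx.zero_of_band_zero (h : Ctx m n θ φ) {ω : Fin n → ℝ}
    (hcon : ∀ l : ℕ, l + 2 ≤ m →
      ∑ j : Fin n, dvec m θ φ ω j * ((w θ ((j:ℕ)+1))^2)^l = 0)
    (hpos : ∀ j, 0 ≤ ω j)
    {a : ℕ} (ha1 : 1 ≤ a) (ham : a ≤ m)
    (hz : ∀ j ∈ bandC n θ φ a, ω j = 0) : ω = 0 := by
  classical
  have hband_mem : ∀ j : Fin n, bandOf m φ (θ ((j:ℕ)+1)) = a → ω j = 0 := by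
    intro j hba
    apply hz
    have := h.mem_band_bandOf j
    rwa [hba] at this
  rcases eq_or_lt_of_le h.hm with hm1 | hm2
  · -- m = 1 : the single band covers everything
    funext j
    have hb1 : bandOf m φ (θ ((j:ℕ)+1)) = a := by
      have h1 := h.bandOf_one_le j
      have h2 := bandOf_le_m m φ (θ ((j:ℕ)+1))
      omega
    simpa using hband_mem j hb1
  -- m ≥ 2
  have key : ∀ (α β : ℕ), 1 ≤ α → α < β → β ≤ m →
      (∀ j : Fin n, bandOf m φ (θ ((j:ℕ)+1)) ≠ a →
        (α ≤ bandOf m φ (θ ((j:ℕ)+1)) → bandOf m φ (θ ((j:ℕ)+1)) < β → False)) →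
      ∀ j : Fin n, ω j = 0 := by
    intro α β hα hαβ hβ hout j
    -- the signed sum
    have hsum := h.u_sum_zero hcon hα hαβ hβ
    -- each term has the same sign off band a
    have hterm_sign : ∀ j' : Fin n, bandOf m φ (θ ((j':ℕ)+1)) ≠ a →
        0 < pR m θ φ ((j':ℕ)+1) * uR m α β θ φ ((j':ℕ)+1) := by
      intro j' hne
      obtain ⟨hEq, hProd⟩ := h.pu_sign hα hαβ hβ j'
      rw [hEq]
      set r' := bandOf m φ (θ ((j':ℕ)+1)) with hr'
      have hr'1 : 1 ≤ r' := h.bandOf_one_le j'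
      have hr'm : r' ≤ m := bandOf_le_m m φ _
      rcases lt_or_ge r' α with hca | hca
      · -- r' < α : both sines negative
        have h1 : Real.sin ((θ ((j':ℕ)+1) - φ α) / 2) < 0 :=
          h.sin_phi_neg j' hca (by omega)
        have h2 : Real.sin ((θ ((j':ℕ)+1) - φ β) / 2) < 0 :=
          h.sin_phi_neg j' (by omega) hβ
        exact mul_pos (mul_pos_of_neg_of_neg h1 h2) hProd
      · rcases lt_or_ge r' β with hcb | hcb
        · exact absurd (hout j' hne hca hcb) not_false
        · -- β ≤ r' : both sines positive
          have h1 : 0 < Real.sin ((θ ((j':ℕ)+1) - φ α) / 2) :=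
            h.sin_phi_pos j' hα (by omega)
          have h2 : 0 < Real.sin ((θ ((j':ℕ)+1) - φ β) / 2) :=
            h.sin_phi_pos j' (by omega) hcb
          exact mul_pos (mul_pos h1 h2) hProd
    -- all terms are nonnegative and sum to zero
    have hnn : ∀ j' ∈ (Finset.univ : Finset (Fin n)), 0 ≤
        ω j' * (pR m θ φ ((j':ℕ)+1) * uR m α β θ φ ((j':ℕ)+1)) := by
      intro j' _
      by_cases hba : bandOf m φ (θ ((j':ℕ)+1)) = a
      · rw [hband_mem j' hba, zero_mul]
      · exact mul_nonneg (hpos j') (le_of_lt (hterm_sign j' hba))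
    have hzero := (Finset.sum_eq_zero_iff_of_nonneg hnn).mp hsum j (Finset.mem_univ j)
    by_cases hba : bandOf m φ (θ ((j:ℕ)+1)) = a
    · exact hband_mem j hba
    · have := hterm_sign j hba
      rcases mul_eq_zero.mp hzero with h0 | h0
      · exact h0
      · exact absurd h0 (ne_of_gt this)
  funext j
  simp only [Pi.zero_apply]
  rcases lt_or_ge a m with ham' | ham'
  · -- a < m : use the pair (a, a+1); negative region is exactly band a
    exact key a (a+1) ha1 (by omega) (by omega)
      (fun j' hne hge hlt => hne (by omega)) j
  · -- a = m : use the pair (1, m); the region [1, m) misses only band m = a.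
    -- For this pair the product is negative off band a, so apply `key` to `-ω`?
    -- Instead note: α ≤ r < β ↔ r ≠ m here, so the "outside" condition fails;
    -- we handle this case by flipping the sign of the test function.
    have hma : a = m := by omega
    subst hma
    -- regions: r = a gives term zero; r ≠ a gives negative sign; so -sum has
    -- nonnegative terms.
    have hsum := h.u_sum_zero hcon (α := 1) (β := a) le_rfl (by omega) le_rfl
    have hterm_sign : ∀ j' : Fin n, bandOf a φ (θ ((j':ℕ)+1)) ≠ a →
        pR a θ φ ((j':ℕ)+1) * uR a 1 a θ φ ((j':ℕ)+1) < 0 := by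
      intro j' hne
      obtain ⟨hEq, hProd⟩ := h.pu_sign (α := 1) (β := a) le_rfl (by omega) le_rfl j'
      rw [hEq]
      have hr'1 : 1 ≤ bandOf a φ (θ ((j':ℕ)+1)) := h.bandOf_one_le j'
      have hr'm : bandOf a φ (θ ((j':ℕ)+1)) ≤ a := bandOf_le_m a φ _
      have h1 : 0 < Real.sin ((θ ((j':ℕ)+1) - φ 1) / 2) :=
        h.sin_phi_pos j' le_rfl hr'1
      have h2 : Real.sin ((θ ((j':ℕ)+1) - φ a) / 2) < 0 :=
        h.sin_phi_neg j' (by omega) le_rfl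
      exact mul_neg_of_neg_of_pos (mul_neg_of_pos_of_neg h1 h2) hProd
    have hsum' : ∑ j' : Fin n, ω j' *
        (-(pR a θ φ ((j':ℕ)+1) * uR a 1 a θ φ ((j':ℕ)+1))) = 0 := by
      rw [← neg_eq_zero, ← Finset.sum_neg_distrib]
      rw [← hsum]
      exact Finset.sum_congr rfl (fun j' _ => by ring)
    have hnn : ∀ j' ∈ (Finset.univ : Finset (Fin n)), 0 ≤
        ω j' * (-(pR a θ φ ((j':ℕ)+1) * uR a 1 a θ φ ((j':ℕ)+1))) := by
      intro j' _
      by_cases hba : bandOf a φ (θ ((j':ℕ)+1)) = a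
      · rw [hband_mem j' hba, zero_mul]
      · exact mul_nonneg (hpos j') (le_of_lt (neg_pos.mpr (hterm_sign j' hba)))
    have hzero := (Finset.sum_eq_zero_iff_of_nonneg hnn).mp hsum' j (Finset.mem_univ j)
    by_cases hba : bandOf a φ (θ ((j:ℕ)+1)) = a
    · exact hband_mem j hba
    · rcases mul_eq_zero.mp hzero with h0 | h0
      · exact h0
      · exfalso
        have := hterm_sign j hba
        rw [neg_eq_zero] at h0
        exact (ne_of_lt this) h0


lemma Ctx.dvec_sub (h : Ctx m n θ φ) (ω v : Fin n → ℝ) (c : ℝ) (j : Fin n) :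
    dvec m θ φ (fun i => ω i - c * v i) j = dvec m θ φ ω j - (c:ℂ) * dvec m θ φ v j := by
  simp only [dvec]
  push_cast
  ring

lemma Ctx.decompose (h : Ctx m n θ φ) : ∀ N : ℕ, ∀ ω : Fin n → ℝ,
    (∀ l : ℕ, l + 2 ≤ m →
      ∑ j : Fin n, dvec m θ φ ω j * ((w θ ((j:ℕ)+1))^2)^l = 0) →
    (∀ j, 0 ≤ ω j) →
    (Finset.univ.filter (fun j => ω j ≠ 0)).card ≤ N →
    ∃ t : Finset (Fin n) → ℝ,
      (∀ J, 0 ≤ t J) ∧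
      (∀ J, t J ≠ 0 →
        J.card = m ∧ ∀ r, 1 ≤ r → r ≤ m → (J ∩ bandC n θ φ r).card = 1) ∧
      ω = ∑ J : Finset (Fin n), t J • circuitC n m θ φ J := by
  classical
  intro N
  induction N with
  | zero =>
    intro ω hcon hpos hcard
    have hω0 : ω = 0 := by
      funext j
      by_contra hj
      have : j ∈ Finset.univ.filter (fun j => ω j ≠ 0) := by
        simp only [Finset.mem_filter, Finset.mem_univ, true_and]
        exact hj
      have := Finset.card_pos.mpr ⟨j, this⟩
      omega
    refine ⟨fun _ => 0, fun _ => le_rfl, fun J hJ => absurd rfl hJ, ?_⟩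
    rw [hω0]
    simp
  | succ N ih =>
    intro ω hcon hpos hcard
    by_cases hω0 : ω = 0
    · refine ⟨fun _ => 0, fun _ => le_rfl, fun J hJ => absurd rfl hJ, ?_⟩
      rw [hω0]
      simp
    -- every band meets supp ω
    have hbandssupp : ∀ a : ℕ, 1 ≤ a → a ≤ m →
        ∃ j : Fin n, j ∈ bandC n θ φ a ∧ ω j ≠ 0 := by
      intro a ha1 ham
      by_contra hcontra
      push_neg at hcontra
      apply hω0
      apply h.zero_of_band_zero hcon hpos ha1 ham
      intro j hj
      exact hcontra j hj
    have hn0 : 0 < n := by have := h.hmn; omega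
    have hch : ∀ a : ℕ, ∃ j : Fin n, (1 ≤ a ∧ a ≤ m) →
        (j ∈ bandC n θ φ a ∧ ω j ≠ 0) := by
      intro a
      by_cases ha : 1 ≤ a ∧ a ≤ m
      · obtain ⟨j, hj⟩ := hbandssupp a ha.1 ha.2
        exact ⟨j, fun _ => hj⟩
      · exact ⟨⟨0, hn0⟩, fun hcon' => absurd hcon' ha⟩
    choose g hg using hch
    set J : Finset (Fin n) := (Finset.Icc 1 m).image g with hJdef
    have hgband : ∀ a ∈ Finset.Icc 1 m, bandOf m φ (θ ((g a : ℕ)+1)) = a := by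
      intro a ha
      rw [Finset.mem_Icc] at ha
      exact h.bandOf_eq_of_mem (g a) ha.1 ha.2 (hg a ha).1
    have hgInj : Set.InjOn g ↑(Finset.Icc 1 m) := by
      intro a ha b hb hEq
      rw [Finset.mem_coe] at ha hb
      rw [← hgband a ha, ← hgband b hb, hEq]
    have hJcard : J.card = m := by
      rw [hJdef, Finset.card_image_of_injOn hgInj, Nat.card_Icc]
      omega
    have hJband : ∀ r, 1 ≤ r → r ≤ m → (J ∩ bandC n θ φ r).card = 1 := by
      intro r hr1 hrm
      have hrIcc : r ∈ Finset.Icc 1 m := Finset.mem_Icc.mpr ⟨hr1, hrm⟩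
      have : J ∩ bandC n θ φ r = {g r} := by
        apply Finset.Subset.antisymm
        · intro x hx
          rw [Finset.mem_inter] at hx
          obtain ⟨a, ha, hax⟩ := Finset.mem_image.mp hx.1
          have hbx : bandOf m φ (θ ((x:ℕ)+1)) = r := h.bandOf_eq_of_mem x hr1 hrm hx.2
          rw [← hax] at hbx
          rw [hgband a ha] at hbx
          rw [Finset.mem_singleton, ← hax, hbx]
        · intro x hx
          rw [Finset.mem_singleton] at hx
          subst hx
          exact Finset.mem_inter.mpr ⟨Finset.mem_image_of_mem g hrIcc,
            (hg r (Finset.mem_Icc.mp hrIcc)).1⟩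
      rw [this, Finset.card_singleton]
    have hJsupp : ∀ j ∈ J, 0 < ω j := by
      intro j hj
      obtain ⟨a, ha, hax⟩ := Finset.mem_image.mp hj
      rw [Finset.mem_Icc] at ha
      have := (hg a ha).2
      rw [hax] at this
      exact lt_of_le_of_ne (hpos j) (Ne.symm this)
    set v : Fin n → ℝ := circuitC n m θ φ J with hvdef
    have hvpos : ∀ j ∈ J, 0 < v j := fun j hj => h.circuit_pos hJband hj
    have hvzero : ∀ j, j ∉ J → v j = 0 := fun j hj => circuit_zero hj
    have hJne : J.Nonempty := Finset.card_pos.mp (by rw [hJcard]; exact h.hm)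
    set R : Finset ℝ := J.image (fun j => ω j / v j) with hRdef
    have hRne : R.Nonempty := hJne.image _
    set c : ℝ := R.min' hRne with hcdef
    obtain ⟨j₀, hj₀J, hj₀c⟩ := Finset.mem_image.mp (R.min'_mem hRne)
    have hcpos : 0 < c := by
      rw [hcdef, ← hj₀c]
      exact div_pos (hJsupp j₀ hj₀J) (hvpos j₀ hj₀J)
    have hcle : ∀ j ∈ J, c ≤ ω j / v j := by
      intro j hj
      exact R.min'_le _ (Finset.mem_image_of_mem _ hj)
    set ω' : Fin n → ℝ := fun i => ω i - c * v i with hω'def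
    have hω'pos : ∀ j, 0 ≤ ω' j := by
      intro j
      by_cases hj : j ∈ J
      · have h1 := hcle j hj
        have h2 := hvpos j hj
        rw [hω'def]
        simp only
        rw [le_div_iff₀ h2] at h1
        linarith
      · rw [hω'def]
        simp only [hvzero j hj, mul_zero, sub_zero]
        exact hpos j
    have hω'con : ∀ l : ℕ, l + 2 ≤ m →
        ∑ j : Fin n, dvec m θ φ ω' j * ((w θ ((j:ℕ)+1))^2)^l = 0 := by
      intro l hl
      rw [Finset.sum_congr rfl (fun (j : Fin n) _ => by rw [hω'def, h.dvec_sub ω v c j])]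
      have expand : ∀ j : Fin n,
          (dvec m θ φ ω j - (c:ℂ) * dvec m θ φ v j) * ((w θ ((j:ℕ)+1))^2)^l =
          dvec m θ φ ω j * ((w θ ((j:ℕ)+1))^2)^l -
            (c:ℂ) * (dvec m θ φ v j * ((w θ ((j:ℕ)+1))^2)^l) := by
        intro j; ring
      rw [Finset.sum_congr rfl (fun (j : Fin n) _ => expand j), Finset.sum_sub_distrib,
        ← Finset.mul_sum, hcon l hl, h.circuit_kernel hJcard l hl, mul_zero, sub_zero]
    have hω'j₀ : ω' j₀ = 0 := by
      have hvne : v j₀ ≠ 0 := ne_of_gt (hvpos j₀ hj₀J)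
      rw [hω'def]
      simp only
      rw [hcdef, ← hj₀c, div_mul_cancel₀ _ hvne, sub_self]
    have hsubset : Finset.univ.filter (fun j => ω' j ≠ 0) ⊆
        (Finset.univ.filter (fun j => ω j ≠ 0)).erase j₀ := by
      intro j hj
      simp only [Finset.mem_filter, Finset.mem_univ, true_and] at hj
      apply Finset.mem_erase.mpr
      constructor
      · intro hEq
        rw [hEq] at hj
        exact hj hω'j₀
      · simp only [Finset.mem_filter, Finset.mem_univ, true_and]
        intro hωj
        apply hj
        by_cases hjJ : j ∈ J
        · exact absurd hωj (ne_of_gt (hJsupp j hjJ))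
        · rw [hω'def]
          simp only [hvzero j hjJ, mul_zero, sub_zero]
          exact hωj
    have hj₀supp : j₀ ∈ Finset.univ.filter (fun j => ω j ≠ 0) := by
      simp only [Finset.mem_filter, Finset.mem_univ, true_and]
      exact ne_of_gt (hJsupp j₀ hj₀J)
    have hcard' : (Finset.univ.filter (fun j => ω' j ≠ 0)).card ≤ N := by
      have h1 := Finset.card_le_card hsubset
      rw [Finset.card_erase_of_mem hj₀supp] at h1
      omega
    obtain ⟨t', ht'0, ht'J, ht'sum⟩ := ih ω' hω'con hω'pos hcard'
    refine ⟨fun K => t' K + (if K = J then c else 0), ?_, ?_, ?_⟩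
    · intro K
      by_cases hKJ : K = J
      · simp only [hKJ, if_pos rfl]
        exact add_nonneg (ht'0 J) (le_of_lt hcpos)
      · simp only [if_neg hKJ, add_zero]
        exact ht'0 K
    · intro K hK
      by_cases hKJ : K = J
      · subst hKJ
        exact ⟨hJcard, hJband⟩
      · simp only [if_neg hKJ, add_zero] at hK
        exact ht'J K hK
    · funext i
      have hω'i : ω i = ω' i + c * v i := by rw [hω'def]; ring
      rw [hω'i, ht'sum]
      rw [Finset.sum_apply, Finset.sum_apply]
      have : ∀ K ∈ (Finset.univ : Finset (Finset (Fin n))),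
          ((t' K + (if K = J then c else 0)) • circuitC n m θ φ K) i =
          (t' K • circuitC n m θ φ K) i +
            (if K = J then c * circuitC n m θ φ K i else 0) := by
        intro K _
        by_cases hKJ : K = J
        · simp [hKJ, add_smul, add_mul]
        · simp [hKJ]
      rw [Finset.sum_congr rfl this, Finset.sum_add_distrib,
        Finset.sum_ite_eq' Finset.univ J (fun K => c * circuitC n m θ φ K i),
        if_pos (Finset.mem_univ J)]

end Stmt18Aux

open Stmt18Aux

/-- under strict interlacing on `𝕊¹` (all bands nonempty), the set
`W_{≥0} = {ω : circle system holds and ω ≥ 0}` equals the cone generated by the circuit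
vectors `ω^{(J)}` with `J ∈ 𝔍₊` (i.e. `|J| = m` and `|J ∩ I_r| = 1` for every band).
A nonnegative combination is encoded by coefficients `t : Finset (Fin n) → ℝ`, `t ≥ 0`,
supported on `𝔍₊`. -/
theorem stmt_18 (m n : ℕ) (hm : 1 ≤ m) (hmn : m < n)
    (θ φ : ℕ → ℝ)
    (hφ : ∀ k, 1 ≤ k → k ≤ m → φ k < φ (k + 1))
    (hφp : φ (m + 1) = φ 1 + 2 * Real.pi)
    (hθ1 : φ 1 < θ 1)
    (hθ : ∀ j, 1 ≤ j → j < n → θ j < θ (j + 1))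
    (hθn : θ n < φ 1 + 2 * Real.pi)
    (hθφ : ∀ j k, 1 ≤ j → j ≤ n → 1 ≤ k → k ≤ m → θ j ≠ φ k)
    (hbands : ∀ r, 1 ≤ r → r ≤ m → (bandC n θ φ r).Nonempty) :
    {ω : Fin n → ℝ |
        (∀ k : ℕ, 1 ≤ k → k < m →
          ∑ j : Fin n, (ω j : ℂ) *
            PsiC m φ (zetaC θ ((j : ℕ) + 1)) * zetaC θ ((j : ℕ) + 1) ^ (-(k : ℤ)) = 0) ∧
        ∀ j : Fin n, 0 ≤ ω j}
      = {ω : Fin n → ℝ |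
          ∃ t : Finset (Fin n) → ℝ,
            (∀ J, 0 ≤ t J) ∧
            (∀ J, t J ≠ 0 →
              J.card = m ∧ ∀ r, 1 ≤ r → r ≤ m → (J ∩ bandC n θ φ r).card = 1) ∧
            ω = ∑ J : Finset (Fin n), t J • circuitC n m θ φ J} := by
  classical
  have h : Ctx m n θ φ := ⟨hm, hmn, hφ, hφp, hθ1, hθ, hθn, hθφ⟩
  ext ω
  simp only [Set.mem_setOf_eq]
  constructor
  · rintro ⟨hlin, hpos⟩
    exact h.decompose (Finset.univ.filter (fun j => ω j ≠ 0)).card ω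
      ((h.constraint_iff ω).mp hlin) hpos le_rfl
  · rintro ⟨t, ht0, htJ, rfl⟩
    constructor
    · apply (h.constraint_iff _).mpr
      intro l hl
      have hpoint : ∀ j : Fin n,
          dvec m θ φ (∑ J : Finset (Fin n), t J • circuitC n m θ φ J) j *
            ((w θ ((j:ℕ)+1))^2)^l
          = ∑ J : Finset (Fin n), (t J : ℂ) *
              (dvec m θ φ (circuitC n m θ φ J) j * ((w θ ((j:ℕ)+1))^2)^l) := by
        intro j
        simp only [dvec, Finset.sum_apply, Pi.smul_apply, smul_eq_mul]
        push_cast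
        rw [Finset.sum_mul, Finset.sum_mul, Finset.sum_mul]
        exact Finset.sum_congr rfl (fun J _ => by push_cast; ring)
      rw [Finset.sum_congr rfl (fun (j : Fin n) _ => hpoint j), Finset.sum_comm]
      apply Finset.sum_eq_zero
      intro J _
      by_cases hJ0 : t J = 0
      · simp [hJ0]
      · rw [← Finset.mul_sum, h.circuit_kernel (htJ J hJ0).1 l hl, mul_zero]
    · intro j
      rw [Finset.sum_apply]
      apply Finset.sum_nonneg
      intro J _
      by_cases hJ0 : t J = 0
      · simp [hJ0]
      · simp only [Pi.smul_apply, smul_eq_mul]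
        exact mul_nonneg (ht0 J) (h.circuit_nonneg (htJ J hJ0).2 j)
end

section
/- Assume {ξ_k}_{k=1}^m strictly interlaces {ζ_j}_{j=1}^n on 𝕊¹. A vector ω ∈ ℝ^n with all entries strictly positive satisfies ∑_{j=1}^n ω_j Ψ_m(ζ_j) ζ_j^{−k} = 0 for k = 1,…,m−1 if and only if ω admits a representation ω = ∑_{J ∈ 𝔍₊} t_J ω^{(J)} with coefficients t_J ≥ 0 such that for every index j ∈ {1,…,n} there exists at least one J ∈ 𝔍₊ with j ∈ J and t_J > 0. In particular, such a strictly positive ω exists. -/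
/-- `J ∈ 𝔍₊`: `|J| = m` and `J` meets each band `I_r`, `r = 1,…,m`, exactly once. -/
noncomputable def JPlusC (n m : ℕ) (θ φ : ℕ → ℝ) (J : Finset (Fin n)) : Prop :=
  J.card = m ∧ ∀ r, 1 ≤ r → r ≤ m → (J ∩ bandC n θ φ r).card = 1

open Finset Polynomial Complex in
private lemma coeff_basis_aux {F : Type*} [Field F] {ι : Type*} [DecidableEq ι] {s : Finset ι}
    {v : ι → F} {i : ι} (hi : i ∈ s) :
    (Lagrange.basis s v i).coeff (s.card - 1) = ∏ j ∈ s.erase i, (v i - v j)⁻¹ := by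
  have hb : Lagrange.basis s v i
      = C (Lagrange.nodalWeight s v i) * Lagrange.nodal (s.erase i) v := by
    rw [Lagrange.basis_eq_prod_sub_inv_mul_nodal_div hi, Lagrange.nodal_erase_eq_nodal_div hi]
  rw [hb, coeff_C_mul]
  have hdeg : (Lagrange.nodal (s.erase i) v).natDegree = s.card - 1 := by
    rw [Lagrange.natDegree_nodal, card_erase_of_mem hi]
  have hmon := (Lagrange.nodal_monic (s := s.erase i) (v := v)).coeff_natDegree
  rw [hdeg] at hmon
  rw [hmon, mul_one, Lagrange.nodalWeight]

open Finset Polynomial in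
private lemma divided_diff {F : Type*} [Field F] {ι : Type*} [DecidableEq ι] (s : Finset ι)
    (v : ι → F) (hvs : Set.InjOn v s) (d : ℕ) (hd : d + 2 ≤ s.card) :
    ∑ j ∈ s, v j ^ d / ∏ j' ∈ s.erase j, (v j - v j') = 0 := by
  have hdlt : ((X : F[X]) ^ d).degree < s.card := by
    refine lt_of_le_of_lt (degree_X_pow_le d) ?_
    exact_mod_cast Nat.lt_of_lt_of_le (by omega) le_rfl
  have h := Lagrange.eq_interpolate hvs hdlt
  have h2 := congrArg (fun p => Polynomial.coeff p (s.card - 1)) h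
  simp only [Lagrange.interpolate_apply] at h2
  rw [coeff_X_pow] at h2
  have hne : s.card - 1 ≠ d := by omega
  rw [if_neg hne] at h2
  rw [Polynomial.finset_sum_coeff] at h2
  have hco : ∀ j ∈ s, (C (eval (v j) ((X:F[X])^d)) * Lagrange.basis s v j).coeff (s.card - 1)
      = v j ^ d * ∏ j' ∈ s.erase j, (v j - v j')⁻¹ := by
    intro j hj
    rw [coeff_C_mul, coeff_basis_aux hj]
    simp
  rw [Finset.sum_congr rfl hco] at h2
  rw [eq_comm, h2]
  refine Finset.sum_congr rfl fun j hj => ?_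
  rw [div_eq_mul_inv, ← Finset.prod_inv_distrib]

private lemma exp_sub_exp (a b : ℝ) :
    Complex.exp (Complex.I*(a:ℂ)) - Complex.exp (Complex.I*(b:ℂ))
    = 2*Complex.I*Complex.exp (Complex.I*(((a+b)/2 : ℝ):ℂ)) * ((Real.sin ((a-b)/2) : ℝ) : ℂ) := by
  have e1 : Complex.exp (Complex.I*(a:ℂ))
      = Complex.exp (Complex.I*(((a+b)/2:ℝ):ℂ)) * Complex.exp ((((a-b)/2:ℝ):ℂ)*Complex.I) := by
    rw [← Complex.exp_add]; congr 1; push_cast; ring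
  have e2 : Complex.exp (Complex.I*(b:ℂ))
      = Complex.exp (Complex.I*(((a+b)/2:ℝ):ℂ)) * Complex.exp (-((((a-b)/2:ℝ):ℂ)*Complex.I)) := by
    rw [← Complex.exp_add]; congr 1; push_cast; ring
  rw [e1, e2, Complex.ofReal_sin, Complex.sin]
  ring_nf
  simp only [Complex.I_sq]
  ring

open Finset in
private lemma prod_exp_sub {ι : Type*} (x : ℝ) (K : Finset ι) (ψ : ι → ℝ) :
    ∏ k ∈ K, (Complex.exp (Complex.I*(x:ℂ)) - Complex.exp (Complex.I*((ψ k : ℝ):ℂ)))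
    = (2*Complex.I)^K.card *
      Complex.exp (Complex.I*((((K.card : ℝ) * x + ∑ k ∈ K, ψ k)/2 : ℝ):ℂ)) *
      ((∏ k ∈ K, Real.sin ((x - ψ k)/2) : ℝ) : ℂ) := by
  rw [Finset.prod_congr rfl (fun k _ => exp_sub_exp x (ψ k))]
  rw [Finset.prod_mul_distrib, Finset.prod_mul_distrib, Finset.prod_const, ← Complex.exp_sum]
  push_cast
  congr 2
  rw [← Finset.mul_sum, ← Finset.sum_div, Finset.sum_add_distrib, Finset.sum_const, nsmul_eq_mul]

private lemma exp_inj (a b : ℝ) (hne : a ≠ b) (h2 : |a - b| < 2*Real.pi) :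
    Complex.exp (Complex.I*(a:ℂ)) ≠ Complex.exp (Complex.I*(b:ℂ)) := by
  intro h
  rw [Complex.exp_eq_exp_iff_exists_int] at h
  obtain ⟨k, hk⟩ := h
  have hcast : (a : ℂ) = b + k * (2*Real.pi) := by
    have h3 : Complex.I * (a:ℂ) = Complex.I * ((b:ℂ) + k*(2*(Real.pi:ℂ))) := by
      rw [hk]; push_cast; ring
    have := mul_left_cancel₀ Complex.I_ne_zero h3
    push_cast at this ⊢; exact this
  have hr : a = b + k * (2*Real.pi) := by exact_mod_cast hcast
  rcases lt_trichotomy k 0 with hk0 | hk0 | hk0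
  · have hle : (k:ℝ) ≤ -1 := by exact_mod_cast (by omega : k ≤ -1)
    have hpi := Real.pi_pos
    have : a - b ≤ -(2*Real.pi) := by nlinarith
    rw [abs_sub_lt_iff] at h2; linarith [h2.2]
  · rw [hk0] at hr; push_cast at hr; exact hne (by linarith)
  · have hle : (1:ℝ) ≤ (k:ℝ) := by exact_mod_cast hk0
    have hpi := Real.pi_pos
    have : 2*Real.pi ≤ a - b := by nlinarith
    rw [abs_sub_lt_iff] at h2; linarith [h2.1]

private lemma sin_half_pos {x : ℝ} (h0 : 0 < x) (h2 : x < 2*Real.pi) : 0 < Real.sin (x/2) :=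
  Real.sin_pos_of_pos_of_lt_pi (by linarith) (by linarith)

private lemma sin_half_neg {x : ℝ} (h0 : -(2*Real.pi) < x) (h2 : x < 0) : Real.sin (x/2) < 0 := by
  have := sin_half_pos (x := -x) (by linarith) (by linarith)
  have hs : Real.sin (-x/2) = - Real.sin (x/2) := by
    rw [neg_div, Real.sin_neg]
  rw [hs] at this; linarith

open Finset in
private lemma prod_neg_sign {ι : Type*} [DecidableEq ι] {S : Finset ι} {f : ι → ℝ}
    (h : ∀ i ∈ S, f i < 0) : 0 < (-1:ℝ)^S.card * ∏ i ∈ S, f i := by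
  induction S using Finset.induction with
  | empty => simp
  | @insert a S ha ih =>
    rw [prod_insert ha, card_insert_of_notMem ha, pow_succ]
    have h1 := ih (fun i hi => h i (mem_insert_of_mem hi))
    have h2 := h a (mem_insert_self a S)
    nlinarith

structure Ctx where
  m : ℕ
  n : ℕ
  θ : ℕ → ℝ
  φ : ℕ → ℝ
  hm : 1 ≤ m
  hmn : m < n
  hφ : ∀ k, 1 ≤ k → k ≤ m → φ k < φ (k + 1)
  hφp : φ (m + 1) = φ 1 + 2 * Real.pi
  hθ1 : φ 1 < θ 1
  hθ : ∀ j, 1 ≤ j → j < n → θ j < θ (j + 1)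
  hθn : θ n < φ 1 + 2 * Real.pi
  hθφ : ∀ j k, 1 ≤ j → j ≤ n → 1 ≤ k → k ≤ m → θ j ≠ φ k

namespace Ctx

open Finset

variable (c : Ctx)

/-- node value, `j : Fin n` ↦ `θ (j+1)`. -/
def t (j : Fin c.n) : ℝ := c.θ ((j : ℕ) + 1)

/-- node on circle -/
noncomputable def z (j : Fin c.n) : ℂ := zetaC c.θ ((j : ℕ) + 1)

/-- sine product -/
noncomputable def sp (j : Fin c.n) : ℝ := ∏ k ∈ Icc 1 c.m, Real.sin ((c.t j - c.φ k)/2)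

/-- θ-difference sine product -/
noncomputable def tp (J : Finset (Fin c.n)) (j : Fin c.n) : ℝ :=
  ∏ j' ∈ J.erase j, Real.sin ((c.t j - c.t j')/2)

noncomputable def Phi : ℝ := ∑ k ∈ Icc 1 c.m, c.φ k

lemma φ_mono : ∀ {k k'}, 1 ≤ k → k ≤ k' → k' ≤ c.m + 1 → c.φ k ≤ c.φ k' := by
  intro k k' hk hkk' hk'
  induction k' with
  | zero => omega
  | succ a ih =>
    rcases Nat.eq_or_lt_of_le hkk' with h | h
    · rw [h]
    · have := ih (by omega) (by omega)
      exact le_trans this (le_of_lt (c.hφ a (by omega) (by omega)))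

lemma θ_strict_mono : ∀ {j j'}, 1 ≤ j → j < j' → j' ≤ c.n → c.θ j < c.θ j' := by
  intro j j' hj hjj' hj'
  induction j' with
  | zero => omega
  | succ a ih =>
    rcases Nat.eq_or_lt_of_le (Nat.succ_le_of_lt hjj') with h | h
    · rw [← h]; exact c.hθ j hj (by omega)
    · exact lt_trans (ih (by omega) (by omega)) (c.hθ a (by omega) (by omega))

lemma t_mono {j j' : Fin c.n} (h : (j:ℕ) < (j':ℕ)) : c.t j < c.t j' :=
  c.θ_strict_mono (by omega) (by omega) (by have := j'.isLt; omega)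

lemma t_lb (j : Fin c.n) : c.φ 1 < c.t j := by
  unfold t
  rcases Nat.eq_zero_or_pos (j:ℕ) with h | h
  · rw [h]; exact c.hθ1
  · exact lt_trans c.hθ1 (c.θ_strict_mono le_rfl (by omega) (by have := j.isLt; omega))

lemma t_ub (j : Fin c.n) : c.t j < c.φ 1 + 2 * Real.pi := by
  unfold t
  rcases Nat.eq_or_lt_of_le (Nat.succ_le_of_lt j.isLt) with h | h
  · rw [show (j:ℕ)+1 = c.n from h]; exact c.hθn
  · exact lt_trans (c.θ_strict_mono (by omega) h le_rfl) c.hθn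

lemma φ_lb {k : ℕ} (hk : 1 ≤ k) (hk' : k ≤ c.m + 1) : c.φ 1 ≤ c.φ k :=
  c.φ_mono le_rfl hk hk'

lemma φ_ub {k : ℕ} (hk : 1 ≤ k) (hk' : k ≤ c.m + 1) : c.φ k ≤ c.φ 1 + 2 * Real.pi := by
  rw [← c.hφp]; exact c.φ_mono hk hk' le_rfl

lemma t_ne_φ (j : Fin c.n) {k : ℕ} (hk : 1 ≤ k) (hk' : k ≤ c.m) : c.t j ≠ c.φ k :=
  c.hθφ ((j:ℕ)+1) k (by omega) (by have := j.isLt; omega) hk hk'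

lemma t_inj {j j' : Fin c.n} (h : j ≠ j') : c.t j ≠ c.t j' := by
  rcases Nat.lt_or_ge (j:ℕ) (j':ℕ) with hlt | hge
  · exact ne_of_lt (c.t_mono hlt)
  · have : (j':ℕ) < (j:ℕ) := by
      rcases Nat.eq_or_lt_of_le hge with hh | hh
      · exact absurd (Fin.ext hh.symm) h
      · exact hh
    exact (ne_of_lt (c.t_mono this)).symm

lemma t_abs_lt (j j' : Fin c.n) : |c.t j - c.t j'| < 2*Real.pi := by
  have h1 := c.t_lb j; have h2 := c.t_ub j
  have h3 := c.t_lb j'; have h4 := c.t_ub j'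
  rw [abs_sub_lt_iff]; constructor <;> linarith

lemma z_inj {j j' : Fin c.n} (h : j ≠ j') : c.z j ≠ c.z j' :=
  exp_inj _ _ (c.t_inj h) (c.t_abs_lt j j')

lemma z_ne_zero (j : Fin c.n) : c.z j ≠ 0 := Complex.exp_ne_zero _

lemma z_injOn (S : Finset (Fin c.n)) : Set.InjOn c.z S := by
  intro a _ b _ hab
  by_contra hne
  exact c.z_inj hne hab

lemma mem_band {j : Fin c.n} {r : ℕ} :
    j ∈ bandC c.n c.θ c.φ r ↔ c.φ r < c.t j ∧ c.t j < c.φ (r + 1) := by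
  unfold bandC t; simp

lemma band_exists (j : Fin c.n) : ∃ r, 1 ≤ r ∧ r ≤ c.m ∧ j ∈ bandC c.n c.θ c.φ r := by
  have h1 : c.φ 1 < c.t j := c.t_lb j
  by_contra hcon
  push_neg at hcon
  have key : ∀ r, r ≤ c.m → c.φ (r + 1) < c.t j := by
    intro r
    induction r with
    | zero => intro _; simpa using h1
    | succ a ih =>
      intro ha
      have hφa : c.φ (a+1) < c.t j := ih (by omega)
      rcases lt_trichotomy (c.t j) (c.φ (a+2)) with h | h | h
      · exact absurd (c.mem_band.mpr ⟨hφa, h⟩) (fun hb => hcon (a+1) (by omega) (by omega) hb)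
      · rcases Nat.lt_or_ge (a+1) c.m with hcase | hcase
        · exact absurd h (c.t_ne_φ j (by omega) (by omega : a + 2 ≤ c.m))
        · have heq : a + 2 = c.m + 1 := by omega
          rw [heq, c.hφp] at h
          exact absurd (c.t_ub j) (not_lt.mpr (le_of_eq h.symm))
      · exact h
  have := key c.m le_rfl
  rw [c.hφp] at this
  exact absurd (c.t_ub j) (not_lt.mpr (le_of_lt this))

lemma band_unique {j : Fin c.n} {r r' : ℕ} (hr : 1 ≤ r) (hrm : r ≤ c.m) (hr1 : 1 ≤ r')
    (hr' : r' ≤ c.m) (h1 : j ∈ bandC c.n c.θ c.φ r) (h2 : j ∈ bandC c.n c.θ c.φ r') :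
    r = r' := by
  rw [c.mem_band] at h1 h2
  by_contra hne
  rcases Nat.lt_or_ge r r' with h | h
  · have : c.φ (r+1) ≤ c.φ r' := c.φ_mono (by omega) (by omega) (by omega)
    linarith [h1.2, h2.1]
  · have hlt : r' < r := by omega
    have : c.φ (r'+1) ≤ c.φ r := c.φ_mono (by omega) (by omega) (by omega)
    linarith [h1.1, h2.2]

lemma sin_tφ_pos {j : Fin c.n} {ρ k : ℕ} (hρm : ρ ≤ c.m)
    (hj : j ∈ bandC c.n c.θ c.φ ρ) (hk1 : 1 ≤ k) (hk : k ≤ ρ) :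
    0 < Real.sin ((c.t j - c.φ k)/2) := by
  rw [c.mem_band] at hj
  have h1 : c.φ k ≤ c.φ ρ := c.φ_mono hk1 hk (by omega)
  have h2 := c.φ_lb (k := k) hk1 (by omega)
  have h3 := c.t_ub j
  exact sin_half_pos (by linarith [hj.1]) (by linarith)

lemma sin_tφ_neg {j : Fin c.n} {ρ k : ℕ} (hρ1 : 1 ≤ ρ)
    (hj : j ∈ bandC c.n c.θ c.φ ρ) (hk : ρ < k) (hkm : k ≤ c.m) :
    Real.sin ((c.t j - c.φ k)/2) < 0 := by
  rw [c.mem_band] at hj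
  have h1 : c.φ (ρ+1) ≤ c.φ k := c.φ_mono (by omega) (by omega) (by omega)
  have h2 := c.φ_ub (k := k) (by omega) (by omega)
  have h3 := c.t_lb j
  exact sin_half_neg (by linarith) (by linarith [hj.2])

lemma sp_sign {j : Fin c.n} {ρ : ℕ} (hρ1 : 1 ≤ ρ) (hρm : ρ ≤ c.m)
    (hj : j ∈ bandC c.n c.θ c.φ ρ) :
    0 < (-1:ℝ)^(c.m - ρ) * c.sp j := by
  unfold sp
  have hsplit : Icc 1 c.m = Ico 1 (ρ+1) ∪ Ico (ρ+1) (c.m+1) := by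
    rw [← Finset.Ico_add_one_right_eq_Icc]
    rw [Finset.Ico_union_Ico_eq_Ico (by omega) (by omega)]
  rw [hsplit, Finset.prod_union (by
    apply Finset.Ico_disjoint_Ico_consecutive)]
  have hpos : 0 < ∏ k ∈ Ico 1 (ρ+1), Real.sin ((c.t j - c.φ k)/2) := by
    apply Finset.prod_pos
    intro k hk
    rw [mem_Ico] at hk
    exact c.sin_tφ_pos hρm hj hk.1 (by omega)
  have hneg := prod_neg_sign (S := Ico (ρ+1) (c.m+1))
    (f := fun k => Real.sin ((c.t j - c.φ k)/2)) (by
      intro k hk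
      rw [mem_Ico] at hk
      exact c.sin_tφ_neg hρ1 hj (by omega) (by omega))
  rw [Nat.card_Ico] at hneg
  have hcard : c.m + 1 - (ρ + 1) = c.m - ρ := by omega
  rw [hcard] at hneg
  nlinarith

lemma sp_ne_zero (j : Fin c.n) : c.sp j ≠ 0 := by
  obtain ⟨ρ, hρ1, hρm, hj⟩ := c.band_exists j
  have := c.sp_sign hρ1 hρm hj
  intro h
  rw [h] at this
  simp at this

lemma sin_t_ne_zero {j j' : Fin c.n} (h : j ≠ j') : Real.sin ((c.t j - c.t j')/2) ≠ 0 := by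
  rcases lt_trichotomy (c.t j) (c.t j') with hlt | heq | hgt
  · have := c.t_abs_lt j j'
    rw [abs_sub_lt_iff] at this
    exact ne_of_lt (sin_half_neg (by linarith [this.2]) (by linarith))
  · exact absurd heq (c.t_inj h)
  · have := c.t_abs_lt j j'
    rw [abs_sub_lt_iff] at this
    exact ne_of_gt (sin_half_pos (by linarith) (by linarith [this.1]))

lemma tp_ne_zero {J : Finset (Fin c.n)} {j : Fin c.n} : c.tp J j ≠ 0 := by
  unfold tp
  rw [Finset.prod_ne_zero_iff]
  intro j' hj'
  exact c.sin_t_ne_zero (fun hh => (Finset.mem_erase.mp hj').1 hh.symm)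

lemma psi_eq (j : Fin c.n) :
    PsiC c.m c.φ (c.z j) = (2*Complex.I)^c.m *
      Complex.exp (Complex.I*((((c.m : ℝ) * c.t j + c.Phi)/2 : ℝ):ℂ)) * (c.sp j : ℂ) := by
  have h := prod_exp_sub (c.t j) (Icc 1 c.m) c.φ
  rw [Nat.card_Icc] at h
  have hc : c.m + 1 - 1 = c.m := by omega
  rw [hc] at h
  unfold PsiC z zetaC sp Phi t at *
  exact h

lemma prod_z_sub {J : Finset (Fin c.n)} {j : Fin c.n} :
    ∏ j' ∈ J.erase j, (c.z j - c.z j')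
    = (2*Complex.I)^(J.erase j).card *
      Complex.exp (Complex.I*(((((J.erase j).card : ℝ) * c.t j + ∑ j' ∈ J.erase j, c.t j')/2 : ℝ):ℂ)) *
      ((c.tp J j : ℝ) : ℂ) := by
  have h := prod_exp_sub (c.t j) (J.erase j) c.t
  unfold z zetaC tp t at *
  exact h

noncomputable def cst (J : Finset (Fin c.n)) : ℂ :=
  (2*Complex.I)^(2*c.m-1) * Complex.exp (Complex.I*(((c.Phi + ∑ j' ∈ J, c.t j')/2 : ℝ):ℂ))

lemma circuit_eq {J : Finset (Fin c.n)} {j : Fin c.n} (hj : j ∈ J) :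
    circuitC c.n c.m c.θ c.φ J j = 1/(c.sp j * c.tp J j) := by
  unfold circuitC sp tp t; rw [if_pos hj]

lemma circuit_eq_zero {J : Finset (Fin c.n)} {j : Fin c.n} (hj : j ∉ J) :
    circuitC c.n c.m c.θ c.φ J j = 0 := by
  unfold circuitC; rw [if_neg hj]

lemma prod_z_sub_ne_zero {J : Finset (Fin c.n)} {j : Fin c.n} :
    (∏ j' ∈ J.erase j, (c.z j - c.z j')) ≠ 0 := by
  rw [Finset.prod_ne_zero_iff]
  intro j' hj'
  exact sub_ne_zero.mpr (c.z_inj (fun hh => (Finset.mem_erase.mp hj').1 hh.symm))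

lemma circuit_mul_psi {J : Finset (Fin c.n)} (hJ : J.card = c.m) {j : Fin c.n} (hj : j ∈ J) :
    (circuitC c.n c.m c.θ c.φ J j : ℂ) * PsiC c.m c.φ (c.z j)
    = c.cst J * c.z j ^ (c.m - 1) / ∏ j' ∈ J.erase j, (c.z j - c.z j') := by
  rw [eq_div_iff (c.prod_z_sub_ne_zero (J := J) (j := j)), c.circuit_eq hj, c.psi_eq j,
    c.prod_z_sub (J := J) (j := j)]
  have hcard : (J.erase j).card = c.m - 1 := by rw [Finset.card_erase_of_mem hj, hJ]
  rw [hcard]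
  have hsne : ((c.sp j : ℝ) : ℂ) ≠ 0 := Complex.ofReal_ne_zero.mpr (c.sp_ne_zero j)
  have htne : ((c.tp J j : ℝ) : ℂ) ≠ 0 := Complex.ofReal_ne_zero.mpr (c.tp_ne_zero (J := J) (j := j))
  have hstep1 : ((1/(c.sp j * c.tp J j) : ℝ) : ℂ) *
      ((2*Complex.I)^c.m *
        Complex.exp (Complex.I*((((c.m : ℝ) * c.t j + c.Phi)/2 : ℝ):ℂ)) * (c.sp j : ℂ)) *
      ((2*Complex.I)^(c.m-1) *
        Complex.exp (Complex.I*(((((c.m-1 : ℕ) : ℝ) * c.t j + ∑ j' ∈ J.erase j, c.t j')/2 : ℝ):ℂ)) *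
        ((c.tp J j : ℝ) : ℂ))
      = ((2*Complex.I)^c.m * (2*Complex.I)^(c.m-1)) *
        (Complex.exp (Complex.I*((((c.m : ℝ) * c.t j + c.Phi)/2 : ℝ):ℂ)) *
         Complex.exp (Complex.I*(((((c.m-1 : ℕ) : ℝ) * c.t j + ∑ j' ∈ J.erase j, c.t j')/2 : ℝ):ℂ))) := by
    push_cast
    field_simp
  rw [hstep1]
  have hm1 : (2*Complex.I)^c.m * (2*Complex.I)^(c.m-1) = (2*Complex.I)^(2*c.m-1) := by
    rw [← pow_add]; congr 1; have := c.hm; omega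
  have hsum : ∑ j' ∈ J.erase j, c.t j' = (∑ j' ∈ J, c.t j') - c.t j := by
    rw [← Finset.add_sum_erase _ _ hj]; ring
  have hzj : c.z j ^ (c.m - 1) = Complex.exp (((c.m - 1 : ℕ) : ℂ) * (Complex.I * (c.t j : ℂ))) := by
    unfold z zetaC t
    rw [Complex.exp_nat_mul]
  have hexp : Complex.exp (Complex.I*((((c.m : ℝ) * c.t j + c.Phi)/2 : ℝ):ℂ)) *
      Complex.exp (Complex.I*(((((c.m-1 : ℕ) : ℝ) * c.t j + ∑ j' ∈ J.erase j, c.t j')/2 : ℝ):ℂ))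
      = Complex.exp (Complex.I*(((c.Phi + ∑ j' ∈ J, c.t j')/2 : ℝ):ℂ)) *
        Complex.exp (((c.m - 1 : ℕ) : ℂ) * (Complex.I * (c.t j : ℂ))) := by
    rw [← Complex.exp_add, ← Complex.exp_add]
    congr 1
    rw [hsum]
    push_cast [Nat.cast_sub c.hm]
    ring
  rw [hexp, hm1, hzj]
  unfold cst
  ring

lemma circuit_kernel {J : Finset (Fin c.n)} (hJ : J.card = c.m) {k : ℕ} (hk1 : 1 ≤ k)
    (hkm : k < c.m) :
    ∑ j : Fin c.n,
      (circuitC c.n c.m c.θ c.φ J j : ℂ) * PsiC c.m c.φ (c.z j) * c.z j ^ (-(k:ℤ)) = 0 := by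
  rw [← Finset.sum_subset (Finset.subset_univ J) (fun x _ hx => by
    rw [c.circuit_eq_zero hx]; push_cast; rw [zero_mul, zero_mul])]
  have hterm : ∀ j ∈ J, (circuitC c.n c.m c.θ c.φ J j : ℂ) * PsiC c.m c.φ (c.z j) * c.z j ^ (-(k:ℤ))
      = c.cst J * (c.z j ^ (c.m-1-k) / ∏ j' ∈ J.erase j, (c.z j - c.z j')) := by
    intro j hj
    rw [c.circuit_mul_psi hJ hj]
    have hz := c.z_ne_zero j
    have hpow : c.z j ^ (c.m-1) * c.z j ^ (-(k:ℤ)) = c.z j ^ (c.m-1-k) := by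
      rw [← zpow_natCast (c.z j) (c.m-1), ← zpow_natCast (c.z j) (c.m-1-k), ← zpow_add₀ hz]
      congr 1
      push_cast
      omega
    rw [div_mul_eq_mul_div, mul_assoc, hpow, mul_div_assoc]
  rw [Finset.sum_congr rfl hterm, ← Finset.mul_sum,
    divided_diff J c.z (c.z_injOn J) (c.m-1-k) (by rw [hJ]; omega), mul_zero]

/-- the kernel conditions -/
def Ker (ω : Fin c.n → ℝ) : Prop :=
  ∀ k : ℕ, 1 ≤ k → k < c.m →
    ∑ j : Fin c.n, (ω j : ℂ) * PsiC c.m c.φ (c.z j) * c.z j ^ (-(k:ℤ)) = 0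

lemma poly_comb {ω : Fin c.n → ℝ} (hker : c.Ker ω) (P : Polynomial ℂ)
    (hdeg : P.natDegree < c.m - 1) :
    ∑ j : Fin c.n, (ω j : ℂ) * PsiC c.m c.φ (c.z j) *
      (P.eval (c.z j) * c.z j ^ (-((c.m-1:ℕ):ℤ))) = 0 := by
  have hterm : ∀ j : Fin c.n, (ω j : ℂ) * PsiC c.m c.φ (c.z j) *
      (P.eval (c.z j) * c.z j ^ (-((c.m-1:ℕ):ℤ)))
      = ∑ l ∈ Finset.range (c.m-1), P.coeff l *
          ((ω j : ℂ) * PsiC c.m c.φ (c.z j) * c.z j ^ (-((c.m-1-l:ℕ):ℤ))) := by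
    intro j
    rw [Polynomial.eval_eq_sum_range' hdeg, Finset.sum_mul, Finset.mul_sum]
    apply Finset.sum_congr rfl
    intro l hl
    rw [Finset.mem_range] at hl
    have hz := c.z_ne_zero j
    have hpow : c.z j ^ l * c.z j ^ (-((c.m-1:ℕ):ℤ)) = c.z j ^ (-((c.m-1-l:ℕ):ℤ)) := by
      rw [← zpow_natCast (c.z j) l, ← zpow_add₀ hz]
      congr 1
      omega
    rw [← hpow]
    ring
  rw [Finset.sum_congr rfl (fun j _ => hterm j), Finset.sum_comm]
  apply Finset.sum_eq_zero
  intro l hl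
  rw [Finset.mem_range] at hl
  rw [← Finset.mul_sum, hker (c.m-1-l) (by omega) (by omega), mul_zero]

/-- sign of a product of `sin((t j - φ k)/2)` over an index set `K`. -/
lemma qp_sign {j : Fin c.n} {ρ : ℕ} (hρ1 : 1 ≤ ρ) (hρm : ρ ≤ c.m)
    (hj : j ∈ bandC c.n c.θ c.φ ρ) (K : Finset ℕ) (hK : K ⊆ Icc 1 c.m) :
    0 < (-1:ℝ)^((K.filter (fun k => ρ < k)).card) *
      ∏ k ∈ K, Real.sin ((c.t j - c.φ k)/2) := by
  rw [← Finset.prod_filter_mul_prod_filter_not K (fun k => ρ < k)]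
  have hneg := prod_neg_sign (S := K.filter (fun k => ρ < k))
    (f := fun k => Real.sin ((c.t j - c.φ k)/2)) (by
      intro k hk
      rw [Finset.mem_filter] at hk
      have := hK hk.1
      rw [Finset.mem_Icc] at this
      exact c.sin_tφ_neg hρ1 hj hk.2 this.2)
  have hpos : 0 < ∏ k ∈ K.filter (fun k => ¬ ρ < k), Real.sin ((c.t j - c.φ k)/2) := by
    apply Finset.prod_pos
    intro k hk
    rw [Finset.mem_filter, not_lt] at hk
    have := hK hk.1
    rw [Finset.mem_Icc] at this
    exact c.sin_tφ_pos hρm hj this.1 hk.2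
  nlinarith

lemma filter_Icc_card (a b ρ : ℕ) :
    ((Icc a b).filter (fun k => ρ < k)).card = b + 1 - max a (ρ+1) := by
  have : (Icc a b).filter (fun k => ρ < k) = Icc (max a (ρ+1)) b := by
    ext x
    simp only [Finset.mem_filter, Finset.mem_Icc, max_le_iff]
    omega
  rw [this, Nat.card_Icc]

/-- If `ω ≥ 0` is in the kernel and vanishes on a band, it is zero. -/
lemma supp_meets_band {ω : Fin c.n → ℝ} (hω : ∀ j, 0 ≤ ω j) (hker : c.Ker ω)
    {j0 : Fin c.n} (hj0 : ω j0 ≠ 0) {r : ℕ} (hr1 : 1 ≤ r) (hrm : r ≤ c.m) :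
    ∃ j, j ∈ bandC c.n c.θ c.φ r ∧ ω j ≠ 0 := by
  by_contra hcon
  push_neg at hcon
  -- every node with positive weight lies in a band ≠ r
  rcases Nat.eq_or_lt_of_le c.hm with hm1 | hm2
  · -- m = 1 : the unique band is band 1 = band r
    obtain ⟨ρ, hρ1, hρm, hjb⟩ := c.band_exists j0
    have : ρ = r := by omega
    exact hj0 (hcon j0 (this ▸ hjb))
  -- m ≥ 2 : test polynomial argument
  set K : Finset ℕ := if r = c.m then Icc 2 (c.m - 1) else Icc 1 (r-1) ∪ Icc (r+2) c.m with hKdef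
  have hKsub : K ⊆ Icc 1 c.m := by
    rw [hKdef]
    split_ifs with h
    · intro x hx; rw [Finset.mem_Icc] at *; omega
    · intro x hx
      rw [Finset.mem_union, Finset.mem_Icc, Finset.mem_Icc] at hx
      rw [Finset.mem_Icc]; omega
  have hKcard : K.card = c.m - 2 := by
    rw [hKdef]
    split_ifs with h
    · rw [Nat.card_Icc]; omega
    · rw [Finset.card_union_of_disjoint (by
        rw [Finset.disjoint_left]
        intro x hx1 hx2
        rw [Finset.mem_Icc] at hx1 hx2
        omega), Nat.card_Icc, Nat.card_Icc]
      omega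
  -- parity of the filtered cardinality
  have hKpar : ∀ ρ, 1 ≤ ρ → ρ ≤ c.m → ρ ≠ r →
      ∃ e : ℕ, (c.m - ρ) + ((K.filter (fun k => ρ < k)).card) + (if r = c.m then 1 else 0) = 2 * e := by
    intro ρ hρ1 hρm hρr
    rw [hKdef]
    split_ifs with h
    · rw [filter_Icc_card]
      refine ⟨c.m - ρ, ?_⟩
      omega
    · rw [Finset.filter_union, Finset.card_union_of_disjoint (by
        apply Finset.disjoint_filter_filter
        rw [Finset.disjoint_left]
        intro x hx1 hx2
        rw [Finset.mem_Icc] at hx1 hx2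
        omega), filter_Icc_card, filter_Icc_card]
      rcases Nat.lt_or_ge ρ r with hc | hc
      · exact ⟨c.m - ρ - 1, by omega⟩
      · exact ⟨c.m - ρ, by omega⟩
  -- test polynomial
  set ξ : ℕ → ℂ := fun k => Complex.exp (Complex.I * (c.φ k : ℂ)) with hξdef
  set Q : Polynomial ℂ := Lagrange.nodal K ξ with hQdef
  have hQdeg : Q.natDegree < c.m - 1 := by
    rw [hQdef, Lagrange.natDegree_nodal, hKcard]; omega
  have h0 := c.poly_comb hker Q hQdeg
  set qp : Fin c.n → ℝ := fun j => ∏ k ∈ K, Real.sin ((c.t j - c.φ k)/2) with hqpdef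
  set D : ℂ := (2*Complex.I)^(2*c.m-2) *
    Complex.exp (Complex.I*(((c.Phi + ∑ k ∈ K, c.φ k)/2 : ℝ):ℂ)) with hDdef
  have hterm : ∀ j : Fin c.n, (ω j : ℂ) * PsiC c.m c.φ (c.z j) *
      (Q.eval (c.z j) * c.z j ^ (-((c.m-1:ℕ):ℤ)))
      = D * ((ω j * (c.sp j * qp j) : ℝ) : ℂ) := by
    intro j
    have hQev : Q.eval (c.z j) = ∏ k ∈ K, (c.z j - ξ k) := Lagrange.eval_nodal
    have hprod : ∏ k ∈ K, (c.z j - ξ k)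
        = (2*Complex.I)^K.card *
          Complex.exp (Complex.I*((((K.card : ℝ) * c.t j + ∑ k ∈ K, c.φ k)/2 : ℝ):ℂ)) *
          ((qp j : ℝ) : ℂ) := by
      have h := prod_exp_sub (c.t j) K c.φ
      rw [hqpdef]
      unfold z zetaC t at *
      exact h
    have hzpow : c.z j ^ (-((c.m-1:ℕ):ℤ))
        = Complex.exp (((-((c.m-1:ℕ):ℤ) : ℤ) : ℂ) * (Complex.I * (c.t j : ℂ))) := by
      unfold z zetaC t
      rw [Complex.exp_int_mul]
    have hcomb : (2*Complex.I)^c.m * (2*Complex.I)^(c.m-2) = (2*Complex.I)^(2*c.m-2) := by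
      rw [← pow_add]; congr 1; omega
    have hL : (ω j : ℂ) * PsiC c.m c.φ (c.z j) *
        (Q.eval (c.z j) * c.z j ^ (-((c.m-1:ℕ):ℤ)))
        = ((2*Complex.I)^c.m * (2*Complex.I)^(c.m-2)) *
          (Complex.exp (Complex.I*((((c.m : ℝ) * c.t j + c.Phi)/2 : ℝ):ℂ)) *
            Complex.exp (Complex.I*(((((c.m-2:ℕ) : ℝ) * c.t j + ∑ k ∈ K, c.φ k)/2 : ℝ):ℂ)) *
            Complex.exp (((-((c.m-1:ℕ):ℤ) : ℤ) : ℂ) * (Complex.I * (c.t j : ℂ)))) *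
          ((ω j : ℂ) * ((c.sp j : ℂ) * ((qp j : ℝ) : ℂ))) := by
      rw [hQev, hprod, hzpow, c.psi_eq j, hKcard]
      ring
    have hE : Complex.exp (Complex.I*((((c.m : ℝ) * c.t j + c.Phi)/2 : ℝ):ℂ)) *
          Complex.exp (Complex.I*(((((c.m-2:ℕ) : ℝ) * c.t j + ∑ k ∈ K, c.φ k)/2 : ℝ):ℂ)) *
          Complex.exp (((-((c.m-1:ℕ):ℤ) : ℤ) : ℂ) * (Complex.I * (c.t j : ℂ)))
        = Complex.exp (Complex.I*(((c.Phi + ∑ k ∈ K, c.φ k)/2 : ℝ):ℂ)) := by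
      rw [← Complex.exp_add, ← Complex.exp_add]
      congr 1
      push_cast [Nat.cast_sub (by omega : 2 ≤ c.m), Nat.cast_sub (by omega : 1 ≤ c.m)]
      ring
    rw [hL, hcomb, hE, hDdef]
    push_cast
    ring
  rw [Finset.sum_congr rfl (fun j _ => hterm j), ← Finset.mul_sum] at h0
  have hDne : D ≠ 0 := by
    rw [hDdef]
    exact mul_ne_zero (pow_ne_zero _ (by simp [Complex.I_ne_zero])) (Complex.exp_ne_zero _)
  have hsum0 : ∑ j : Fin c.n, (ω j * (c.sp j * qp j)) = 0 := by
    have := (mul_eq_zero.mp h0).resolve_left hDne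
    rw [← Complex.ofReal_sum] at this
    exact_mod_cast this
  -- sign analysis
  set ε : ℝ := if r = c.m then -1 else 1 with hεdef
  have hsign : ∀ j : Fin c.n, ω j ≠ 0 → 0 < ε * (c.sp j * qp j) := by
    intro j hj
    obtain ⟨ρ, hρ1, hρm, hjb⟩ := c.band_exists j
    have hρr : ρ ≠ r := fun h => hj (hcon j (h ▸ hjb))
    have hs := c.sp_sign hρ1 hρm hjb
    have hq := c.qp_sign hρ1 hρm hjb K hKsub
    obtain ⟨e, he⟩ := hKpar ρ hρ1 hρm hρr
    have hmul : 0 < (-1:ℝ)^((c.m - ρ) + (K.filter (fun k => ρ < k)).card) * (c.sp j * qp j) := by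
      rw [pow_add]
      rw [hqpdef]
      nlinarith
    rw [hεdef]
    split_ifs at he ⊢ with hrm'
    · have hodd : Odd ((c.m - ρ) + (K.filter (fun k => ρ < k)).card) := ⟨e - 1, by omega⟩
      rw [hodd.neg_one_pow] at hmul
      linarith
    · have heven : Even ((c.m - ρ) + (K.filter (fun k => ρ < k)).card) := ⟨e, by omega⟩
      rw [heven.neg_one_pow] at hmul
      linarith
  have hfin : ∀ j : Fin c.n, 0 ≤ ε * (ω j * (c.sp j * qp j)) := by
    intro j
    rcases eq_or_ne (ω j) 0 with h | h
    · rw [h]; simp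
    · have := hsign j h
      have := (hω j).lt_of_ne (Ne.symm h)
      nlinarith
  have hzero : ε * (ω j0 * (c.sp j0 * qp j0)) = 0 := by
    have hstot : ∑ j : Fin c.n, ε * (ω j * (c.sp j * qp j)) = 0 := by
      rw [← Finset.mul_sum, hsum0, mul_zero]
    exact (Finset.sum_eq_zero_iff_of_nonneg (fun j _ => hfin j)).mp hstot j0 (Finset.mem_univ j0)
  have := hsign j0 hj0
  have := (hω j0).lt_of_ne (Ne.symm hj0)
  nlinarith


lemma band_of_mem_inter {J : Finset (Fin c.n)} {j : Fin c.n} {r : ℕ}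
    (h : j ∈ J ∩ bandC c.n c.θ c.φ r) : j ∈ bandC c.n c.θ c.φ r :=
  (Finset.mem_inter.mp h).2

/-- order comparison between bands -/
lemma t_lt_of_band_lt {j j' : Fin c.n} {ρ ρ' : ℕ} (hρ1 : 1 ≤ ρ) (hρ'm : ρ' ≤ c.m)
    (hj : j ∈ bandC c.n c.θ c.φ ρ) (hj' : j' ∈ bandC c.n c.θ c.φ ρ') (hlt : ρ < ρ') :
    c.t j < c.t j' := by
  rw [c.mem_band] at hj hj'
  have : c.φ (ρ+1) ≤ c.φ ρ' := c.φ_mono (by omega) (by omega) (by omega)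
  linarith [hj.2, hj'.1]

/-- in a `𝔍₊` set, exactly `m - ρ` elements lie above the band of `j`. -/
lemma JPlus_count_above {J : Finset (Fin c.n)} (hJP : JPlusC c.n c.m c.θ c.φ J)
    {j : Fin c.n} (hj : j ∈ J) {ρ : ℕ} (hρ1 : 1 ≤ ρ) (hρm : ρ ≤ c.m)
    (hjb : j ∈ bandC c.n c.θ c.φ ρ) :
    ((J.erase j).filter (fun j' => c.t j < c.t j')).card = c.m - ρ := by
  classical
  have hset : (J.erase j).filter (fun j' => c.t j < c.t j')
      = (Icc (ρ+1) c.m).biUnion (fun r => J ∩ bandC c.n c.θ c.φ r) := by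
    ext x
    simp only [Finset.mem_filter, Finset.mem_erase, Finset.mem_biUnion, Finset.mem_Icc,
      Finset.mem_inter]
    constructor
    · rintro ⟨⟨hxj, hxJ⟩, hlt⟩
      obtain ⟨r, hr1, hrm, hxb⟩ := c.band_exists x
      refine ⟨r, ⟨?_, hrm⟩, hxJ, hxb⟩
      by_contra hcon
      have hrρ : r ≤ ρ := by omega
      rcases Nat.eq_or_lt_of_le hrρ with he | hl
      · -- same band: both j,x in band ρ, but card 1
        have hcard := hJP.2 ρ hρ1 hρm
        have hjm : j ∈ J ∩ bandC c.n c.θ c.φ ρ := Finset.mem_inter.mpr ⟨hj, hjb⟩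
        have hxm : x ∈ J ∩ bandC c.n c.θ c.φ ρ := Finset.mem_inter.mpr ⟨hxJ, he ▸ hxb⟩
        obtain ⟨y, hy⟩ := Finset.card_eq_one.mp hcard
        rw [hy, Finset.mem_singleton] at hjm hxm
        exact hxj (hxm.trans hjm.symm)
      · exact absurd (c.t_lt_of_band_lt hr1 hρm hxb hjb hl) (by linarith)
    · rintro ⟨r, ⟨hr1, hrm⟩, hxJ, hxb⟩
      have hlt := c.t_lt_of_band_lt hρ1 hrm hjb hxb (by omega)
      refine ⟨⟨?_, hxJ⟩, hlt⟩
      intro hxe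
      rw [hxe] at hlt
      exact lt_irrefl _ hlt
  rw [hset, Finset.card_biUnion (by
    intro r hr r' hr' hne
    rw [Finset.mem_coe, Finset.mem_Icc] at hr hr'
    rw [Function.onFun, Finset.disjoint_left]
    intro a ha ha'
    rw [Finset.mem_inter] at ha ha'
    exact hne (c.band_unique (by omega) (by omega) (by omega) (by omega) ha.2 ha'.2))]
  have hone : ∀ r ∈ Icc (ρ+1) c.m, (J ∩ bandC c.n c.θ c.φ r).card = 1 := by
    intro r hr
    rw [Finset.mem_Icc] at hr
    exact hJP.2 r (by omega) hr.2
  rw [Finset.sum_congr rfl hone, Finset.sum_const, Nat.card_Icc, smul_eq_mul, mul_one]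
  omega

lemma tp_sign {J : Finset (Fin c.n)} (hJP : JPlusC c.n c.m c.θ c.φ J)
    {j : Fin c.n} (hj : j ∈ J) {ρ : ℕ} (hρ1 : 1 ≤ ρ) (hρm : ρ ≤ c.m)
    (hjb : j ∈ bandC c.n c.θ c.φ ρ) :
    0 < (-1:ℝ)^(c.m - ρ) * c.tp J j := by
  unfold tp
  rw [← Finset.prod_filter_mul_prod_filter_not (J.erase j) (fun j' => c.t j < c.t j')]
  have hneg := prod_neg_sign (S := (J.erase j).filter (fun j' => c.t j < c.t j'))
    (f := fun j' => Real.sin ((c.t j - c.t j')/2)) (by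
      intro j' hj'
      rw [Finset.mem_filter] at hj'
      have habs := c.t_abs_lt j j'
      rw [abs_sub_lt_iff] at habs
      exact sin_half_neg (by linarith [habs.2]) (by linarith [hj'.2]))
  have hpos : 0 < ∏ j' ∈ (J.erase j).filter (fun j' => ¬ c.t j < c.t j'),
      Real.sin ((c.t j - c.t j')/2) := by
    apply Finset.prod_pos
    intro j' hj'
    rw [Finset.mem_filter, not_lt] at hj'
    have hne : j' ≠ j := (Finset.mem_erase.mp hj'.1).1
    have hlt : c.t j' < c.t j := lt_of_le_of_ne hj'.2 (c.t_inj hne)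
    have habs := c.t_abs_lt j j'
    rw [abs_sub_lt_iff] at habs
    exact sin_half_pos (by linarith) (by linarith [habs.1])
  rw [c.JPlus_count_above hJP hj hρ1 hρm hjb] at hneg
  nlinarith

lemma circuit_pos {J : Finset (Fin c.n)} (hJP : JPlusC c.n c.m c.θ c.φ J)
    {j : Fin c.n} (hj : j ∈ J) : 0 < circuitC c.n c.m c.θ c.φ J j := by
  rw [c.circuit_eq hj]
  obtain ⟨ρ, hρ1, hρm, hjb⟩ := c.band_exists j
  have h1 := c.sp_sign hρ1 hρm hjb
  have h2 := c.tp_sign hJP hj hρ1 hρm hjb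
  have hsq : ((-1:ℝ)^(c.m - ρ)) * ((-1:ℝ)^(c.m - ρ)) = 1 := by
    rw [← pow_add, Even.neg_one_pow ⟨c.m - ρ, rfl⟩]
  have : 0 < c.sp j * c.tp J j := by nlinarith
  positivity

lemma circuit_nonneg {J : Finset (Fin c.n)} (hJP : JPlusC c.n c.m c.θ c.φ J)
    (j : Fin c.n) : 0 ≤ circuitC c.n c.m c.θ c.φ J j := by
  by_cases hj : j ∈ J
  · exact le_of_lt (c.circuit_pos hJP hj)
  · rw [c.circuit_eq_zero hj]

/-- build a `𝔍₊` set from a choice of one point per band -/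
lemma mk_JPlus (g : ℕ → Fin c.n) (hg : ∀ r, 1 ≤ r → r ≤ c.m → g r ∈ bandC c.n c.θ c.φ r) :
    JPlusC c.n c.m c.θ c.φ ((Icc 1 c.m).image g) := by
  classical
  have hinj : Set.InjOn g (Icc 1 c.m) := by
    intro a ha b hb hab
    rw [Finset.coe_Icc, Set.mem_Icc] at ha hb
    exact c.band_unique ha.1 ha.2 hb.1 hb.2 (hg a ha.1 ha.2) (hab ▸ hg b hb.1 hb.2)
  constructor
  · rw [Finset.card_image_of_injOn hinj, Nat.card_Icc]
    omega
  · intro r hr1 hrm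
    have : (Icc 1 c.m).image g ∩ bandC c.n c.θ c.φ r = {g r} := by
      ext x
      simp only [Finset.mem_inter, Finset.mem_image, Finset.mem_singleton]
      constructor
      · rintro ⟨⟨a, ha, rfl⟩, hxb⟩
        rw [Finset.mem_Icc] at ha
        rw [c.band_unique ha.1 ha.2 hr1 hrm (hg a ha.1 ha.2) hxb]
      · rintro rfl
        exact ⟨⟨r, Finset.mem_Icc.mpr ⟨hr1, hrm⟩, rfl⟩, hg r hr1 hrm⟩
    rw [this, Finset.card_singleton]

lemma ker_circuit {J : Finset (Fin c.n)} (hJ : J.card = c.m) :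
    c.Ker (circuitC c.n c.m c.θ c.φ J) :=
  fun _ hk1 hkm => c.circuit_kernel hJ hk1 hkm

lemma ker_combo (t : Finset (Fin c.n) → ℝ) (h : ∀ J, t J ≠ 0 → J.card = c.m) :
    c.Ker (fun j => ∑ J : Finset (Fin c.n), t J * circuitC c.n c.m c.θ c.φ J j) := by
  intro k hk1 hkm
  have hstep : ∀ j : Fin c.n,
      ((∑ J : Finset (Fin c.n), t J * circuitC c.n c.m c.θ c.φ J j : ℝ) : ℂ) *
        PsiC c.m c.φ (c.z j) * c.z j ^ (-(k:ℤ))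
      = ∑ J : Finset (Fin c.n), (t J : ℂ) *
          ((circuitC c.n c.m c.θ c.φ J j : ℂ) * PsiC c.m c.φ (c.z j) * c.z j ^ (-(k:ℤ))) := by
    intro j
    rw [Complex.ofReal_sum, Finset.sum_mul, Finset.sum_mul]
    apply Finset.sum_congr rfl
    intro J _
    push_cast
    ring
  rw [Finset.sum_congr rfl (fun j _ => hstep j), Finset.sum_comm]
  apply Finset.sum_eq_zero
  intro J _
  rw [← Finset.mul_sum]
  rcases eq_or_ne (t J) 0 with h0 | h0
  · rw [h0]; simp
  · rw [c.circuit_kernel (h J h0) hk1 hkm, mul_zero]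

lemma ker_sub_smul {ω ψ : Fin c.n → ℝ} (hω : c.Ker ω) (hψ : c.Ker ψ) (s : ℝ) :
    c.Ker (fun j => ω j - s * ψ j) := by
  intro k hk1 hkm
  have hstep : ∀ j : Fin c.n,
      ((ω j - s * ψ j : ℝ) : ℂ) * PsiC c.m c.φ (c.z j) * c.z j ^ (-(k:ℤ))
      = (ω j : ℂ) * PsiC c.m c.φ (c.z j) * c.z j ^ (-(k:ℤ))
        - (s : ℂ) * ((ψ j : ℂ) * PsiC c.m c.φ (c.z j) * c.z j ^ (-(k:ℤ))) := by
    intro j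
    push_cast
    ring
  rw [Finset.sum_congr rfl (fun j _ => hstep j), Finset.sum_sub_distrib, hω k hk1 hkm,
    ← Finset.mul_sum, hψ k hk1 hkm, mul_zero, sub_zero]

lemma decompose_zero (ω : Fin c.n → ℝ) (h : ∀ j, ω j = 0) :
    ∃ t : Finset (Fin c.n) → ℝ, (∀ J, 0 ≤ t J) ∧
      (∀ J, t J ≠ 0 → JPlusC c.n c.m c.θ c.φ J) ∧
      (∀ j, ω j = ∑ J : Finset (Fin c.n), t J * circuitC c.n c.m c.θ c.φ J j) ∧
      (∀ j, ω j ≠ 0 → ∃ J, JPlusC c.n c.m c.θ c.φ J ∧ j ∈ J ∧ 0 < t J) :=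
  ⟨fun _ => 0, fun _ => le_rfl, fun _ h' => absurd rfl h',
    fun j => by simp [h j], fun j hj => absurd (h j) hj⟩

lemma npos : 0 < c.n := by have := c.hm; have := c.hmn; omega

lemma decompose : ∀ (N : ℕ) (ω : Fin c.n → ℝ),
    (Finset.univ.filter (fun j => ω j ≠ 0)).card ≤ N → (∀ j, 0 ≤ ω j) → c.Ker ω →
    ∃ t : Finset (Fin c.n) → ℝ, (∀ J, 0 ≤ t J) ∧
      (∀ J, t J ≠ 0 → JPlusC c.n c.m c.θ c.φ J) ∧
      (∀ j, ω j = ∑ J : Finset (Fin c.n), t J * circuitC c.n c.m c.θ c.φ J j) ∧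
      (∀ j, ω j ≠ 0 → ∃ J, JPlusC c.n c.m c.θ c.φ J ∧ j ∈ J ∧ 0 < t J) := by
  intro N
  induction N with
  | zero =>
    intro ω hcard hω hker
    refine c.decompose_zero ω (fun j => ?_)
    by_contra h
    have hmem : j ∈ Finset.univ.filter (fun j => ω j ≠ 0) := by simp [h]
    have := Finset.card_pos.mpr ⟨j, hmem⟩
    omega
  | succ N ih =>
    intro ω hcard hω hker
    classical
    by_cases hzero : ∀ j, ω j = 0
    · exact c.decompose_zero ω hzero
    push_neg at hzero
    obtain ⟨j0, hj0⟩ := hzero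
    have hex : ∀ r, 1 ≤ r → r ≤ c.m → ∃ j, j ∈ bandC c.n c.θ c.φ r ∧ ω j ≠ 0 :=
      fun r hr1 hrm => c.supp_meets_band hω hker hj0 hr1 hrm
    set g : ℕ → Fin c.n := fun r =>
      if h : 1 ≤ r ∧ r ≤ c.m then (hex r h.1 h.2).choose else ⟨0, c.npos⟩ with hgdef
    have hg : ∀ r, 1 ≤ r → r ≤ c.m → g r ∈ bandC c.n c.θ c.φ r ∧ ω (g r) ≠ 0 := by
      intro r h1 h2
      rw [hgdef]
      dsimp only
      rw [dif_pos ⟨h1, h2⟩]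
      exact (hex r h1 h2).choose_spec
    set J := (Icc 1 c.m).image g with hJdef
    have hJP : JPlusC c.n c.m c.θ c.φ J := c.mk_JPlus g (fun r h1 h2 => (hg r h1 h2).1)
    have hJcard := hJP.1
    have hJne : J.Nonempty := by
      rw [← Finset.card_pos, hJcard]; exact c.hm
    have hJsupp : ∀ j ∈ J, ω j ≠ 0 := by
      intro j hj
      obtain ⟨r, hr, rfl⟩ := Finset.mem_image.mp hj
      rw [Finset.mem_Icc] at hr
      exact (hg r hr.1 hr.2).2
    obtain ⟨j1, hj1J, hj1min⟩ :=
      Finset.exists_min_image J (fun j => ω j / circuitC c.n c.m c.θ c.φ J j) hJne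
    set s := ω j1 / circuitC c.n c.m c.θ c.φ J j1 with hsdef
    have hc1 := c.circuit_pos hJP hj1J
    have hs_pos : 0 < s := div_pos ((hω j1).lt_of_ne (Ne.symm (hJsupp j1 hj1J))) hc1
    set ω' : Fin c.n → ℝ := fun j => ω j - s * circuitC c.n c.m c.θ c.φ J j with hω'def
    have hω'nonneg : ∀ j, 0 ≤ ω' j := by
      intro j
      rw [hω'def]
      dsimp only
      by_cases hj : j ∈ J
      · have hc := c.circuit_pos hJP hj
        have hmin := hj1min j hj
        rw [sub_nonneg]
        calc s * circuitC c.n c.m c.θ c.φ J j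
            ≤ (ω j / circuitC c.n c.m c.θ c.φ J j) * circuitC c.n c.m c.θ c.φ J j :=
              mul_le_mul_of_nonneg_right hmin (le_of_lt hc)
          _ = ω j := div_mul_cancel₀ _ (ne_of_gt hc)
      · rw [c.circuit_eq_zero hj, mul_zero, sub_zero]
        exact hω j
    have hω'j1 : ω' j1 = 0 := by
      rw [hω'def]
      dsimp only
      rw [hsdef, div_mul_cancel₀ _ (ne_of_gt hc1)]
      ring
    have hω'supp : ∀ j, ω' j ≠ 0 → ω j ≠ 0 := by
      intro j h hj0'
      apply h
      rw [hω'def]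
      dsimp only
      rw [hj0']
      have hj : j ∉ J := fun hj => (hJsupp j hj) hj0'
      rw [c.circuit_eq_zero hj, mul_zero]
      ring
    have hcard' : (Finset.univ.filter (fun j => ω' j ≠ 0)).card ≤ N := by
      have hsub : Finset.univ.filter (fun j => ω' j ≠ 0)
          ⊆ (Finset.univ.filter (fun j => ω j ≠ 0)).erase j1 := by
        intro x hx
        rw [Finset.mem_filter] at hx
        rw [Finset.mem_erase, Finset.mem_filter]
        exact ⟨fun he => hx.2 (he ▸ hω'j1), Finset.mem_univ x, hω'supp x hx.2⟩
      have h1 := Finset.card_le_card hsub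
      have h2 : j1 ∈ Finset.univ.filter (fun j => ω j ≠ 0) := by
        rw [Finset.mem_filter]
        exact ⟨Finset.mem_univ _, hJsupp j1 hj1J⟩
      have h3 := Finset.card_erase_of_mem h2
      omega
    have hω'ker : c.Ker ω' := c.ker_sub_smul hker (c.ker_circuit hJcard) s
    obtain ⟨t', ht'0, ht'J, ht'sum, ht'cov⟩ := ih ω' hcard' hω'nonneg hω'ker
    refine ⟨fun X => t' X + (if X = J then s else 0), ?_, ?_, ?_, ?_⟩
    · intro X
      have := ht'0 X
      dsimp only
      split_ifs with h <;> linarith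
    · intro X hX
      by_cases hXJ : X = J
      · rw [hXJ]; exact hJP
      · apply ht'J
        intro h0
        apply hX
        dsimp only
        rw [h0, if_neg hXJ, add_zero]
    · intro j
      have hsum : ∑ X : Finset (Fin c.n),
          (t' X + if X = J then s else 0) * circuitC c.n c.m c.θ c.φ X j
          = (∑ X : Finset (Fin c.n), t' X * circuitC c.n c.m c.θ c.φ X j)
            + s * circuitC c.n c.m c.θ c.φ J j := by
        simp only [add_mul, ite_mul, zero_mul]
        rw [Finset.sum_add_distrib]
        congr 1
        rw [Finset.sum_ite_eq' Finset.univ J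
          (fun X => s * circuitC c.n c.m c.θ c.φ X j), if_pos (Finset.mem_univ J)]
      rw [hsum, ← ht'sum j, hω'def]
      dsimp only
      ring
    · intro j hj
      by_cases hj' : ω' j ≠ 0
      · obtain ⟨X, hXP, hjX, hX0⟩ := ht'cov j hj'
        refine ⟨X, hXP, hjX, ?_⟩
        dsimp only
        split_ifs with h <;> linarith
      · push_neg at hj'
        have hjJ : j ∈ J := by
          by_contra h
          apply hj
          have : ω j = ω' j + s * circuitC c.n c.m c.θ c.φ J j := by
            rw [hω'def]; dsimp only; ring
          rw [this, hj', c.circuit_eq_zero h, mul_zero, add_zero]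
        refine ⟨J, hJP, hjJ, ?_⟩
        dsimp only
        rw [if_pos rfl]
        have := ht'0 J
        linarith

end Ctx

/-- under strict interlacing on `𝕊¹` (all bands nonempty), a strictly positive
vector `ω` solves the circle Vandermonde-type system iff it admits a representation
`ω = ∑_{J ∈ 𝔍₊} t_J ω^{(J)}` with `t_J ≥ 0` such that every index `j` lies in some `J ∈ 𝔍₊`
with `t_J > 0`. In particular, such a strictly positive `ω` exists. -/
theorem stmt_19 (m n : ℕ) (hm : 1 ≤ m) (hmn : m < n)
    (θ φ : ℕ → ℝ)
    (hφ : ∀ k, 1 ≤ k → k ≤ m → φ k < φ (k + 1))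
    (hφp : φ (m + 1) = φ 1 + 2 * Real.pi)
    (hθ1 : φ 1 < θ 1)
    (hθ : ∀ j, 1 ≤ j → j < n → θ j < θ (j + 1))
    (hθn : θ n < φ 1 + 2 * Real.pi)
    (hθφ : ∀ j k, 1 ≤ j → j ≤ n → 1 ≤ k → k ≤ m → θ j ≠ φ k)
    (hbands : ∀ r, 1 ≤ r → r ≤ m → (bandC n θ φ r).Nonempty) :
    (∀ ω : Fin n → ℝ, (∀ j, 0 < ω j) →
      ((∀ k : ℕ, 1 ≤ k → k < m →
          ∑ j : Fin n, (ω j : ℂ) *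
            PsiC m φ (zetaC θ ((j : ℕ) + 1)) * zetaC θ ((j : ℕ) + 1) ^ (-(k : ℤ)) = 0)
        ↔ ∃ t : Finset (Fin n) → ℝ,
            (∀ J, 0 ≤ t J) ∧
            (∀ J, t J ≠ 0 → JPlusC n m θ φ J) ∧
            ω = ∑ J : Finset (Fin n), t J • circuitC n m θ φ J ∧
            ∀ j : Fin n, ∃ J : Finset (Fin n), JPlusC n m θ φ J ∧ j ∈ J ∧ 0 < t J)) ∧
    (∃ ω : Fin n → ℝ, (∀ j, 0 < ω j) ∧
      ∀ k : ℕ, 1 ≤ k → k < m →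
        ∑ j : Fin n, (ω j : ℂ) *
          PsiC m φ (zetaC θ ((j : ℕ) + 1)) * zetaC θ ((j : ℕ) + 1) ^ (-(k : ℤ)) = 0) := by
  classical
  set c : Ctx := ⟨m, n, θ, φ, hm, hmn, hφ, hφp, hθ1, hθ, hθn, hθφ⟩ with hcdef
  constructor
  · intro ω hωpos
    constructor
    · intro hA
      have hker : c.Ker ω := hA
      obtain ⟨t, ht0, htJ, htsum, htcov⟩ :=
        c.decompose (Finset.univ.filter (fun j => ω j ≠ 0)).card ω le_rfl
          (fun j => le_of_lt (hωpos j)) hker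
      refine ⟨t, ht0, htJ, ?_, ?_⟩
      · funext j
        rw [Finset.sum_apply]
        rw [htsum j]
        apply Finset.sum_congr rfl
        intro J _
        rw [Pi.smul_apply, smul_eq_mul]
      · intro j
        exact htcov j (ne_of_gt (hωpos j))
    · rintro ⟨t, ht0, htJ, htsum, htcov⟩
      have hcombo := c.ker_combo t (fun J hJ => (htJ J hJ).1)
      have hfe : ω = fun j => ∑ J : Finset (Fin n), t J * circuitC n m θ φ J j := by
        funext j
        rw [htsum, Finset.sum_apply]
        apply Finset.sum_congr rfl
        intro J _
        rw [Pi.smul_apply, smul_eq_mul]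
      rw [hfe]
      exact hcombo
  · set t0 : Finset (Fin n) → ℝ := fun J => if JPlusC n m θ φ J then 1 else 0 with ht0def
    set ω0 : Fin n → ℝ := fun j => ∑ J : Finset (Fin n), t0 J * circuitC n m θ φ J j with hω0def
    have hω0pos : ∀ j, 0 < ω0 j := by
      intro j
      obtain ⟨ρ, hρ1, hρm, hjb⟩ := c.band_exists j
      set g : ℕ → Fin n := fun r => if r = ρ then j else
        (if h : 1 ≤ r ∧ r ≤ m then (hbands r h.1 h.2).choose else j) with hgdef
      have hg : ∀ r, 1 ≤ r → r ≤ m → g r ∈ bandC n θ φ r := by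
        intro r h1 h2
        rw [hgdef]
        dsimp only
        by_cases hr : r = ρ
        · rw [if_pos hr, hr]; exact hjb
        · rw [if_neg hr, dif_pos ⟨h1, h2⟩]
          exact (hbands r h1 h2).choose_spec
      have hJ0P : JPlusC n m θ φ ((Finset.Icc 1 m).image g) := c.mk_JPlus g hg
      have hjJ0 : j ∈ (Finset.Icc 1 m).image g := by
        rw [Finset.mem_image]
        exact ⟨ρ, Finset.mem_Icc.mpr ⟨hρ1, hρm⟩, by rw [hgdef]; dsimp only; rw [if_pos rfl]⟩
      rw [hω0def]
      dsimp only
      apply Finset.sum_pos'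
      · intro J _
        rw [ht0def]
        dsimp only
        split_ifs with hJP
        · rw [one_mul]
          exact c.circuit_nonneg hJP j
        · rw [zero_mul]
      · refine ⟨(Finset.Icc 1 m).image g, Finset.mem_univ _, ?_⟩
        rw [ht0def]
        dsimp only
        rw [if_pos hJ0P, one_mul]
        exact c.circuit_pos hJ0P hjJ0
    have hker : c.Ker ω0 := by
      rw [hω0def]
      exact c.ker_combo t0 (fun J hJ => by
        rw [ht0def] at hJ
        dsimp only at hJ
        by_cases h : JPlusC n m θ φ J
        · exact h.1
        · rw [if_neg h] at hJ; exact absurd rfl hJ)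
    exact ⟨ω0, hω0pos, hker⟩
end
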